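/- arXiv:2409.12936 — 13 statements merged into one kernel-verified Lean document; each statement's English description precedes it below -/
import Mathlib

section
/- Let a, c be positive integers and b, d be integers such that R_{a,b,c,d} is nonempty. If a = c and a divides lcm(b, d), then R_{a,b,c,d} is a set of multiplicative recurrence. -/
open MeasureTheory Filter

/-- The set `R_{a,b,c,d}` of positive rational values `(an+b)/(cn+d)` not equal to `1`. -/
def Rset (a c : ℕ) (b d : ℤ) : Set ℚ :=
  {q : ℚ | (∃ n : ℕ, 0 < n ∧ q = ((a : ℚ) * n + (b : ℚ)) / ((c : ℚ) * n + (d : ℚ))) ∧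
    0 < q ∧ q ≠ 1}

/-- `R` is a set of (measurable) multiplicative recurrence: for every probability space,
every multiplicative family of measure-preserving maps indexed by the positive integers,
and every measurable set `B` of positive measure, there are positive integers `m`, `n`
with `m/n ∈ R` and `μ(T_m⁻¹ B ∩ T_n⁻¹ B) > 0`. -/
def IsMultRecurrent (R : Set ℚ) : Prop :=
  ∀ (X : Type) [MeasurableSpace X] (μ : Measure X) [IsProbabilityMeasure μ]
    (T : ℕ → X → X),
    (∀ n, 1 ≤ n → MeasurePreserving (T n) μ μ) →
    (∀ m n, 1 ≤ m → 1 ≤ n → T (m * n) = T m ∘ T n) →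
    ∀ B : Set X, MeasurableSet B → 0 < μ B →
      ∃ m n : ℕ, 1 ≤ m ∧ 1 ≤ n ∧ ((m : ℚ) / (n : ℚ)) ∈ R ∧
        0 < μ (T m ⁻¹' B ∩ T n ⁻¹' B)


open ENNReal in
lemma pigeonhole_measure {X : Type} [MeasurableSpace X] (μ : Measure X)
    [IsProbabilityMeasure μ] (N : ℕ) (A : ℕ → Set X)
    (hmeas : ∀ i, i < N → NullMeasurableSet (A i) μ)
    (hsize : ∀ i, i < N → μ (A i) = μ (A 0))
    (hbig : 1 < (N : ℝ≥0∞) * μ (A 0)) :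
    ∃ i j, i < j ∧ j < N ∧ 0 < μ (A i ∩ A j) := by
  by_contra hc
  push_neg at hc
  have hzero : ∀ i j, i < j → j < N → μ (A i ∩ A j) = 0 := by
    intro i j hij hj
    exact le_antisymm (hc i j hij hj) zero_le
  have hdisj : (↑(Finset.range N) : Set ℕ).Pairwise (Function.onFun (AEDisjoint μ) A) := by
    intro i hi j hj hij
    simp only [Finset.coe_range, Set.mem_Iio] at hi hj
    rcases lt_or_gt_of_ne hij with h | h
    · exact hzero i j h hj
    · exact (AEDisjoint.symm (hzero j i h hi))
  have hsum : μ (⋃ i ∈ Finset.range N, A i) = ∑ i ∈ Finset.range N, μ (A i) :=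
    measure_biUnion_finset₀ hdisj (fun i hi => hmeas i (Finset.mem_range.mp hi))
  have hsum2 : ∑ i ∈ Finset.range N, μ (A i) = (N : ℝ≥0∞) * μ (A 0) := by
    rw [Finset.sum_congr rfl (fun i hi => hsize i (Finset.mem_range.mp hi))]
    rw [Finset.sum_const, Finset.card_range, nsmul_eq_mul]
  have hle : μ (⋃ i ∈ Finset.range N, A i) ≤ 1 := prob_le_one
  rw [hsum, hsum2] at hle
  exact absurd hbig (not_lt.mpr hle)


lemma geom_aux (P : ℕ) : ∀ k : ℕ, (∑ l ∈ Finset.range k, (P+1)^l) * P + 1 = (P+1)^k := by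
  intro k
  induction k with
  | zero => simp
  | succ k ih =>
    rw [Finset.sum_range_succ, add_mul, pow_succ]
    nlinarith [ih]

lemma decomp : ∀ (a : ℕ) (B D : ℕ), a ∣ Nat.lcm B D →
    ∃ A₁ A₂ : ℕ, A₁ * A₂ = a ∧ A₁ ∣ B ∧ A₂ ∣ D ∧ Nat.Coprime A₁ A₂ := by
  intro a
  induction a using Nat.strong_induction_on with
  | _ a ih =>
    intro B D h
    rcases eq_or_ne a 0 with rfl | ha0
    · have hlcm : Nat.lcm B D = 0 := by simpa using h
      have hBD : B = 0 ∨ D = 0 := by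
        by_contra hc
        push_neg at hc
        exact Nat.lcm_ne_zero hc.1 hc.2 hlcm
      rcases hBD with hB | hD
      · exact ⟨0, 1, by simp, by simp [hB], one_dvd _, by simp⟩
      · exact ⟨1, 0, by simp, one_dvd _, by simp [hD], by simp⟩
    rcases eq_or_ne a 1 with rfl | ha1
    · exact ⟨1, 1, by simp, one_dvd _, one_dvd _, by simp⟩
    set p := a.minFac with hp_def
    have hp : p.Prime := Nat.minFac_prime ha1
    have hpa : p ∣ a := Nat.minFac_dvd a
    set k := a.factorization p with hk_def
    have hk1 : 1 ≤ k := hp.factorization_pos_of_dvd ha0 hpa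
    set P := p ^ k with hP_def
    have hPa : P ∣ a := Nat.ordProj_dvd a p
    set a' := a / P with ha'_def
    have hmul : P * a' = a := Nat.ordProj_mul_ordCompl_eq_self a p
    have hP1 : 1 < P := by
      have h2p : 2 ≤ p := hp.two_le
      calc 1 < p := h2p
      _ ≤ p ^ k := Nat.le_self_pow (by omega) p
    have ha'lt : a' < a := Nat.div_lt_self (Nat.pos_of_ne_zero ha0) hP1
    have hpa' : ¬ p ∣ a' := Nat.not_dvd_ordCompl hp ha0
    have ha'dvd : a' ∣ Nat.lcm B D := dvd_trans (Nat.ordCompl_dvd a p) h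
    obtain ⟨A₁, A₂, hm, h1, h2, hco⟩ := ih a' ha'lt B D ha'dvd
    have hcopa' : Nat.Coprime P a' := Nat.Coprime.pow_left _ ((Nat.Prime.coprime_iff_not_dvd hp).mpr hpa')
    have hA₁a' : A₁ ∣ a' := ⟨A₂, hm.symm⟩
    have hA₂a' : A₂ ∣ a' := Dvd.intro_left _ hm
    have hPBD : P ∣ B ∨ P ∣ D := by
      rcases eq_or_ne B 0 with rfl | hB0
      · exact Or.inl (dvd_zero _)
      rcases eq_or_ne D 0 with rfl | hD0
      · exact Or.inr (dvd_zero _)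
      have hlcm0 : Nat.lcm B D ≠ 0 := Nat.lcm_ne_zero hB0 hD0
      have hPlcm : P ∣ Nat.lcm B D := dvd_trans hPa h
      have hkle : k ≤ (Nat.lcm B D).factorization p :=
        (Nat.Prime.pow_dvd_iff_le_factorization hp hlcm0).mp hPlcm
      rw [Nat.factorization_lcm hB0 hD0] at hkle
      have hkle' : k ≤ B.factorization p ⊔ D.factorization p := by
        simpa using hkle
      rcases le_sup_iff.mp hkle' with hle | hle
      · exact Or.inl ((Nat.Prime.pow_dvd_iff_le_factorization hp hB0).mpr hle)
      · exact Or.inr ((Nat.Prime.pow_dvd_iff_le_factorization hp hD0).mpr hle)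
    rcases hPBD with hPB | hPD
    · exact ⟨P * A₁, A₂, by rw [mul_assoc, hm, hmul],
        Nat.Coprime.mul_dvd_of_dvd_of_dvd (hcopa'.coprime_dvd_right hA₁a') hPB h1,
        h2, (Nat.coprime_mul_iff_left).mpr ⟨hcopa'.coprime_dvd_right hA₂a', hco⟩⟩
    · exact ⟨A₁, P * A₂, by rw [show A₁ * (P * A₂) = P * (A₁ * A₂) by ring, hm, hmul],
        h1,
        Nat.Coprime.mul_dvd_of_dvd_of_dvd (hcopa'.coprime_dvd_right hA₂a') hPD h2,
        (Nat.coprime_mul_iff_right).mpr ⟨(hcopa'.coprime_dvd_right hA₁a').symm, hco⟩⟩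

lemma exp_set (A₂ : ℕ) (hA : 0 < A₂) : ∀ N : ℕ, ∃ t : ℕ → ℕ,
    (∀ i, 0 < t i) ∧
    (∀ i j, i < j → j < N → ∃ δ : ℕ, 0 < δ ∧ t j = t i + δ ∧ δ ∣ t i ∧ A₂ * δ ∣ t j) := by
  intro N
  induction N with
  | zero => exact ⟨fun _ => 1, fun _ => one_pos, fun i j hij hj => absurd hj (Nat.not_lt_zero j)⟩
  | succ N IH =>
    obtain ⟨t, htpos, hpair⟩ := IH
    -- γ decomposition: every t j (j < N) is t 0 + γ
    have hγex : ∀ j, j < N → ∃ γ, t j = t 0 + γ := by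
      intro j hj
      rcases Nat.eq_zero_or_pos j with rfl | hj0
      · exact ⟨0, by simp⟩
      · obtain ⟨δ, _, hδ, _, _⟩ := hpair 0 j hj0 hj
        exact ⟨δ, hδ⟩
    classical
    set D : ℕ := ∏ j ∈ Finset.range N, ∏ i ∈ Finset.range j, (t j - t i) with hD_def
    have hDpos : 0 < D := by
      apply Finset.prod_pos
      intro j hj
      apply Finset.prod_pos
      intro i hi
      obtain ⟨δ, hδpos, hδ, _, _⟩ := hpair i j (Finset.mem_range.mp hi) (Finset.mem_range.mp hj)
      omega
    have hDdvd : ∀ i j, i < j → j < N → (t j - t i) ∣ D := by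
      intro i j hij hj
      have h1 : (t j - t i) ∣ ∏ i' ∈ Finset.range j, (t j - t i') :=
        Finset.dvd_prod_of_mem (fun i' => t j - t i') (Finset.mem_range.mpr hij)
      have h2 : (∏ i' ∈ Finset.range j, (t j - t i')) ∣ D :=
        Finset.dvd_prod_of_mem (fun j' => ∏ i' ∈ Finset.range j', (t j' - t i')) (Finset.mem_range.mpr hj)
      exact h1.trans h2
    set h : ℕ := A₂ * D * D with hh_def
    have hhpos : 0 < h := by positivity
    set M : ℕ := h * A₂ * D with hM_def
    have hMpos : 0 < M := by positivity
    haveI : NeZero M := ⟨hMpos.ne'⟩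
    set u : ℕ → ℕ := fun i => 1 + h * (t i - t 0) with hu_def
    have hupos : ∀ i, 0 < u i := fun i => by simp [hu_def]
    set U : ℕ := ∏ i ∈ Finset.range N, u i with hU_def
    have hUpos : 0 < U := Finset.prod_pos (fun i _ => hupos i)
    -- coprimality of U and M
    have hcopuM : ∀ i, Nat.Coprime (u i) M := by
      intro i
      have h1 : Nat.Coprime (u i) (A₂ * D) := by
        have : u i = 1 + (A₂ * D) * (D * (t i - t 0)) := by rw [hu_def, hh_def]; ring_nf
        rw [this]
        exact (Nat.coprime_add_mul_left_left 1 (A₂*D) _).mpr (Nat.coprime_one_left _)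
      have h2 : M ∣ (A₂ * D)^3 := ⟨A₂, by rw [hM_def, hh_def]; ring⟩
      exact Nat.Coprime.coprime_dvd_right h2 (h1.pow_right 3)
    have hcopUM : Nat.Coprime U M := Nat.Coprime.prod_left (fun i _ => hcopuM i)
    -- R and modular inverse
    set R : ℕ := h * t 0 - 1 with hR_def
    have hRadd : R + 1 = h * t 0 := by
      have : 0 < h * t 0 := Nat.mul_pos hhpos (htpos 0)
      omega
    have hUunit : IsUnit (U : ZMod M) := (ZMod.isUnit_iff_coprime U M).mpr hcopUM
    set V₀ : ℕ := ((R : ZMod M) * (U : ZMod M)⁻¹).val with hV₀_def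
    have hV₀mod : V₀ * U ≡ R [MOD M] := by
      have : ((V₀ * U : ℕ) : ZMod M) = ((R : ℕ) : ZMod M) := by
        push_cast
        rw [hV₀_def, ZMod.natCast_val, ZMod.cast_id]
        rw [mul_assoc, ZMod.inv_mul_of_unit _ hUunit, mul_one]
      exact (ZMod.natCast_eq_natCast_iff _ _ _).mp this
    set V : ℕ := V₀ + M * (h * t 0) with hV_def
    have hVpos : 0 < V := by
      have := Nat.mul_pos hMpos (Nat.mul_pos hhpos (htpos 0))
      omega
    have hVmod : V * U ≡ R [MOD M] := by
      have hrw : V * U = V₀ * U + M * (h * t 0 * U) := by rw [hV_def]; ring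
      unfold Nat.ModEq
      rw [hrw, Nat.add_mul_mod_self_left]
      exact hV₀mod
    have hge : h * t 0 ≤ V * U := by
      have h1 : h * t 0 ≤ V := by
        have : M * (h * t 0) ≥ 1 * (h * t 0) := Nat.mul_le_mul_right _ hMpos
        omega
      calc h * t 0 ≤ V := h1
      _ ≤ V * U := Nat.le_mul_of_pos_right _ hUpos
    have hmod2 : h * t 0 ≡ V * U + 1 [MOD M] := by
      have := hVmod.add_right 1
      rw [hRadd] at this
      exact this.symm
    obtain ⟨T, hT⟩ : ∃ T, V * U + 1 - h * t 0 = M * T :=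
      (Nat.modEq_iff_dvd' (by omega)).mp hmod2
    have hkey : h * t 0 + M * T = V * U + 1 := by omega
    have hcomp : ∀ jj, jj < N → h * t jj + M * T = V * U + u jj := by
      intro jj hjj
      obtain ⟨γ, hγ⟩ := hγex jj hjj
      have hu1 : u jj = 1 + h * (t jj - t 0) := rfl
      have h2 : t jj - t 0 = γ := by omega
      rw [h2] at hu1
      have h1 : h * t jj = h * t 0 + h * γ := by rw [hγ]; ring
      omega
    -- the new sequence
    refine ⟨fun n => if n = 0 then V * U else h * t (n-1) + M * T, ?_, ?_⟩
    · intro i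
      rcases Nat.eq_zero_or_pos i with rfl | hi
      · simpa using Nat.mul_pos hVpos hUpos
      · have : i ≠ 0 := hi.ne'
        simp only [this, if_false]
        have := Nat.mul_pos hhpos (htpos (i-1))
        omega
    · intro i j hij hj
      rcases Nat.eq_zero_or_pos i with rfl | hi
      · -- new pair (0, j) with j ≥ 1
        obtain ⟨j, rfl⟩ : ∃ j', j = j' + 1 := ⟨j - 1, by omega⟩
        have hjN : j < N := by omega
        obtain ⟨γ, hγ⟩ := hγex j hjN
        simp only [Nat.add_sub_cancel, if_false, Nat.succ_ne_zero, if_true, reduceIte]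
        refine ⟨u j, hupos j, hcomp j hjN, ?_, ?_⟩
        · -- u j ∣ V * U
          have h1 : u j ∣ U := Finset.dvd_prod_of_mem u (Finset.mem_range.mpr hjN)
          exact Dvd.dvd.mul_left h1 V
        · -- A₂ * u j ∣ h * t j + M * T
          rw [hcomp j hjN]
          have hco2 : Nat.Coprime A₂ (u j) := by
            have : u j = 1 + A₂ * (D * D * (t j - t 0)) := by rw [hu_def, hh_def]; ring_nf
            rw [this]
            exact ((Nat.coprime_add_mul_left_left 1 A₂ _).mpr (Nat.coprime_one_left _)).symm
          have hdvd1 : u j ∣ V * U + u j :=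
            dvd_add (Dvd.dvd.mul_left (Finset.dvd_prod_of_mem u (Finset.mem_range.mpr hjN)) V) dvd_rfl
          have hdvd2 : A₂ ∣ V * U + u j := by
            have hA₂M : A₂ ∣ M := ⟨h * D, by rw [hM_def]; ring⟩
            have hm1 : V * U ≡ R [MOD A₂] := hVmod.of_dvd hA₂M
            have hm2 : V * U + u j ≡ R + u j [MOD A₂] := hm1.add_right _
            have hval : R + u j = h * t 0 + h * (t j - t 0) := by
              have hu1 : u j = 1 + h * (t j - t 0) := rfl
              omega
            have hdvd3 : A₂ ∣ h * t 0 + h * (t j - t 0) := by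
              have hA₂h : A₂ ∣ h := ⟨D * D, by rw [hh_def]; ring⟩
              exact dvd_add (hA₂h.mul_right _) (hA₂h.mul_right _)
            have hm3 : h * t 0 + h * (t j - t 0) ≡ 0 [MOD A₂] :=
              (Nat.modEq_zero_iff_dvd).mpr hdvd3
            have : V * U + u j ≡ 0 [MOD A₂] := (hm2.trans (by rw [hval])).trans hm3
            exact (Nat.modEq_zero_iff_dvd).mp this
          exact Nat.Coprime.mul_dvd_of_dvd_of_dvd hco2 hdvd2 hdvd1
      · -- old pair (i, j), both ≥ 1
        obtain ⟨i, rfl⟩ : ∃ i', i = i' + 1 := ⟨i - 1, by omega⟩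
        obtain ⟨j, rfl⟩ : ∃ j', j = j' + 1 := ⟨j - 1, by omega⟩
        have hijN : i < j := by omega
        have hjN : j < N := by omega
        obtain ⟨δ, hδpos, hδsum, hδdvd1, hδdvd2⟩ := hpair i j hijN hjN
        have hδD : δ ∣ D := by
          have := hDdvd i j hijN hjN
          have hsub : t j - t i = δ := by omega
          rwa [hsub] at this
        simp only [Nat.succ_ne_zero, if_false, Nat.add_sub_cancel, reduceIte]
        refine ⟨h * δ, Nat.mul_pos hhpos hδpos, ?_, ?_, ?_⟩
        · rw [hδsum]; ring
        · -- h * δ ∣ h * t i + M * T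
          have : h * t i + M * T = h * (t i + A₂ * D * T) := by rw [hM_def]; ring
          rw [this]
          exact mul_dvd_mul_left h (dvd_add hδdvd1 (Dvd.dvd.mul_right (hδD.mul_left A₂) T))
        · -- A₂ * (h * δ) ∣ h * t j + M * T
          have h1 : h * t j + M * T = h * (t j + A₂ * D * T) := by rw [hM_def]; ring
          have h2 : A₂ * (h * δ) = h * (A₂ * δ) := by ring
          rw [h1, h2]
          refine mul_dvd_mul_left h (dvd_add hδdvd2 ?_)
          have : A₂ * δ ∣ A₂ * D := mul_dvd_mul_left A₂ hδD
          exact this.mul_right T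

lemma main_set (A₁ A₂ W₀ : ℕ) (h₁ : 0 < A₁) (h₂ : 0 < A₂) (hco : Nat.Coprime A₁ A₂)
    (N : ℕ) : ∃ s : ℕ → ℕ,
    (∀ i, i < N → 0 < s i) ∧
    (∀ i j, i < j → j < N → ∃ w Δ : ℕ, 0 < Δ ∧ s j = s i + Δ ∧ s i = w * Δ ∧
      A₁ ∣ w ∧ A₂ ∣ (w + 1) ∧ W₀ ≤ w) := by
  obtain ⟨t, htpos, hpair⟩ := exp_set A₂ h₂ N
  -- x : CRT value, x ≡ 0 mod A₁, x ≡ 1 mod A₂, x ≥ max 2 W₀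
  obtain ⟨x, hx1, hx2, hx3⟩ : ∃ x : ℕ, A₁ ∣ x ∧ x ≡ 1 [MOD A₂] ∧ 2 + W₀ ≤ x := by
    obtain ⟨c, hc1, hc2⟩ := Nat.chineseRemainder hco 0 1
    refine ⟨c + A₁ * A₂ * (2 + W₀ + 1), ?_, ?_, ?_⟩
    · have : (c : ℕ) ≡ 0 [MOD A₁] := hc1
      have h' : (c + A₁ * A₂ * (2 + W₀ + 1)) ≡ 0 + A₁ * A₂ * (2 + W₀ + 1) [MOD A₁] :=
        Nat.ModEq.add_right _ this
      have h'' : (0 + A₁ * A₂ * (2 + W₀ + 1)) ≡ 0 [MOD A₁] := by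
        have : A₁ ∣ A₁ * A₂ * (2 + W₀ + 1) := ⟨A₂ * (2 + W₀ + 1), by ring⟩
        simpa using (Nat.modEq_zero_iff_dvd).mpr this
      have := h'.trans h''
      exact (Nat.modEq_zero_iff_dvd).mp this
    · have : (c : ℕ) ≡ 1 [MOD A₂] := hc2
      have h' : (c + A₁ * A₂ * (2 + W₀ + 1)) ≡ 1 + A₁ * A₂ * (2 + W₀ + 1) [MOD A₂] :=
        Nat.ModEq.add_right _ this
      refine h'.trans ?_
      have hd : A₂ ∣ A₁ * A₂ * (2 + W₀ + 1) := ⟨A₁ * (2 + W₀ + 1), by ring⟩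
      obtain ⟨e, he⟩ := hd
      rw [he]
      show 1 + A₂ * e ≡ 1 [MOD A₂]
      unfold Nat.ModEq
      rw [Nat.add_mul_mod_self_left]
    · have h1 : 1 ≤ A₁ * A₂ := Nat.mul_pos h₁ h₂
      nlinarith
  have hx2' : 2 ≤ x := by omega
  have hxpos : 0 < x := by omega
  -- top exponent
  set Ttop : ℕ := t (N - 1) with hT_def
  have hTle : ∀ i, i < N → t i ≤ Ttop := by
    intro i hi
    rcases lt_or_ge i (N-1) with hlt | hge
    · obtain ⟨δ, hδpos, hδ, _, _⟩ := hpair i (N-1) hlt (by omega)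
      omega
    · have : i = N - 1 := by omega
      rw [this]
  refine ⟨fun i => x ^ Ttop - x ^ (Ttop - t i), ?_, ?_⟩
  · intro i hi
    show 0 < x ^ Ttop - x ^ (Ttop - t i)
    have h1 : Ttop - t i < Ttop := by
      have := htpos i
      have := hTle i hi
      have := htpos (N-1)
      omega
    have := Nat.pow_lt_pow_right hx2' h1
    omega
  · intro i j hij hj
    obtain ⟨m, hmpos, hsum, hdvd1, hdvd2⟩ := hpair i j hij hj
    have hiN : i < N := hij.trans hj
    obtain ⟨A, hA⟩ : ∃ A, t j + A = Ttop := ⟨Ttop - t j, by have := hTle j hj; omega⟩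
    set k : ℕ := t i / m with hk_def
    have hk : m * k = t i := by rw [mul_comm]; exact Nat.div_mul_cancel hdvd1
    have hkpos : 0 < k := by
      rcases Nat.eq_zero_or_pos k with h0 | h
      · exfalso
        rw [h0, mul_zero] at hk
        have := htpos i
        omega
      · exact h
    have hkj : t j = m * (k + 1) := by rw [hsum, ← hk]; ring
    have hA₂k : A₂ ∣ (k + 1) := by
      have h1 : m * A₂ ∣ m * (k + 1) := by
        rw [← hkj, mul_comm m A₂]; exact hdvd2
      exact (Nat.mul_dvd_mul_iff_left hmpos).mp h1
    obtain ⟨P, hP⟩ : ∃ P, x ^ m = P + 1 := ⟨x ^ m - 1, by have := Nat.one_le_pow m x hxpos; omega⟩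
    have hPpos : 0 < P := by
      have h1 : x ≤ x ^ m := Nat.le_self_pow hmpos.ne' x
      omega
    set G : ℕ := ∑ l ∈ Finset.range k, (P+1)^l with hG_def
    have hgeom : G * P + 1 = (P+1)^k := geom_aux P k
    have hGpos : 0 < G := by
      have h01 : (0:ℕ) ∈ Finset.range k := Finset.mem_range.mpr hkpos
      have := Finset.single_le_sum (f := fun l => (P+1)^l) (fun l _ => Nat.zero_le _) h01
      have h2 : (P+1)^0 = 1 := pow_zero _
      calc 0 < (P+1)^(0:ℕ) := by positivity
      _ ≤ G := Finset.single_le_sum (f := fun l => (P+1)^l) (fun l _ => Nat.zero_le _) h01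
    refine ⟨x ^ m * G, x ^ A * P, by positivity, ?_, ?_, ?_, ?_, ?_⟩
    · -- s j = s i + Δ
      show x ^ Ttop - x ^ (Ttop - t j) = (x ^ Ttop - x ^ (Ttop - t i)) + x ^ A * P
      have e1 : Ttop - t j = A := by omega
      have e2 : Ttop - t i = A + m := by omega
      rw [e1, e2]
      have hX2 : x ^ (A + m) = x ^ A * (P + 1) := by rw [pow_add, hP]
      have hle1 : x ^ A ≤ x ^ Ttop := Nat.pow_le_pow_right hxpos (by omega)
      have hle2 : x ^ (A+m) ≤ x ^ Ttop := Nat.pow_le_pow_right hxpos (by omega)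
      have hX2' : x ^ (A+m) = x ^ A + x ^ A * P := by rw [hX2]; ring
      omega
    · -- s i = w * Δ
      show x ^ Ttop - x ^ (Ttop - t i) = (x ^ m * G) * (x ^ A * P)
      have e2 : Ttop - t i = A + m := by omega
      rw [e2]
      have hX2 : x ^ (A + m) = x ^ A * (P + 1) := by rw [pow_add, hP]
      have hle2 : x ^ (A+m) ≤ x ^ Ttop := Nat.pow_le_pow_right hxpos (by omega)
      have hrw : (x ^ m * G) * (x ^ A * P) = x ^ (A+m) * (G * P) := by
        rw [pow_add]; ring
      have hBig : x ^ (A+m) * (G * P) + x ^ (A+m) = x ^ Ttop := by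
        have h1 : x ^ (A+m) * (G * P) + x ^ (A+m) = x ^ (A+m) * (G * P + 1) := by ring
        rw [h1, hgeom]
        have h2 : (P+1)^k = x ^ (m * k) := by rw [pow_mul, hP]
        rw [h2, ← pow_add]
        congr 1
        omega
      omega
    · -- A₁ ∣ w
      exact (hx1.trans (dvd_pow_self x hmpos.ne')).mul_right G
    · -- A₂ ∣ w + 1
      haveI : NeZero A₂ := ⟨h₂.ne'⟩
      have hx1' : ((x : ℕ) : ZMod A₂) = 1 := by
        have := (ZMod.natCast_eq_natCast_iff x 1 A₂).mpr hx2
        simpa using this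
      have hGx : G = ∑ l ∈ Finset.range k, (x ^ m) ^ l := by
        rw [hG_def]
        simp only [← hP]
      have hcast : ((x ^ m * G + 1 : ℕ) : ZMod A₂) = 0 := by
        rw [hGx]
        push_cast
        rw [hx1']
        simp only [one_pow, one_mul]
        rw [Finset.sum_const, Finset.card_range, nsmul_eq_mul, mul_one]
        have : ((k : ℕ) : ZMod A₂) + 1 = ((k + 1 : ℕ) : ZMod A₂) := by push_cast; ring
        rw [this]
        exact (ZMod.natCast_eq_zero_iff _ _).mpr hA₂k
      exact (ZMod.natCast_eq_zero_iff _ _).mp hcast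
    · -- W₀ ≤ w
      have h1 : x ≤ x ^ m := Nat.le_self_pow hmpos.ne' x
      have h2 : x ^ m * 1 ≤ x ^ m * G := Nat.mul_le_mul_left _ hGpos
      omega

-- case d > b : q = s i / s j (ratio < 1)
lemma mem_Rset_lt (a : ℕ) (ha : 0 < a) (b d : ℤ) (hlt : b < d)
    (Ab Ad : ℕ) (hprod : Ab * Ad = a) (hAb : (Ab:ℤ) ∣ b) (hAd : (Ad:ℤ) ∣ d)
    (hco : Nat.Coprime Ab Ad)
    (w Δ si sj : ℕ) (hΔ : 0 < Δ) (hsj : sj = si + Δ) (hsi : si = w * Δ)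
    (h1 : Ab ∣ w) (h2 : Ad ∣ (w + 1)) (hw : a + b.natAbs + d.natAbs + 1 ≤ w)
    (hsipos : 0 < si) :
    ((si : ℚ) / (sj : ℚ)) ∈ Rset a a b d := by
  have hwpos : 0 < w := by omega
  set X : ℤ := (w : ℤ) * (d - b) - b with hX_def
  have hX2 : X = ((w:ℤ) + 1) * (d - b) - d := by rw [hX_def]; ring
  have hXAb : (Ab:ℤ) ∣ X := by
    rw [hX_def]
    exact dvd_sub (Dvd.dvd.mul_right (Int.natCast_dvd_natCast.mpr h1) _) hAb
  have hXAd : (Ad:ℤ) ∣ X := by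
    rw [hX2]
    refine dvd_sub (Dvd.dvd.mul_right ?_ _) hAd
    have := Int.natCast_dvd_natCast.mpr h2
    push_cast at this
    exact this
  have hXa : (a:ℤ) ∣ X := by
    have hcoZ : IsCoprime (Ab:ℤ) (Ad:ℤ) := Int.isCoprime_iff_gcd_eq_one.mpr hco
    have := hcoZ.mul_dvd hXAb hXAd
    rwa [show ((Ab:ℤ) * Ad) = (a:ℤ) by exact_mod_cast congrArg Nat.cast hprod] at this
  have hble : b ≤ (b.natAbs : ℤ) := Int.le_natAbs
  have hdb1 : 1 ≤ d - b := by omega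
  have hwcast : (a:ℤ) + b.natAbs + d.natAbs + 1 ≤ (w:ℤ) := by exact_mod_cast hw
  have hXbig : (a:ℤ) + 1 ≤ X := by
    have h3 : (w:ℤ) * (d - b) ≥ (w:ℤ) * 1 := by
      apply mul_le_mul_of_nonneg_left hdb1 (by positivity)
    rw [hX_def]
    omega
  have hXpos : 0 < X := by omega
  have hapos : (0:ℤ) < a := by exact_mod_cast ha
  obtain ⟨nz, hnz⟩ := hXa
  have hnzpos : 0 < nz := by
    by_contra hc
    push_neg at hc
    have : (a:ℤ) * nz ≤ 0 := mul_nonpos_of_nonneg_of_nonpos hapos.le hc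
    omega
  set n : ℕ := nz.toNat with hn_def
  have hn0 : 0 < n := by omega
  have hncast : (n : ℤ) = nz := Int.toNat_of_nonneg hnzpos.le
  have han : (a:ℤ) * n = X := by rw [hncast, ← hnz]
  -- rational identities
  have hnum : (a:ℚ) * (n:ℚ) + (b:ℚ) = ((w:ℚ)) * ((d:ℚ) - (b:ℚ)) := by
    have : X + b = (w:ℤ) * (d - b) := by rw [hX_def]; ring
    have h4 : (a:ℤ) * n + b = (w:ℤ) * (d - b) := by omega
    exact_mod_cast congrArg (fun z : ℤ => (z : ℚ)) h4
  have hden : (a:ℚ) * (n:ℚ) + (d:ℚ) = ((w:ℚ) + 1) * ((d:ℚ) - (b:ℚ)) := by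
    have h4 : (a:ℤ) * n + d = ((w:ℤ) + 1) * (d - b) := by rw [han, hX2]; ring
    exact_mod_cast congrArg (fun z : ℤ => (z : ℚ)) h4
  have hsjpos : 0 < sj := by omega
  have hsjQ : (0:ℚ) < (sj:ℚ) := by exact_mod_cast hsjpos
  have hsiQ : (0:ℚ) < (si:ℚ) := by exact_mod_cast hsipos
  have hdenpos : (0:ℚ) < (a:ℚ) * (n:ℚ) + (d:ℚ) := by
    rw [hden]
    have hw1 : (0:ℚ) < (w:ℚ) + 1 := by positivity
    have hdb : (0:ℚ) < (d:ℚ) - (b:ℚ) := by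
      have : (0:ℤ) < d - b := by omega
      exact_mod_cast this
    positivity
  refine ⟨⟨n, hn0, ?_⟩, by positivity, ?_⟩
  · rw [div_eq_div_iff hsjQ.ne' hdenpos.ne', hnum, hden]
    have hsiQ' : (si:ℚ) = (w:ℚ) * (Δ:ℚ) := by exact_mod_cast congrArg (fun z : ℕ => (z:ℚ)) hsi
    have hsjQ' : (sj:ℚ) = (w:ℚ) * (Δ:ℚ) + (Δ:ℚ) := by
      rw [hsj, hsi]; push_cast; ring
    rw [hsiQ', hsjQ']
    ring
  · have : (si:ℚ) / (sj:ℚ) < 1 := by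
      rw [div_lt_one hsjQ]
      exact_mod_cast (by omega : si < sj)
    exact this.ne

-- case b > d : q = s j / s i (ratio > 1)
lemma mem_Rset_gt (a : ℕ) (ha : 0 < a) (b d : ℤ) (hlt : d < b)
    (Ab Ad : ℕ) (hprod : Ab * Ad = a) (hAb : (Ab:ℤ) ∣ b) (hAd : (Ad:ℤ) ∣ d)
    (hco : Nat.Coprime Ab Ad)
    (w Δ si sj : ℕ) (hΔ : 0 < Δ) (hsj : sj = si + Δ) (hsi : si = w * Δ)
    (h1 : Ad ∣ w) (h2 : Ab ∣ (w + 1)) (hw : a + b.natAbs + d.natAbs + 1 ≤ w)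
    (hsipos : 0 < si) :
    ((sj : ℚ) / (si : ℚ)) ∈ Rset a a b d := by
  have hwpos : 0 < w := by omega
  set X : ℤ := (w : ℤ) * (b - d) - d with hX_def
  have hX2 : X = ((w:ℤ) + 1) * (b - d) - b := by rw [hX_def]; ring
  have hXAd : (Ad:ℤ) ∣ X := by
    rw [hX_def]
    exact dvd_sub (Dvd.dvd.mul_right (Int.natCast_dvd_natCast.mpr h1) _) hAd
  have hXAb : (Ab:ℤ) ∣ X := by
    rw [hX2]
    refine dvd_sub (Dvd.dvd.mul_right ?_ _) hAb
    have := Int.natCast_dvd_natCast.mpr h2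
    push_cast at this
    exact this
  have hXa : (a:ℤ) ∣ X := by
    have hcoZ : IsCoprime (Ab:ℤ) (Ad:ℤ) := Int.isCoprime_iff_gcd_eq_one.mpr hco
    have := hcoZ.mul_dvd hXAb hXAd
    rwa [show ((Ab:ℤ) * Ad) = (a:ℤ) by exact_mod_cast congrArg Nat.cast hprod] at this
  have hdle : d ≤ (d.natAbs : ℤ) := Int.le_natAbs
  have hdb1 : 1 ≤ b - d := by omega
  have hwcast : (a:ℤ) + b.natAbs + d.natAbs + 1 ≤ (w:ℤ) := by exact_mod_cast hw
  have hXbig : (a:ℤ) + 1 ≤ X := by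
    have h3 : (w:ℤ) * (b - d) ≥ (w:ℤ) * 1 := by
      apply mul_le_mul_of_nonneg_left hdb1 (by positivity)
    rw [hX_def]
    omega
  have hXpos : 0 < X := by omega
  have hapos : (0:ℤ) < a := by exact_mod_cast ha
  obtain ⟨nz, hnz⟩ := hXa
  have hnzpos : 0 < nz := by
    by_contra hc
    push_neg at hc
    have : (a:ℤ) * nz ≤ 0 := mul_nonpos_of_nonneg_of_nonpos hapos.le hc
    omega
  set n : ℕ := nz.toNat with hn_def
  have hn0 : 0 < n := by omega
  have hncast : (n : ℤ) = nz := Int.toNat_of_nonneg hnzpos.le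
  have han : (a:ℤ) * n = X := by rw [hncast, ← hnz]
  have hnum : (a:ℚ) * (n:ℚ) + (b:ℚ) = ((w:ℚ) + 1) * ((b:ℚ) - (d:ℚ)) := by
    have h4 : (a:ℤ) * n + b = ((w:ℤ) + 1) * (b - d) := by rw [han, hX2]; ring
    exact_mod_cast congrArg (fun z : ℤ => (z : ℚ)) h4
  have hden : (a:ℚ) * (n:ℚ) + (d:ℚ) = ((w:ℚ)) * ((b:ℚ) - (d:ℚ)) := by
    have h4 : (a:ℤ) * n + d = (w:ℤ) * (b - d) := by rw [han, hX_def]; ring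
    exact_mod_cast congrArg (fun z : ℤ => (z : ℚ)) h4
  have hsjpos : 0 < sj := by omega
  have hsjQ : (0:ℚ) < (sj:ℚ) := by exact_mod_cast hsjpos
  have hsiQ : (0:ℚ) < (si:ℚ) := by exact_mod_cast hsipos
  have hdenpos : (0:ℚ) < (a:ℚ) * (n:ℚ) + (d:ℚ) := by
    rw [hden]
    have hwQ : (0:ℚ) < (w:ℚ) := by exact_mod_cast hwpos
    have hdb : (0:ℚ) < (b:ℚ) - (d:ℚ) := by
      have : (0:ℤ) < b - d := by omega
      exact_mod_cast this
    positivity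
  refine ⟨⟨n, hn0, ?_⟩, by positivity, ?_⟩
  · rw [div_eq_div_iff hsiQ.ne' hdenpos.ne', hnum, hden]
    have hsiQ' : (si:ℚ) = (w:ℚ) * (Δ:ℚ) := by exact_mod_cast congrArg (fun z : ℕ => (z:ℚ)) hsi
    have hsjQ' : (sj:ℚ) = (w:ℚ) * (Δ:ℚ) + (Δ:ℚ) := by
      rw [hsj, hsi]; push_cast; ring
    rw [hsiQ', hsjQ']
    ring
  · have : 1 < (sj:ℚ) / (si:ℚ) := by
      rw [lt_div_iff₀ hsiQ, one_mul]
      exact_mod_cast (by omega : si < sj)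
    exact this.ne'

theorem multiplicative_recurrence_of_moebius
    (a c : ℕ) (ha : 0 < a) (hc : 0 < c) (b d : ℤ)
    (hne : (Rset a c b d).Nonempty) (hac : a = c) (hdvd : (a : ℤ) ∣ lcm b d) :
    IsMultRecurrent (Rset a c b d) := by
  subst hac
  -- b ≠ d
  have hbd : b ≠ d := by
    rintro rfl
    obtain ⟨q, ⟨⟨n, hn, hq⟩, hqpos, hqne⟩⟩ := hne
    rcases eq_or_ne ((a:ℚ) * n + (b:ℚ)) 0 with h0 | h0
    · rw [hq, h0] at hqpos
      simp at hqpos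
    · rw [hq, div_self h0] at hqne
      exact hqne rfl
  -- decomposition
  have hdvd' : a ∣ Nat.lcm b.natAbs d.natAbs := by
    have h1 : (a:ℤ) ∣ (Int.lcm b d : ℤ) := hdvd
    exact_mod_cast h1
  obtain ⟨Ab, Ad, hprod, hAbB, hAdD, hco⟩ := decomp a b.natAbs d.natAbs hdvd'
  have hAb : (Ab:ℤ) ∣ b := dvd_trans (Int.natCast_dvd_natCast.mpr hAbB) (Int.natAbs_dvd.mpr dvd_rfl)
  have hAd : (Ad:ℤ) ∣ d := dvd_trans (Int.natCast_dvd_natCast.mpr hAdD) (Int.natAbs_dvd.mpr dvd_rfl)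
  have hAbpos : 0 < Ab := by
    rcases Nat.eq_zero_or_pos Ab with h0 | h
    · exfalso; rw [h0] at hprod; simp at hprod; omega
    · exact h
  have hAdpos : 0 < Ad := by
    rcases Nat.eq_zero_or_pos Ad with h0 | h
    · exfalso; rw [h0] at hprod; simp at hprod; omega
    · exact h
  intro X _ μ _ T hT hmul B hB hμB
  -- choose N
  have hμne : μ B ≠ 0 := hμB.ne'
  have hinvne : (μ B)⁻¹ ≠ ⊤ := ENNReal.inv_ne_top.mpr hμne
  obtain ⟨N, hN⟩ := ENNReal.exists_nat_gt hinvne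
  have hμBne_top : μ B ≠ ⊤ := (measure_lt_top μ B).ne
  have hNbig : 1 < (N : ENNReal) * μ B := by
    have h1 : (μ B)⁻¹ * μ B < (N : ENNReal) * μ B := by
      rw [mul_comm _ (μ B), mul_comm _ (μ B)]; exact ENNReal.mul_lt_mul_right hμne hμBne_top hN
    rwa [ENNReal.inv_mul_cancel hμne hμBne_top] at h1
  set W₀ : ℕ := a + b.natAbs + d.natAbs + 1 with hW₀_def
  rcases lt_or_gt_of_ne hbd with hblt | hbgt
  · -- b < d : use (Ab, Ad)
    obtain ⟨s, hspos, hsp⟩ := main_set Ab Ad W₀ hAbpos hAdpos hco N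
    set A : ℕ → Set X := fun i => T (s i) ⁻¹' B with hA_def
    have hmeas : ∀ i, i < N → NullMeasurableSet (A i) μ := by
      intro i hi
      exact (((hT (s i) (hspos i hi)).measurable) hB).nullMeasurableSet
    have hsize : ∀ i, i < N → μ (A i) = μ B := by
      intro i hi
      exact (hT (s i) (hspos i hi)).measure_preimage hB.nullMeasurableSet
    have hN0 : 0 < N := by
      by_contra h0
      push_neg at h0
      interval_cases N
      · simp at hNbig
    obtain ⟨i, j, hij, hj, hpos⟩ := pigeonhole_measure μ N A hmeas
      (fun i hi => by rw [hsize i hi, hsize 0 hN0]) (by rwa [hsize 0 hN0])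
    obtain ⟨w, Δ, hΔ, hsj, hsi, h1, h2, hw⟩ := hsp i j hij hj
    refine ⟨s i, s j, hspos i (hij.trans hj), hspos j hj, ?_, hpos⟩
    exact mem_Rset_lt a ha b d hblt Ab Ad hprod hAb hAd hco w Δ (s i) (s j)
      hΔ hsj hsi h1 h2 hw (hspos i (hij.trans hj))
  · -- d < b : use (Ad, Ab)
    obtain ⟨s, hspos, hsp⟩ := main_set Ad Ab W₀ hAdpos hAbpos hco.symm N
    set A : ℕ → Set X := fun i => T (s i) ⁻¹' B with hA_def
    have hmeas : ∀ i, i < N → NullMeasurableSet (A i) μ := by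
      intro i hi
      exact (((hT (s i) (hspos i hi)).measurable) hB).nullMeasurableSet
    have hsize : ∀ i, i < N → μ (A i) = μ B := by
      intro i hi
      exact (hT (s i) (hspos i hi)).measure_preimage hB.nullMeasurableSet
    have hN0 : 0 < N := by
      by_contra h0
      push_neg at h0
      interval_cases N
      · simp at hNbig
    obtain ⟨i, j, hij, hj, hpos⟩ := pigeonhole_measure μ N A hmeas
      (fun i hi => by rw [hsize i hi, hsize 0 hN0]) (by rwa [hsize 0 hN0])
    obtain ⟨w, Δ, hΔ, hsj, hsi, h1, h2, hw⟩ := hsp i j hij hj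
    refine ⟨s j, s i, hspos j hj, hspos i (hij.trans hj), ?_, ?_⟩
    · exact mem_Rset_gt a ha b d hbgt Ab Ad hprod hAb hAd hco.symm.symm w Δ (s i) (s j)
        hΔ hsj hsi h1 h2 hw (hspos i (hij.trans hj))
    · rwa [Set.inter_comm]
end

section
/- Let a, c be positive integers and b, d be integers such that R_{a,b,c,d} is nonempty. If R_{a,b,c,d} is a set of topological multiplicative recurrence, then a = c and a divides lcm(b, d). -/
open MeasureTheory Filter

/-- `R` is a set of topological multiplicative recurrence: for every finite coloring of
the positive integers there are `m`, `n` of the same color with `m/n ∈ R`. -/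
def IsTopMultRecurrent (R : Set ℚ) : Prop :=
  ∀ s : ℕ, 0 < s → ∀ c : ℕ+ → Fin s, ∃ m n : ℕ+, c m = c n ∧ ((m : ℚ) / (n : ℚ)) ∈ R

lemma int_pow_dvd_iff {p : ℕ} (hp : p.Prime) {x : ℤ} (hx : x ≠ 0) (n : ℕ) :
    (p:ℤ)^n ∣ x ↔ n ≤ x.natAbs.factorization p := by
  rw [← Int.natAbs_dvd_natAbs, Int.natAbs_pow, Int.natAbs_natCast]
  exact (hp.pow_dvd_iff_le_factorization (Int.natAbs_ne_zero.2 hx))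

lemma nu_mul (p : ℕ) {x y : ℤ} (hx : x ≠ 0) (hy : y ≠ 0) :
    (x*y).natAbs.factorization p = x.natAbs.factorization p + y.natAbs.factorization p := by
  rw [Int.natAbs_mul, Nat.factorization_mul (Int.natAbs_ne_zero.2 hx) (Int.natAbs_ne_zero.2 hy)]
  simp

lemma nu_add {p : ℕ} (hp : p.Prime) {x y : ℤ} (hy : y ≠ 0) {t : ℕ}
    (hx : (p:ℤ)^(t+1) ∣ x) (hyt : y.natAbs.factorization p = t) :
    (x + y) ≠ 0 ∧ (x + y).natAbs.factorization p = t := by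
  have hxt : (p:ℤ)^t ∣ x := dvd_trans (pow_dvd_pow _ (Nat.le_succ t)) hx
  have hyd : (p:ℤ)^t ∣ y := (int_pow_dvd_iff hp hy t).2 hyt.ge
  have hynd : ¬ (p:ℤ)^(t+1) ∣ y := by
    rw [int_pow_dvd_iff hp hy, hyt]; omega
  have hne : x + y ≠ 0 := by
    intro h
    apply hynd
    have hyx : y = -x := by linarith
    rw [hyx]
    exact dvd_neg.2 hx
  refine ⟨hne, le_antisymm ?_ ((int_pow_dvd_iff hp hne t).1 (dvd_add hxt hyd))⟩
  by_contra h
  push_neg at h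
  exact hynd (by have h2 : (p:ℤ)^(t+1) ∣ x + y := (int_pow_dvd_iff hp hne _).2 h
                 simpa using dvd_sub h2 hx)


lemma boundedAway (a c : ℕ) (ha : 0 < a) (hc : 0 < c) (hac : a ≠ c) (b d : ℤ) :
    ∃ ε M : ℝ, 0 < ε ∧ ∀ q ∈ Rset a c b d, ε ≤ |Real.log q| ∧ |Real.log q| ≤ M := by
  set F : ℕ → ℝ := fun N => ((a:ℝ)*N + b)/((c:ℝ)*N + d) with hF
  set G : ℕ → ℝ := fun N => |Real.log (F N)| with hG
  set l : ℝ := |Real.log ((a:ℝ)/c)| with hl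
  have hacpos : (0:ℝ) < (a:ℝ)/c := by positivity
  have hacne : (a:ℝ)/c ≠ 1 := by
    intro h
    rw [div_eq_one_iff_eq (by positivity : (c:ℝ) ≠ 0)] at h
    exact hac (by exact_mod_cast h)
  have hlpos : 0 < l := by
    rw [hl, abs_pos]
    simp only [ne_eq, Real.log_eq_zero, not_or]
    refine ⟨by positivity, hacne, by nlinarith⟩
  -- the limit
  have htendF : Tendsto F atTop (nhds ((a:ℝ)/c)) := by
    have hb0 : Tendsto (fun N : ℕ => (b:ℝ)/N) atTop (nhds 0) :=
      tendsto_const_div_atTop_nhds_zero_nat (b:ℝ)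
    have hd0 : Tendsto (fun N : ℕ => (d:ℝ)/N) atTop (nhds 0) :=
      tendsto_const_div_atTop_nhds_zero_nat (d:ℝ)
    have h1 : Tendsto (fun N : ℕ => ((a:ℝ) + b/N)/((c:ℝ) + d/N)) atTop
        (nhds ((a:ℝ)/c)) := by
      have := ((tendsto_const_nhds (x := (a:ℝ)) (f := atTop)).add hb0).div ((tendsto_const_nhds (x := (c:ℝ)) (f := atTop)).add hd0)
        (by positivity : ((c:ℝ) + 0) ≠ 0)
      simpa [Pi.div_def] using this
    refine h1.congr' ?_
    filter_upwards [Filter.eventually_ge_atTop 1] with N hN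
    have hN0 : (N:ℝ) ≠ 0 := Nat.cast_ne_zero.2 (by omega)
    have hnum : (a:ℝ) + (b:ℝ)/N = ((a:ℝ)*N + b)/N := by field_simp
    have hden : (c:ℝ) + (d:ℝ)/N = ((c:ℝ)*N + d)/N := by field_simp
    rw [hnum, hden, hF]
    rcases eq_or_ne ((c:ℝ)*N + d) 0 with hy | hy
    · simp [hy]
    · field_simp
  have htendG : Tendsto G atTop (nhds l) := by
    have hlog : Tendsto (fun N => Real.log (F N)) atTop (nhds (Real.log ((a:ℝ)/c))) :=
      ((Real.continuousAt_log hacpos.ne').tendsto.comp htendF)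
    exact hlog.abs
  have hmem : l ∈ Set.Ioo (l/2) (l+1) := by constructor <;> linarith
  have hev : ∀ᶠ N in atTop, G N ∈ Set.Ioo (l/2) (l+1) :=
    htendG (isOpen_Ioo.mem_nhds hmem)
  obtain ⟨N₀, hN₀⟩ := eventually_atTop.1 hev
  -- finite part
  set S : Finset ℝ := (Finset.range N₀).image G with hS
  set Eset : Finset ℝ := insert (l/2) (S.filter (fun x => 0 < x)) with hE
  set Mset : Finset ℝ := insert (l+1) S with hM
  have hEne : Eset.Nonempty := ⟨l/2, Finset.mem_insert_self _ _⟩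
  have hMne : Mset.Nonempty := ⟨l+1, Finset.mem_insert_self _ _⟩
  refine ⟨Eset.min' hEne, Mset.max' hMne, ?_, ?_⟩
  · obtain ⟨x, hx, hxe⟩ : ∃ x ∈ Eset, Eset.min' hEne = x := ⟨_, Eset.min'_mem hEne, rfl⟩
    rw [hxe]
    rcases Finset.mem_insert.1 hx with rfl | hx2
    · linarith
    · exact (Finset.mem_filter.1 hx2).2
  · rintro q ⟨⟨N, hN, hq⟩, hq0, hq1⟩
    have hcast : (q:ℝ) = F N := by
      rw [hq, hF]
      push_cast
      ring_nf
    have hGN : G N = |Real.log q| := by simp only [hG, ← hcast]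
    have hqR1 : (q:ℝ) ≠ 1 := by exact_mod_cast hq1
    have hqRpos : (0:ℝ) < q := by exact_mod_cast hq0
    have hxpos : 0 < |Real.log q| := by
      rw [abs_pos]
      simp only [ne_eq, Real.log_eq_zero, not_or]
      refine ⟨by linarith, hqR1, by linarith⟩
    rcases le_or_gt N₀ N with hge | hlt
    · have := hN₀ N hge
      rw [hGN] at this
      constructor
      · have h1 : Eset.min' hEne ≤ l/2 := Finset.min'_le _ _ (Finset.mem_insert_self _ _)
        have := this.1
        linarith
      · have h2 : l+1 ≤ Mset.max' hMne := Finset.le_max' _ _ (Finset.mem_insert_self _ _)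
        have := this.2
        linarith
    · have hmemS : |Real.log q| ∈ S := by
        rw [hS, ← hGN]
        exact Finset.mem_image_of_mem G (Finset.mem_range.2 hlt)
      constructor
      · refine Finset.min'_le _ _ ?_
        exact Finset.mem_insert_of_mem (Finset.mem_filter.2 ⟨hmemS, hxpos⟩)
      · exact Finset.le_max' _ _ (Finset.mem_insert_of_mem hmemS)

lemma colorKill (R : Set ℚ) (hrec : IsTopMultRecurrent R)
    (ε M : ℝ) (hε : 0 < ε)
    (hb : ∀ q ∈ R, ε ≤ |Real.log (q:ℝ)| ∧ |Real.log (q:ℝ)| ≤ M) : False := by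
  set s : ℕ := ⌈M / ε⌉₊ + 2 with hs
  have hspos : 0 < s := by omega
  set col : ℕ+ → Fin s := fun n => ⟨⌊Real.log (n:ℕ) / ε⌋₊ % s, Nat.mod_lt _ hspos⟩ with hcol
  obtain ⟨m, n, hmn, hq⟩ := hrec s hspos col
  obtain ⟨h1, h2⟩ := hb _ hq
  have hm1 : (1:ℝ) ≤ ((m:ℕ):ℝ) := by exact_mod_cast m.one_le
  have hn1 : (1:ℝ) ≤ ((n:ℕ):ℝ) := by exact_mod_cast n.one_le
  have hlog : Real.log (((m : ℚ) / (n : ℚ) : ℚ) : ℝ) =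
      Real.log ((m:ℕ):ℝ) - Real.log ((n:ℕ):ℝ) := by
    have hcast : (((m : ℚ) / (n : ℚ) : ℚ) : ℝ) = ((m:ℕ):ℝ) / ((n:ℕ):ℝ) := by push_cast; ring
    rw [hcast, Real.log_div (by linarith) (by linarith)]
  rw [hlog] at h1 h2
  set x := Real.log ((m:ℕ):ℝ) with hx
  set y := Real.log ((n:ℕ):ℝ) with hy
  have hx0 : 0 ≤ x := Real.log_nonneg hm1
  have hy0 : 0 ≤ y := Real.log_nonneg hn1
  have hfme : ⌊x / ε⌋₊ % s = ⌊y / ε⌋₊ % s := congrArg Fin.val hmn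
  -- key symmetric argument
  have key : ∀ u v : ℝ, 0 ≤ v → ε ≤ u - v → u - v ≤ M →
      ⌊u / ε⌋₊ % s = ⌊v / ε⌋₊ % s → False := by
    intro u v hv0 hlo hhi hmod
    have h3 : u / ε - v / ε = (u - v) / ε := by ring
    have hdivlo : 1 ≤ u / ε - v / ε := by
      rw [h3, le_div_iff₀ hε]
      linarith
    have hdivhi : u / ε - v / ε ≤ (⌈M / ε⌉₊ : ℝ) := by
      rw [h3]
      calc (u - v) / ε ≤ M / ε := by gcongr
        _ ≤ (⌈M / ε⌉₊ : ℝ) := Nat.le_ceil _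
    have hfl : ⌊v / ε⌋₊ + 1 ≤ ⌊u / ε⌋₊ := by
      have h4 : ((⌊v / ε⌋₊ + 1 : ℕ) : ℝ) ≤ u / ε := by
        have h5 := Nat.floor_le (by positivity : (0:ℝ) ≤ v / ε)
        push_cast
        linarith
      exact Nat.le_floor h4
    have hfu : ⌊u / ε⌋₊ ≤ ⌊v / ε⌋₊ + ⌈M / ε⌉₊ := by
      have h5 : u / ε ≤ v / ε + (⌈M / ε⌉₊ : ℝ) := by linarith
      calc ⌊u / ε⌋₊ ≤ ⌊v / ε + (⌈M / ε⌉₊ : ℝ)⌋₊ := Nat.floor_mono h5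
        _ = ⌊v / ε⌋₊ + ⌈M / ε⌉₊ := Nat.floor_add_natCast (by positivity) _
    have hdvd : (s:ℤ) ∣ (⌊v / ε⌋₊ : ℤ) - (⌊u / ε⌋₊ : ℤ) :=
      Nat.ModEq.dvd (hmod : ⌊u / ε⌋₊ ≡ ⌊v / ε⌋₊ [MOD s])
    have hdvd' : (s:ℤ) ∣ (⌊u / ε⌋₊ : ℤ) - (⌊v / ε⌋₊ : ℤ) := (dvd_sub_comm).1 hdvd
    have hpos : (0:ℤ) < (⌊u / ε⌋₊ : ℤ) - (⌊v / ε⌋₊ : ℤ) := by omega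
    have hle := Int.le_of_dvd hpos hdvd'
    omega
  rcases le_total y x with hxy | hxy
  · have habs : |x - y| = x - y := abs_of_nonneg (by linarith)
    rw [habs] at h1 h2
    exact key x y hy0 h1 h2 hfme
  · have habs : |x - y| = y - x := by
      rw [abs_of_nonpos (by linarith : x - y ≤ 0)]; ring
    rw [habs] at h1 h2
    exact key y x hx0 h1 h2 hfme.symm

lemma partB (a : ℕ) (ha : 0 < a) (b d : ℤ)
    (hne : (Rset a a b d).Nonempty) (hrec : IsTopMultRecurrent (Rset a a b d)) :
    (a:ℤ) ∣ lcm b d := by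
  -- b ≠ d
  have hbd : b ≠ d := by
    obtain ⟨q, ⟨⟨N, hN, hq⟩, hq0, hq1⟩⟩ := hne
    intro h; rw [h] at hq
    rcases eq_or_ne ((a:ℚ)*N + (d:ℚ)) 0 with h0 | h0
    · rw [hq, h0, div_zero] at hq0; exact lt_irrefl _ hq0
    · rw [hq, div_self h0] at hq1; exact hq1 rfl
  rcases eq_or_ne b 0 with rfl | hb
  · simp
  rcases eq_or_ne d 0 with rfl | hd
  · simp
  by_contra hdvd
  -- pass to ℕ
  have hbn : b.natAbs ≠ 0 := Int.natAbs_ne_zero.2 hb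
  have hdn : d.natAbs ≠ 0 := Int.natAbs_ne_zero.2 hd
  have hLn : Nat.lcm b.natAbs d.natAbs ≠ 0 := Nat.lcm_ne_zero hbn hdn
  have h1 : ¬ (a ∣ Nat.lcm b.natAbs d.natAbs) := by
    intro h
    apply hdvd
    have h2 : (a:ℤ) ∣ (Nat.lcm b.natAbs d.natAbs : ℤ) := Int.natCast_dvd_natCast.2 h
    rwa [← Int.lcm_def, Int.coe_lcm] at h2
  rw [← Nat.factorization_le_iff_dvd ha.ne' hLn, Finsupp.le_def] at h1
  push_neg at h1
  obtain ⟨p, hp⟩ := h1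
  have hpp : p.Prime := by
    by_contra hnp
    rw [Nat.factorization_eq_zero_of_not_prime a hnp] at hp
    omega
  set k := a.factorization p with hk
  set β := b.natAbs.factorization p with hβ
  set δ := d.natAbs.factorization p with hδ
  have hmax : (Nat.lcm b.natAbs d.natAbs).factorization p = max β δ := by
    rw [Nat.factorization_lcm hbn hdn]; rfl
  rw [hmax] at hp
  have hβk : β < k := lt_of_le_of_lt (le_max_left _ _) hp
  have hδk : δ < k := lt_of_le_of_lt (le_max_right _ _) hp
  -- coloring setup
  have hbd0 : b - d ≠ 0 := sub_ne_zero.2 hbd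
  set L := (b - d).natAbs.factorization p + 1 with hL
  set P := p ^ L with hP
  have hPpos : 0 < P := pow_pos hpp.pos L
  set T := ((β:ℤ) - (δ:ℤ)).natAbs + 1 with hT
  have hTpos : 0 < T := Nat.succ_pos _
  set col : ℕ+ → Fin (T * P) := fun n =>
    ⟨(n.val.factorization p % T) * P + (n.val / p ^ (n.val.factorization p)) % P, by
      have h1 : n.val.factorization p % T < T := Nat.mod_lt _ hTpos
      have h2 : (n.val / p ^ (n.val.factorization p)) % P < P := Nat.mod_lt _ hPpos
      calc (n.val.factorization p % T) * P + (n.val / p ^ (n.val.factorization p)) % P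
          < (n.val.factorization p % T) * P + P := by omega
        _ = (n.val.factorization p % T + 1) * P := by ring
        _ ≤ T * P := Nat.mul_le_mul_right _ (by omega)⟩ with hcoldef
  obtain ⟨m, n, hmn, hq⟩ := hrec (T * P) (Nat.mul_pos hTpos hPpos) col
  obtain ⟨⟨N, hN, hqeq⟩, hq0, hq1⟩ := hq
  -- denominators/numerators nonzero
  have hYq : ((a:ℚ) * N + (d:ℚ)) ≠ 0 := by
    intro h0
    rw [h0, div_zero] at hqeq
    rw [hqeq] at hq0; exact lt_irrefl _ hq0
  have hXq : ((a:ℚ) * N + (b:ℚ)) ≠ 0 := by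
    intro h0
    rw [h0, zero_div] at hqeq
    rw [hqeq] at hq0; exact lt_irrefl _ hq0
  have hnq : ((n:ℕ):ℚ) ≠ 0 := Nat.cast_ne_zero.2 n.pos.ne'
  have hcross : ((m:ℕ):ℚ) * ((a:ℚ)*N + (d:ℚ)) = ((a:ℚ)*N + (b:ℚ)) * ((n:ℕ):ℚ) := by
    rw [div_eq_div_iff hnq hYq] at hqeq
    exact hqeq
  have key : ((m:ℕ):ℤ) * ((a:ℤ)*N + d) = ((n:ℕ):ℤ) * ((a:ℤ)*N + b) := by
    have h2 : ((((m:ℕ):ℤ) * ((a:ℤ)*N + d) : ℤ) : ℚ) = ((((n:ℕ):ℤ) * ((a:ℤ)*N + b) : ℤ) : ℚ) := by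
      push_cast
      push_cast at hcross
      linarith [hcross]
    exact_mod_cast h2
  -- exact valuations of aN+b and aN+d
  have hpa : (p:ℤ)^k ∣ (a:ℤ) := by
    have := Nat.ordProj_dvd a p
    exact_mod_cast Int.natCast_dvd_natCast.2 this
  have hdvdY : (p:ℤ)^(δ+1) ∣ (a:ℤ)*N :=
    dvd_mul_of_dvd_left (dvd_trans (pow_dvd_pow _ hδk) hpa) _
  have hdvdX : (p:ℤ)^(β+1) ∣ (a:ℤ)*N :=
    dvd_mul_of_dvd_left (dvd_trans (pow_dvd_pow _ hβk) hpa) _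
  obtain ⟨hYne, hYv⟩ := nu_add hpp hd hdvdY hδ.symm
  obtain ⟨hXne, hXv⟩ := nu_add hpp hb hdvdX hβ.symm
  have hmZ : ((m:ℕ):ℤ) ≠ 0 := Int.natCast_ne_zero.2 m.pos.ne'
  have hnZ : ((n:ℕ):ℤ) ≠ 0 := Int.natCast_ne_zero.2 n.pos.ne'
  set um := (m:ℕ).factorization p with hum
  set un := (n:ℕ).factorization p with hun
  set vm := (m:ℕ) / p ^ um with hvm
  set vn := (n:ℕ) / p ^ un with hvn
  -- valuation balance
  have hval : um + δ = un + β := by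
    have h1 := nu_mul p hmZ hYne
    have h2 := nu_mul p hnZ hXne
    rw [key] at h1
    rw [h2] at h1
    rw [hYv, hXv] at h1
    simpa [Int.natAbs_natCast] using h1.symm
  -- decompose color equality
  have hcv : (um % T) * P + vm % P = (un % T) * P + vn % P := congrArg Fin.val hmn
  have hmodP : vm % P = vn % P := by
    have h1 : (vm % P + um % T * P) % P = (vn % P + un % T * P) % P := by
      rw [add_comm (vm % P), add_comm (vn % P)]; exact congrArg (· % P) hcv
    rwa [Nat.add_mul_mod_self_right, Nat.add_mul_mod_self_right,
      Nat.mod_mod_of_dvd _ dvd_rfl, Nat.mod_mod_of_dvd _ dvd_rfl] at h1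
  have hmodT : um % T = un % T := by
    have h1 : (um % T) * P = (un % T) * P := by omega
    exact Nat.eq_of_mul_eq_mul_right hPpos h1
  rcases eq_or_ne β δ with heq | hne2
  · -- β = δ: p-adic closeness contradiction
    have humun : um = un := by omega
    have hmfac : (m:ℕ) = p ^ um * vm := (Nat.ordProj_mul_ordCompl_eq_self (m:ℕ) p).symm
    have hnfac : (n:ℕ) = p ^ un * vn := (Nat.ordProj_mul_ordCompl_eq_self (n:ℕ) p).symm
    have hpvm : ¬ p ∣ vm := Nat.not_dvd_ordCompl hpp m.pos.ne'
    have hpvn : ¬ p ∣ vn := Nat.not_dvd_ordCompl hpp n.pos.ne'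
    have hvnne : vn ≠ 0 := (Nat.ordCompl_pos p n.pos.ne').ne'
    have hm' : ((m:ℕ):ℤ) = (p:ℤ)^um * vm := by exact_mod_cast congrArg (Nat.cast (R := ℤ)) hmfac
    have hn' : ((n:ℕ):ℤ) = (p:ℤ)^um * vn := by
      rw [humun] at *
      exact_mod_cast congrArg (Nat.cast (R := ℤ)) hnfac
    rw [hm', hn', mul_assoc, mul_assoc] at key
    have hkey2 : (vm:ℤ) * ((a:ℤ)*N + d) = (vn:ℤ) * ((a:ℤ)*N + b) :=
      mul_left_cancel₀ (pow_ne_zero um (Int.natCast_ne_zero.2 hpp.pos.ne')) key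
    have hvnZ : (vn:ℤ) ≠ 0 := Int.natCast_ne_zero.2 hvnne
    have hvmn : (vm:ℤ) - vn ≠ 0 := by
      intro hEq
      have hvv : (vm:ℤ) = vn := by omega
      rw [hvv] at hkey2
      have := mul_left_cancel₀ hvnZ hkey2
      have : b = d := by omega
      exact hbd this
    have hdiff : ((P:ℕ):ℤ) ∣ (vm:ℤ) - vn := by
      have h1 : vn ≡ vm [MOD P] := hmodP.symm
      exact h1.dvd
    have hE : ((vm:ℤ) - vn) * ((a:ℤ)*N + d) = (vn:ℤ) * (b - d) := by
      linear_combination hkey2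
    have hRne : (vn:ℤ) * (b - d) ≠ 0 := mul_ne_zero hvnZ hbd0
    have h2 := nu_mul p hvmn hYne
    rw [hE] at h2
    have h3 := nu_mul p hvnZ hbd0
    rw [h3] at h2
    have hvn0 : (vn:ℤ).natAbs.factorization p = 0 := by
      rw [Int.natAbs_natCast]; exact Nat.factorization_eq_zero_of_not_dvd hpvn
    have hge : L ≤ ((vm:ℤ) - vn).natAbs.factorization p := by
      refine (int_pow_dvd_iff hpp hvmn L).1 ?_
      have : ((P:ℕ):ℤ) = (p:ℤ)^L := by push_cast [hP]; ring
      rwa [this] at hdiff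
    rw [hvn0] at h2
    omega
  · -- β ≠ δ: valuation jump contradiction
    have hTd : (T:ℤ) ∣ (un:ℤ) - um := (Nat.ModEq.dvd (hmodT : um ≡ un [MOD T]))
    have hx0 : ((β:ℤ) - δ) ≠ 0 := by
      intro h; apply hne2; omega
    have hrw : (un:ℤ) - um = -((β:ℤ) - δ) := by push_cast; omega
    rw [hrw, dvd_neg] at hTd
    have hTd2 : (T:ℤ) ∣ ((((β:ℤ) - δ).natAbs : ℕ) : ℤ) := Int.dvd_natAbs.2 hTd
    have hle : (T:ℤ) ≤ (((β:ℤ) - δ).natAbs : ℤ) := by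
      refine Int.le_of_dvd ?_ hTd2
      exact_mod_cast Nat.pos_of_ne_zero (fun h => hx0 (Int.natAbs_eq_zero.1 h))
    have : T ≤ ((β:ℤ) - δ).natAbs := by exact_mod_cast hle
    omega

theorem top_recurrence_implies_divisibility
    (a c : ℕ) (ha : 0 < a) (hc : 0 < c) (b d : ℤ)
    (hne : (Rset a c b d).Nonempty) (hrec : IsTopMultRecurrent (Rset a c b d)) :
    a = c ∧ (a : ℤ) ∣ lcm b d := by
  have hac : a = c := by
    by_contra h
    obtain ⟨ε, M, hε, hb'⟩ := boundedAway a c ha hc h b d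
    exact (colorKill _ hrec ε M hε hb').elim
  subst hac
  exact ⟨rfl, partB a ha b d hne hrec⟩
end

section
/- Let r, a be positive integers and b, d be integers with a dividing lcm(b, d). Then for all completely multiplicative unimodular functions f_1, ..., f_r and every ε > 0, there exist infinitely many positive integers n with a n + b ≥ 1, a n + d ≥ 1, and max_{1 ≤ j ≤ r} |f_j(a n + b) − f_j(a n + d)| < ε; that is, liminf_{n → ∞} max_{1 ≤ j ≤ r} |f_j(a n + b) − f_j(a n + d)| = 0. -/
open MeasureTheory Filter

/-- `f` is completely multiplicative and unimodular on the positive integers. -/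
def CompMultUnimodular (f : ℕ → ℂ) : Prop :=
  (∀ n : ℕ, 1 ≤ n → ‖f n‖ = 1) ∧
  (∀ m n : ℕ, 1 ≤ m → 1 ≤ n → f (m * n) = f m * f n)

/-!
Write `Δ = d - b`. If `x < y` are integers with `x ≡ b (mod a)` and `a (y - x) ∣ x (x + Δ)`,
then `(y - x)(a n + b) = x (y + Δ)` and `(y - x)(a n + d) = (x + Δ) y` for some `n`, and complete
multiplicativity together with `|f| = 1` gives
`|f(a n + b) - f(a n + d)| = |f(x) f̄(x + Δ) - f(y) f̄(y + Δ)|`.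
By pigeonhole in the compact polydisc, two of the vectors `(f_j(x) f̄_j(x + Δ))_j` are `ε`-close
as soon as there are enough such `x`, so it suffices to produce arbitrarily large sets of them.
Take `{β + a s : s ∈ S}`, where `a (t - s) ∣ s` for all `s < t` in `S`: modulo `a (y - x)` every
`x (x + Δ)` is then `β (β + Δ)`. Writing `a = a₁ a₂` with `a₁ ∣ b`, `a₂ ∣ d` coprime (this is
where `a ∣ lcm b d` enters), choose `β ≡ 0 (mod P)` and `β ≡ -Δ (mod Q)` for coprime multiples
`P` of `a₁` and `Q` of `a₂` with `a² ∏ S ∣ P Q`.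
-/

open ComplexConjugate

theorem TotallyBounded.exists_ne_dist_lt {X : Type*} [PseudoMetricSpace X] {K : Set X}
    (hK : TotallyBounded K) {ε : ℝ} (hε : 0 < ε) :
    ∃ R : ℕ, ∀ {ι : Type*} (S : Finset ι) (v : ι → X), R < S.card → (∀ i ∈ S, v i ∈ K) →
      ∃ i ∈ S, ∃ j ∈ S, i ≠ j ∧ dist (v i) (v j) < ε := by
  obtain ⟨t, ht, hKt⟩ := Metric.totallyBounded_iff.1 hK (ε / 2) (half_pos hε)
  refine ⟨ht.toFinset.card, fun S v hcard hv => ?_⟩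
  obtain ⟨i₀, -⟩ := S.card_pos.1 (Nat.zero_lt_of_lt hcard)
  have : Nonempty X := ⟨v i₀⟩
  have hnet : ∀ i ∈ S, ∃ y ∈ ht.toFinset, dist (v i) y < ε / 2 := fun i hi => by
    simpa using hKt (hv i hi)
  choose! g hgt hg using hnet
  obtain ⟨i, hi, j, hj, hij, hgij⟩ := Finset.exists_ne_map_eq_of_card_lt_of_maps_to hcard hgt
  refine ⟨i, hi, j, hj, hij, ?_⟩
  calc dist (v i) (v j) ≤ dist (v i) (g i) + dist (v j) (g j) := by
        rw [hgij]; exact dist_triangle_right _ _ _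
    _ < ε / 2 + ε / 2 := add_lt_add (hg i hi) (hg j hj)
    _ = ε := add_halves ε

theorem Nat.exists_coprime_mul_eq_of_dvd_lcm {a B D : ℕ} (h : a ∣ Nat.lcm B D) :
    ∃ P Q : ℕ, Nat.Coprime P Q ∧ P ∣ B ∧ Q ∣ D ∧ P * Q = a := by
  rcases eq_or_ne B 0 with rfl | hB
  · exact ⟨a, 1, Nat.coprime_one_right a, dvd_zero a, one_dvd D, mul_one a⟩
  rcases eq_or_ne D 0 with rfl | hD
  · exact ⟨1, a, Nat.coprime_one_left a, one_dvd B, dvd_zero a, one_mul a⟩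
  have hLR := Nat.coprime_factorizationLCMLeft_factorizationLCMRight B D
  refine ⟨_, _, hLR.gcd_both a a,
    (Nat.gcd_dvd_right _ _).trans (Nat.factorizationLCMLeft_dvd_left B D),
    (Nat.gcd_dvd_right _ _).trans (Nat.factorizationLCMRight_dvd_right B D), ?_⟩
  rw [← hLR.gcd_mul, Nat.factorizationLCMLeft_mul_factorizationLCMRight hB hD, Nat.gcd_eq_left h]

theorem Nat.Coprime.exists_coprime_dvd_dvd_mul_eq {P₀ Q₀ M : ℕ} (h : Nat.Coprime P₀ Q₀)
    (hM : M ≠ 0) : ∃ P Q : ℕ, Nat.Coprime P Q ∧ P₀ ∣ P ∧ Q₀ ∣ Q ∧ P * Q = P₀ * Q₀ * M := by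
  induction M using induction_on_primes with
  | zero => exact absurd rfl hM
  | one => exact ⟨P₀, Q₀, h, dvd_rfl, dvd_rfl, (mul_one _).symm⟩
  | prime_mul p M hp ih =>
    obtain ⟨P, Q, hPQ, hP, hQ, hPQM⟩ := ih (right_ne_zero_of_mul hM)
    by_cases hpQ : p ∣ Q
    · refine ⟨P, p * Q, Nat.Coprime.mul_right (hPQ.coprime_dvd_right hpQ) hPQ, hP,
        hQ.mul_left p, ?_⟩
      rw [mul_left_comm, hPQM]; ring
    · refine ⟨p * P, Q, Nat.Coprime.mul_left ((Nat.Prime.coprime_iff_not_dvd hp).2 hpQ) hPQ,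
        hP.mul_left p, hQ, ?_⟩
      rw [mul_assoc, hPQM]; ring

theorem IsCoprime.exists_gt_dvd_sub_dvd_sub {P Q : ℤ} (h : IsCoprime P Q) (hPQ : P * Q ≠ 0)
    (r s B : ℤ) : ∃ β, B < β ∧ P ∣ β - r ∧ Q ∣ β - s := by
  obtain ⟨u, v, huv⟩ := h
  set β₀ := r * (v * Q) + s * (u * P)
  set k := |B - β₀| + 1
  have hk : B - β₀ < k := lt_of_le_of_lt (le_abs_self _) (lt_add_one _)
  have hPQk : k ≤ (P * Q) ^ 2 * k :=
    le_mul_of_one_le_left (by positivity) (by positivity : 0 < (P * Q) ^ 2)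
  refine ⟨β₀ + (P * Q) ^ 2 * k, by linarith, ⟨(s - r) * u + P * Q ^ 2 * k, ?_⟩,
    ⟨(r - s) * v + P ^ 2 * Q * k, ?_⟩⟩
  · linear_combination r * huv
  · linear_combination s * huv

theorem exists_finset_card_eq_mul_sub_dvd {a : ℕ} (ha : 0 < a) (R : ℕ) :
    ∃ S : Finset ℕ, S.card = R ∧ 0 ∉ S ∧ ∀ s ∈ S, ∀ t ∈ S, s < t → a * (t - s) ∣ s := by
  induction R with
  | zero => exact ⟨∅, rfl, Finset.notMem_empty 0, by simp⟩
  | succ R ih =>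
    obtain ⟨S, hcard, h0, hS⟩ := ih
    have hpos : ∀ s ∈ S, 0 < s := fun s hs => Nat.pos_of_ne_zero (ne_of_mem_of_not_mem hs h0)
    set L := a * ∏ s ∈ S, s
    have hL : 0 < L := Nat.mul_pos ha (Finset.prod_pos hpos)
    have hdvdL : ∀ s ∈ S, a * s ∣ L := fun s hs =>
      mul_dvd_mul_left a (Finset.dvd_prod_of_mem _ hs)
    have hLS : L ∉ S.map (addLeftEmbedding L) := by
      simpa using fun s hs => (hpos s hs).ne'
    refine ⟨insert L (S.map (addLeftEmbedding L)), ?_, ?_, ?_⟩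
    · rw [Finset.card_insert_of_notMem hLS, Finset.card_map, hcard]
    · simp only [Finset.mem_insert, Finset.mem_map, addLeftEmbedding_apply, not_or, not_exists,
        not_and]
      exact ⟨hL.ne, fun s _ => by omega⟩
    · simp only [Finset.mem_insert, Finset.mem_map, addLeftEmbedding_apply]
      rintro _ (rfl | ⟨s, hs, rfl⟩) _ (rfl | ⟨t, ht, rfl⟩) hst
      · exact absurd hst (lt_irrefl _)
      · rw [Nat.add_sub_cancel_left]; exact hdvdL t ht
      · omega
      · rw [Nat.add_sub_add_left]
        have hts : a * (t - s) ∣ s := hS s hs t ht (by omega)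
        exact dvd_add ((hts.trans (dvd_mul_left s a)).trans (hdvdL s hs)) hts

theorem exists_gt_dvd_sub_mul_dvd_mul_add {a : ℕ} (ha : 0 < a) {b d : ℤ}
    (hdvd : (a : ℤ) ∣ lcm b d) {M : ℕ} (hM : M ≠ 0) (B : ℤ) :
    ∃ β, B < β ∧ (a : ℤ) ∣ β - b ∧ (a : ℤ) * M ∣ β * (β + (d - b)) := by
  have hlcm : a ∣ Int.lcm b d := by rw [← Int.natCast_dvd_natCast, Int.coe_lcm]; exact hdvd
  obtain ⟨P₀, Q₀, hPQ₀, hP₀, hQ₀, hPQa⟩ := Nat.exists_coprime_mul_eq_of_dvd_lcm hlcm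
  obtain ⟨P, Q, hPQ, hP₀P, hQ₀Q, hPQM⟩ := hPQ₀.exists_coprime_dvd_dvd_mul_eq hM
  rw [hPQa] at hPQM
  obtain ⟨β, hβ, hPβ, hQβ⟩ := (Nat.isCoprime_iff_coprime.2 hPQ).exists_gt_dvd_sub_dvd_sub
    (by rw [← Nat.cast_mul, hPQM]; exact_mod_cast mul_ne_zero ha.ne' hM) 0 (b - d) B
  rw [sub_zero] at hPβ
  rw [sub_sub_eq_add_sub, add_sub_assoc] at hQβ
  refine ⟨β, hβ, ?_, by rw [← Nat.cast_mul, ← hPQM, Nat.cast_mul]; exact mul_dvd_mul hPβ hQβ⟩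
  rw [← hPQa, Nat.cast_mul]
  refine (Nat.isCoprime_iff_coprime.2 hPQ₀).mul_dvd ?_ ?_
  · exact dvd_sub ((Int.natCast_dvd_natCast.2 hP₀P).trans hPβ) (Int.natCast_dvd.2 hP₀)
  · have := dvd_sub ((Int.natCast_dvd_natCast.2 hQ₀Q).trans hQβ) (Int.natCast_dvd.2 hQ₀)
    rwa [show β + (d - b) - d = β - b by ring] at this

theorem exists_finset_card_eq_mul_sub_dvd_mul_add {a : ℕ} (ha : 0 < a) {b d : ℤ}
    (hdvd : (a : ℤ) ∣ lcm b d) (R : ℕ) (B : ℤ) :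
    ∃ S : Finset ℤ, S.card = R ∧ (∀ x ∈ S, B < x ∧ B < x + (d - b) ∧ (a : ℤ) ∣ x - b) ∧
      ∀ x ∈ S, ∀ y ∈ S, x < y → (a : ℤ) * (y - x) ∣ x * (x + (d - b)) := by
  obtain ⟨T, hcard, hT0, hT⟩ := exists_finset_card_eq_mul_sub_dvd ha R
  have hM : a * ∏ s ∈ T, s ≠ 0 :=
    mul_ne_zero ha.ne' (Finset.prod_ne_zero_iff.2 fun s hs => ne_of_mem_of_not_mem hs hT0)
  obtain ⟨β, hβ, hβb, hMβ⟩ := exists_gt_dvd_sub_mul_dvd_mul_add ha hdvd hM (B + |d - b|)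
  have hinj : Function.Injective fun s : ℕ => β + a * s := fun s t h => by
    simpa [ha.ne'] using h
  refine ⟨T.map ⟨_, hinj⟩, by rw [Finset.card_map, hcard], ?_, ?_⟩
  · simp only [Finset.mem_map, Function.Embedding.coeFn_mk, forall_exists_index, and_imp]
    rintro _ s - rfl
    have : (0 : ℤ) ≤ a * s := by positivity
    refine ⟨by linarith [abs_nonneg (d - b)], by linarith [neg_abs_le (d - b)], ?_⟩
    rw [add_sub_right_comm]
    exact dvd_add hβb (dvd_mul_right _ _)
  · simp only [Finset.mem_map, Function.Embedding.coeFn_mk, forall_exists_index, and_imp]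
    rintro _ s hs rfl _ t ht rfl hlt
    have hst : s < t := by
      exact_mod_cast lt_of_mul_lt_mul_left (add_lt_add_iff_left β |>.1 hlt) (Int.natCast_nonneg a)
    have hts : a * (t - s) ∣ s := hT s hs t ht hst
    rw [show β + a * t - (β + a * s) = ((a * (t - s) : ℕ) : ℤ) by push_cast [hst.le]; ring,
      show (β + a * s) * (β + a * s + (d - b))
        = β * (β + (d - b)) + a * s * (2 * β + (d - b) + a * s) by ring]
    refine dvd_add (Dvd.dvd.trans ?_ hMβ) ?_
    · exact_mod_cast mul_dvd_mul_left a
        (mul_dvd_mul_left a (((dvd_mul_left _ a).trans hts).trans (Finset.dvd_prod_of_mem _ hs)))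
    · exact (mul_dvd_mul_left (a : ℤ) (Int.natCast_dvd_natCast.2 hts)).mul_right _

theorem exists_gt_mul_eq_mul_of_dvd {a : ℕ} {b d x y : ℤ} (m : ℕ) (hx : 0 < x)
    (hxΔ : 0 < x + (d - b)) (hxm : a * m + b < x) (hxb : (a : ℤ) ∣ x - b)
    (hdvd : (a : ℤ) * (y - x) ∣ x * (x + (d - b))) (hxy : x < y) :
    ∃ n : ℕ, m < n ∧ 0 < (a : ℤ) * n + b ∧ 0 < (a : ℤ) * n + d ∧
      x * (y + (d - b)) = (y - x) * (a * n + b) ∧ (x + (d - b)) * y = (y - x) * (a * n + d) := by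
  obtain ⟨k, hk⟩ := hxb
  obtain ⟨w, hw⟩ := hdvd
  have hmk : (m : ℤ) < k := lt_of_mul_lt_mul_left (by linarith) (Int.natCast_nonneg a)
  have hyx : 0 < y - x := sub_pos.2 hxy
  have hw0 : 0 < w := pos_of_mul_pos_right (hw ▸ mul_pos hx hxΔ)
    (mul_nonneg (Int.natCast_nonneg a) hyx.le)
  lift k to ℕ using by omega
  lift w to ℕ using hw0.le
  have h₁ : x * (y + (d - b)) = (y - x) * (a * (k + w : ℕ) + b) := by
    push_cast; linear_combination hw + (y - x) * hk
  have h₂ : (x + (d - b)) * y = (y - x) * (a * (k + w : ℕ) + d) := by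
    push_cast; linear_combination hw + (y - x) * hk
  exact ⟨k + w, by omega, pos_of_mul_pos_right (h₁ ▸ mul_pos hx (by linarith)) hyx.le,
    pos_of_mul_pos_right (h₂ ▸ mul_pos hxΔ (by linarith)) hyx.le, h₁, h₂⟩

theorem CompMultUnimodular.norm_sub_eq {f : ℕ → ℂ} (hf : CompMultUnimodular f)
    {p q p' q' e n₁ n₂ : ℕ} (hp : 1 ≤ p) (hq : 1 ≤ q) (hp' : 1 ≤ p') (hq' : 1 ≤ q')
    (h₁ : p * q' = e * n₁) (h₂ : q * p' = e * n₂) :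
    ‖f n₁ - f n₂‖ = ‖f p * conj (f q) - f p' * conj (f q')‖ := by
  obtain ⟨he, hn₁⟩ := Nat.mul_ne_zero_iff.1 (h₁ ▸ (Nat.mul_pos hp hq').ne')
  have hn₂ : n₂ ≠ 0 := right_ne_zero_of_mul (h₂ ▸ (Nat.mul_pos hq hp').ne')
  have hconj : ∀ n, 1 ≤ n → conj (f n) * f n = 1 := fun n hn => by
    rw [Complex.conj_mul', hf.1 n hn]; norm_num
  calc ‖f n₁ - f n₂‖ = ‖f e * (f n₁ - f n₂)‖ := by
        rw [norm_mul, hf.1 e (Nat.one_le_iff_ne_zero.2 he), one_mul]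
    _ = ‖f p * f q' - f q * f p'‖ := by
        rw [mul_sub, ← hf.2 _ _ (Nat.one_le_iff_ne_zero.2 he) (Nat.one_le_iff_ne_zero.2 hn₁),
          ← hf.2 _ _ (Nat.one_le_iff_ne_zero.2 he) (Nat.one_le_iff_ne_zero.2 hn₂), ← h₁, ← h₂,
          hf.2 _ _ hp hq', hf.2 _ _ hq hp']
    _ = ‖(f p * conj (f q) - f p' * conj (f q')) * (f q * f q')‖ := by
        congr 1
        linear_combination (-(f p * f q')) * hconj q hq + f p' * f q * hconj q' hq'
    _ = ‖f p * conj (f q) - f p' * conj (f q')‖ := by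
        rw [norm_mul, norm_mul, hf.1 q hq, hf.1 q' hq', mul_one, mul_one]

theorem CompMultUnimodular.norm_sub_toNat_eq {f : ℕ → ℂ} (hf : CompMultUnimodular f)
    {p q p' q' e n₁ n₂ : ℤ} (hp : 0 < p) (hq : 0 < q) (hp' : 0 < p') (hq' : 0 < q') (he : 0 < e)
    (h₁ : p * q' = e * n₁) (h₂ : q * p' = e * n₂) :
    ‖f n₁.toNat - f n₂.toNat‖ =
      ‖f p.toNat * conj (f q.toNat) - f p'.toNat * conj (f q'.toNat)‖ := by
  have hn₁ : 0 ≤ n₁ := (pos_of_mul_pos_right (h₁ ▸ mul_pos hp hq') he.le).le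
  have hn₂ : 0 ≤ n₂ := (pos_of_mul_pos_right (h₂ ▸ mul_pos hq hp') he.le).le
  refine hf.norm_sub_eq (e := e.toNat) (by omega) (by omega) (by omega) (by omega) ?_ ?_
  · rw [← Int.toNat_mul hp.le hq'.le, h₁, Int.toNat_mul he.le hn₁]
  · rw [← Int.toNat_mul hq.le hp'.le, h₂, Int.toNat_mul he.le hn₂]

theorem simultaneous_diophantine_approximation_general
    (r a : ℕ) (ha : 0 < a) (b d : ℤ) (hdvd : (a : ℤ) ∣ lcm b d)
    (f : Fin r → ℕ → ℂ) (hf : ∀ j, CompMultUnimodular (f j)) (ε : ℝ) (hε : 0 < ε) :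
    {n : ℕ | 1 ≤ n ∧ 1 ≤ (a : ℤ) * n + b ∧ 1 ≤ (a : ℤ) * n + d ∧
      ∀ j, ‖f j (((a : ℤ) * n + b).toNat) - f j (((a : ℤ) * n + d).toNat)‖
        < ε}.Infinite := by
  refine Set.infinite_of_forall_exists_gt fun m => ?_
  obtain ⟨R, hR⟩ := (isCompact_closedBall (0 : Fin r → ℂ) 1).totallyBounded.exists_ne_dist_lt hε
  obtain ⟨S, hcard, hS, hchain⟩ :=
    exists_finset_card_eq_mul_sub_dvd_mul_add ha hdvd (R + 1) (a * m + |b|)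
  have hpos : ∀ x ∈ S, 0 < x ∧ 0 < x + (d - b) := fun x hx => by
    obtain ⟨h₁, h₂, -⟩ := hS x hx
    constructor <;> nlinarith [abs_nonneg b]
  set v : ℤ → Fin r → ℂ := fun x j => f j x.toNat * conj (f j (x + (d - b)).toNat)
  have hv : ∀ x ∈ S, v x ∈ Metric.closedBall 0 1 := fun x hx => by
    obtain ⟨hx₀, hxΔ⟩ := hpos x hx
    rw [mem_closedBall_zero_iff, pi_norm_le_iff_of_nonneg zero_le_one]
    intro j
    rw [norm_mul, Complex.norm_conj, (hf j).1 _ (by omega), (hf j).1 _ (by omega), mul_one]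
  obtain ⟨x, hx, y, hy, hxy, hdist⟩ := hR S v (by omega) hv
  wlog hlt : x < y generalizing x y
  · exact this y hy x hx hxy.symm (by rwa [dist_comm]) (hxy.lt_or_gt.resolve_left hlt)
  obtain ⟨n, hmn, hb, hd, h₁, h₂⟩ := exists_gt_mul_eq_mul_of_dvd m (hpos x hx).1 (hpos x hx).2
    (by linarith [le_abs_self b, (hS x hx).1]) (hS x hx).2.2 (hchain x hx y hy hlt) hlt
  refine ⟨n, ⟨by omega, hb, hd, fun j => ?_⟩, hmn⟩
  rw [(hf j).norm_sub_toNat_eq (hpos x hx).1 (hpos x hx).2 (hpos y hy).1 (hpos y hy).2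
    (sub_pos.2 hlt) h₁ h₂]
  exact lt_of_le_of_lt (by rw [← dist_eq_norm]; exact dist_le_pi_dist (v x) (v y) j) hdist

theorem simultaneous_diophantine_approximation
    (r a : ℕ) (hr : 0 < r) (ha : 0 < a) (b d : ℤ) (hdvd : (a : ℤ) ∣ lcm b d)
    (f : Fin r → ℕ → ℂ) (hf : ∀ j, CompMultUnimodular (f j)) (ε : ℝ) (hε : 0 < ε) :
    {n : ℕ | 1 ≤ n ∧ 1 ≤ (a : ℤ) * n + b ∧ 1 ≤ (a : ℤ) * n + d ∧
      ∀ j, ‖f j (((a : ℤ) * n + b).toNat) - f j (((a : ℤ) * n + d).toNat)‖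
        < ε}.Infinite :=
  simultaneous_diophantine_approximation_general r a ha b d hdvd f hf ε hε
end

section
/- Let a, c be positive integers with a ≠ c and b, d be integers. Suppose α, β are real numbers with 1 < α < β such that every element of R_{a,b,c,d} lies in (β^{-1}, α^{-1}) ∪ (α, β). Then the chromatic number of the graph G_{a,b,c,d} is at most ⌈log(αβ)/log(α)⌉. -/
open MeasureTheory Filter

/-- The graph `G(R)` on the positive integers where distinct `m`, `n` are adjacent
iff `m/n ∈ R` or `n/m ∈ R`. -/
def graphOf (R : Set ℚ) : SimpleGraph ℕ+ where
  Adj m n := m ≠ n ∧ (((m : ℚ) / (n : ℚ)) ∈ R ∨ ((n : ℚ) / (m : ℚ)) ∈ R)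
  symm := ⟨fun _ _ h => ⟨h.1.symm, h.2.symm⟩⟩
  loopless := ⟨fun _ h => h.1 rfl⟩

/-!
Colour `n` by `⌊log_α n⌋ mod k`, where `k = ⌈log_α (αβ)⌉`. If `m` and `n` are adjacent, then,
after swapping them if necessary, `α < m/n < β`, so `log_α m - log_α n` lies in `(1, log_α β)`.
Hence the floors differ by at least `1` and by less than `1 + log_α β = log_α (αβ) ≤ k`, so they
are distinct modulo `k`.
-/

open Set Real

theorem SimpleGraph.colorable_of_abs_sub_lt {V : Type*} (G : SimpleGraph V) {k : ℕ} (hk : 0 < k)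
    (f : V → ℤ) (hf : ∀ u v, G.Adj u v → 0 < |f u - f v| ∧ |f u - f v| < k) : G.Colorable k := by
  have : NeZero k := ⟨hk.ne'⟩
  have C : G.Coloring (ZMod k) := .mk (fun v => (f v : ZMod k)) fun {u v} huv heq => by
    obtain ⟨hpos, hlt⟩ := hf u v huv
    have hdvd : (k : ℤ) ∣ f u - f v := (ZMod.intCast_eq_intCast_iff_dvd_sub _ _ _).1 heq.symm
    exact hpos.ne' (abs_eq_zero.2 (Int.eq_zero_of_abs_lt_dvd hdvd hlt))
  simpa [ZMod.card] using C.colorable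

theorem Int.floor_sub_floor_pos_and_lt {u v : ℝ} (h : 1 ≤ u - v) :
    0 < ⌊u⌋ - ⌊v⌋ ∧ ((⌊u⌋ - ⌊v⌋ : ℤ) : ℝ) < u - v + 1 := by
  have hle : ⌊v⌋ + 1 ≤ ⌊u⌋ := Int.le_floor.2 (by push_cast; linarith [Int.floor_le v])
  refine ⟨by omega, ?_⟩
  push_cast
  linarith [Int.floor_le u, Int.sub_one_lt_floor v]

theorem floor_logb_sub_floor_logb_pos_and_lt {α β x y : ℝ} (hα : 1 < α) (hx : 0 < x) (hy : 0 < y)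
    (hxy : x / y ∈ Ioo α β) :
    0 < ⌊logb α x⌋ - ⌊logb α y⌋ ∧ ((⌊logb α x⌋ - ⌊logb α y⌋ : ℤ) : ℝ) < logb α (α * β) := by
  have hα0 : 0 < α := zero_lt_one.trans hα
  have hβ0 : 0 < β := hα0.trans (hxy.1.trans hxy.2)
  have hdiff : logb α x - logb α y = logb α (x / y) := (logb_div hx.ne' hy.ne').symm
  have hlower : 1 < logb α x - logb α y := by
    rw [hdiff, ← logb_self_eq_one hα]
    exact logb_lt_logb hα hα0 hxy.1
  have hupper : logb α x - logb α y < logb α β := by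
    rw [hdiff]
    exact logb_lt_logb hα (div_pos hx hy) hxy.2
  obtain ⟨hpos, hlt⟩ := Int.floor_sub_floor_pos_and_lt hlower.le
  refine ⟨hpos, hlt.trans_le ?_⟩
  rw [logb_mul hα0.ne' hβ0.ne', logb_self_eq_one hα]
  linarith

theorem inv_mem_Ioo_of_mem_Ioo_inv {α β q : ℝ} (hα : 0 < α) (hβ : 0 < β) (hq : 0 < q)
    (h : q ∈ Ioo β⁻¹ α⁻¹) : q⁻¹ ∈ Ioo α β :=
  ⟨(lt_inv_comm₀ hα hq).2 h.2, (inv_lt_comm₀ hq hβ).2 h.1⟩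

theorem graphOf_adj_div_mem_Ioo {R : Set ℚ} {α β : ℝ} (hα : 0 < α) (hβ : 0 < β)
    (hR : ∀ q ∈ R, (q : ℝ) ∈ Ioo β⁻¹ α⁻¹ ∨ (q : ℝ) ∈ Ioo α β) {m n : ℕ+}
    (hmn : (graphOf R).Adj m n) : (m : ℝ) / n ∈ Ioo α β ∨ (n : ℝ) / m ∈ Ioo α β := by
  have hm : (0 : ℝ) < m := by exact_mod_cast m.pos
  have hn : (0 : ℝ) < n := by exact_mod_cast n.pos
  rcases hmn.2 with hq | hq <;> rcases hR _ hq with h | h <;> push_cast at h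
  · exact .inr (inv_div (m : ℝ) n ▸ inv_mem_Ioo_of_mem_Ioo_inv hα hβ (div_pos hm hn) h)
  · exact .inl h
  · exact .inl (inv_div (n : ℝ) m ▸ inv_mem_Ioo_of_mem_Ioo_inv hα hβ (div_pos hn hm) h)
  · exact .inr h

theorem chromaticNumber_graphOf_le {R : Set ℚ} {α β : ℝ} (hα : 1 < α) (hαβ : α < β)
    (hR : ∀ q ∈ R, (q : ℝ) ∈ Ioo β⁻¹ α⁻¹ ∨ (q : ℝ) ∈ Ioo α β) :
    (graphOf R).chromaticNumber ≤ ⌈logb α (α * β)⌉₊ := by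
  have hα0 : 0 < α := zero_lt_one.trans hα
  have hβ : 1 < β := hα.trans hαβ
  set k := ⌈logb α (α * β)⌉₊
  have hk : 0 < k := Nat.ceil_pos.2 (logb_pos hα (one_lt_mul_of_lt_of_le hα hβ.le))
  let colour : ℕ+ → ℤ := fun n => ⌊logb α n⌋
  have hcolour : ∀ m n : ℕ+, (m : ℝ) / n ∈ Ioo α β →
      0 < |colour m - colour n| ∧ |colour m - colour n| < k := by
    intro m n h
    obtain ⟨hpos, hlt⟩ := floor_logb_sub_floor_logb_pos_and_lt hα (by exact_mod_cast m.pos)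
      (by exact_mod_cast n.pos) h
    rw [abs_of_pos hpos]
    exact ⟨hpos, by exact_mod_cast hlt.trans_le (Nat.le_ceil _)⟩
  refine SimpleGraph.Colorable.chromaticNumber_le <|
    (graphOf R).colorable_of_abs_sub_lt hk colour fun m n hmn => ?_
  rcases graphOf_adj_div_mem_Ioo hα0 (zero_lt_one.trans hβ) hR hmn with h | h
  · exact hcolour m n h
  · exact abs_sub_comm (colour n) (colour m) ▸ hcolour n m h

theorem chromatic_bound_of_ne_general
    (a c : ℕ) (b d : ℤ)
    (α β : ℝ) (hα : 1 < α) (hαβ : α < β)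
    (hR : ∀ q ∈ Rset a c b d,
      (q : ℝ) ∈ Set.Ioo β⁻¹ α⁻¹ ∨ (q : ℝ) ∈ Set.Ioo α β) :
    (graphOf (Rset a c b d)).chromaticNumber
      ≤ (⌈Real.log (α * β) / Real.log α⌉₊ : ℕ∞) := by
  rw [log_div_log]
  exact chromaticNumber_graphOf_le hα hαβ hR

theorem chromatic_bound_of_ne
    (a c : ℕ) (ha : 0 < a) (hc : 0 < c) (hne : a ≠ c) (b d : ℤ)
    (α β : ℝ) (hα : 1 < α) (hαβ : α < β)
    (hR : ∀ q ∈ Rset a c b d,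
      (q : ℝ) ∈ Set.Ioo β⁻¹ α⁻¹ ∨ (q : ℝ) ∈ Set.Ioo α β) :
    (graphOf (Rset a c b d)).chromaticNumber
      ≤ (⌈Real.log (α * β) / Real.log α⌉₊ : ℕ∞) :=
  chromatic_bound_of_ne_general a c b d α β hα hαβ hR
end

section
/- Let a be a positive integer and b, d be integers with b ≠ d and b, d both nonzero. Suppose p is a prime such that v_p(a) > max{v_p(b), v_p(d)} and v_p(b) = v_p(d). Then the chromatic number of the graph G_{a,b,a,d} is at most p^{v_p(b − d)} (p − 1). -/
open MeasureTheory Filter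

/-! Colour `n` by its `p`-free part `n / p ^ v_p(n)` modulo `p ^ (w + 1)`, where `w = v_p(b - d)`;
there are `φ(p ^ (w + 1)) = p ^ w (p - 1)` such colours. If `m / n = (ak + b) / (ak + d)`, then
`v_p(ak + b) = v_p(b) = v_p(d) = v_p(ak + d)` because `v_p(a)` is larger, and the identities
`(ak + b)(m - n) = m(b - d)`, `(ak + d)(m - n) = n(b - d)` give `v_p(m) = v_p(n)` and
`v_p(m - n) ≤ v_p(m) + w`. Equal colours would instead force `p ^ (v_p(m) + w + 1) ∣ m - n`. -/

namespace padicValInt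

variable {p : ℕ}

theorem neg (z : ℤ) : padicValInt p (-z) = padicValInt p z := by
  simp [padicValInt]

variable [Fact p.Prime]

theorem add_eq_of_pow_succ_dvd {x y : ℤ} (hx : x ≠ 0)
    (hy : (p : ℤ) ^ (padicValInt p x + 1) ∣ y) :
    x + y ≠ 0 ∧ padicValInt p (x + y) = padicValInt p x := by
  have hx_not_dvd : ¬ (p : ℤ) ^ (padicValInt p x + 1) ∣ x + y := fun h => by
    have : (p : ℤ) ^ (padicValInt p x + 1) ∣ x := by simpa using h.sub hy
    rcases (padicValInt_dvd_iff _ x).1 this with h0 | hle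
    · exact hx h0
    · omega
  have hxy : x + y ≠ 0 := fun h => hx_not_dvd (h ▸ dvd_zero _)
  refine ⟨hxy, le_antisymm ?_ ?_⟩
  · by_contra! hlt
    exact hx_not_dvd ((padicValInt_dvd_iff _ _).2 (Or.inr hlt))
  · have hx_dvd : (p : ℤ) ^ padicValInt p x ∣ x + y :=
      dvd_add (padicValInt_dvd x) ((pow_dvd_pow _ (Nat.le_succ _)).trans hy)
    exact ((padicValInt_dvd_iff _ _).1 hx_dvd).resolve_left hxy

theorem add_sub_eq_of_mul_eq_mul {M N u v : ℤ} (hM : M ≠ 0) (hMN : M ≠ N) (hu : u ≠ 0)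
    (h : M * v = u * N) :
    padicValInt p u + padicValInt p (M - N) = padicValInt p M + padicValInt p (u - v) := by
  have key : u * (M - N) = M * (u - v) := by linear_combination h
  have huv : u - v ≠ 0 := by
    intro h0
    rw [h0, mul_zero] at key
    exact mul_ne_zero hu (sub_ne_zero.2 hMN) key
  rw [← padicValInt.mul hu (sub_ne_zero.2 hMN), key, padicValInt.mul hM huv]

end padicValInt

section ordCompl

variable {p : ℕ}

theorem Nat.pow_dvd_sub_of_ordCompl_modEq {j m n : ℕ} (hv : m.factorization p = n.factorization p)
    (h : ordCompl[p] m ≡ ordCompl[p] n [MOD p ^ j]) :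
    (p : ℤ) ^ (m.factorization p + j) ∣ (m : ℤ) - n := by
  have hm := Nat.ordProj_mul_ordCompl_eq_self m p
  have hn := Nat.ordProj_mul_ordCompl_eq_self n p
  generalize ordCompl[p] m = m' at h hm
  generalize ordCompl[p] n = n' at h hn
  rw [hv] at hm ⊢
  generalize n.factorization p = t at hm hn ⊢
  subst hm hn
  push_cast
  rw [pow_add, ← mul_sub]
  exact mul_dvd_mul_left _ (by exact_mod_cast h.symm.dvd)

variable [Fact p.Prime]

variable (p) in
def ordComplUnit (j : ℕ) (n : ℕ+) : (ZMod (p ^ j))ˣ :=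
  ZMod.unitOfCoprime (ordCompl[p] (n : ℕ))
    ((Nat.coprime_ordCompl Fact.out n.ne_zero).symm.pow_right j)

theorem ordCompl_modEq_of_ordComplUnit_eq {j : ℕ} {m n : ℕ+}
    (h : ordComplUnit p j m = ordComplUnit p j n) :
    ordCompl[p] (m : ℕ) ≡ ordCompl[p] (n : ℕ) [MOD p ^ j] :=
  (ZMod.natCast_eq_natCast_iff _ _ _).1 (congrArg Units.val h)

end ordCompl

section Rset

variable {a : ℕ} {b d : ℤ} {p : ℕ} [Fact p.Prime]

theorem padicValNat_eq_and_padicValInt_sub_le_of_div_mem_Rset (hb : b ≠ 0) (hd : d ≠ 0)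
    (hval : max (padicValInt p b) (padicValInt p d) < padicValInt p (a : ℤ))
    (heq : padicValInt p b = padicValInt p d) {m n : ℕ} (hm : m ≠ 0) (hmn : m ≠ n)
    (hmem : (m : ℚ) / n ∈ Rset a a b d) :
    padicValNat p m = padicValNat p n ∧
      padicValInt p ((m : ℤ) - n) ≤ padicValNat p m + padicValInt p (b - d) := by
  obtain ⟨⟨k, -, hq⟩, hpos, -⟩ := hmem
  have hn : n ≠ 0 := by rintro rfl; simp at hpos
  have hak {x : ℤ} (hx : padicValInt p x < padicValInt p (a : ℤ)) :
      (p : ℤ) ^ (padicValInt p x + 1) ∣ a * k :=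
    ((padicValInt_dvd_iff _ _).2 (Or.inr hx)).mul_right _
  obtain ⟨hu0, hu⟩ :=
    padicValInt.add_eq_of_pow_succ_dvd hb (hak ((le_max_left _ _).trans_lt hval))
  obtain ⟨hv0, hv⟩ :=
    padicValInt.add_eq_of_pow_succ_dvd hd (hak ((le_max_right _ _).trans_lt hval))
  have hcross : (m : ℤ) * (d + a * k) = (b + a * k) * n := by
    rw [div_eq_div_iff (by exact_mod_cast hn) (by rw [add_comm]; exact_mod_cast hv0)] at hq
    push_cast [add_comm] at hq ⊢
    exact_mod_cast hq
  have hmn' : (m : ℤ) ≠ n := by exact_mod_cast hmn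
  have h₁ := padicValInt.add_sub_eq_of_mul_eq_mul (p := p) (by exact_mod_cast hm) hmn' hu0 hcross
  have h₂ := padicValInt.add_sub_eq_of_mul_eq_mul (p := p) (v := b + a * k)
    (by exact_mod_cast hn) hmn'.symm hv0
    (by linear_combination -hcross)
  rw [add_sub_add_right_eq_sub] at h₁ h₂
  rw [← neg_sub (m : ℤ), ← neg_sub b, padicValInt.neg, padicValInt.neg] at h₂
  simp only [padicValInt.of_nat] at h₁ h₂
  omega

theorem ordComplUnit_ne_of_div_mem_Rset (hb : b ≠ 0) (hd : d ≠ 0)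
    (hval : max (padicValInt p b) (padicValInt p d) < padicValInt p (a : ℤ))
    (heq : padicValInt p b = padicValInt p d) {m n : ℕ+} (hmn : m ≠ n)
    (hmem : (m : ℚ) / n ∈ Rset a a b d) :
    ordComplUnit p (padicValInt p (b - d) + 1) m ≠
      ordComplUnit p (padicValInt p (b - d) + 1) n := by
  intro hC
  obtain ⟨hv, hle⟩ := padicValNat_eq_and_padicValInt_sub_le_of_div_mem_Rset hb hd hval heq
    m.ne_zero (PNat.coe_injective.ne hmn) hmem
  have hdvd := Nat.pow_dvd_sub_of_ordCompl_modEq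
    (by rw [Nat.factorization_def _ Fact.out, Nat.factorization_def _ Fact.out, hv])
    (ordCompl_modEq_of_ordComplUnit_eq hC)
  have hsub : (m : ℤ) - n ≠ 0 := sub_ne_zero.2 (by exact_mod_cast PNat.coe_injective.ne hmn)
  have := ((padicValInt_dvd_iff _ _).1 hdvd).resolve_left hsub
  rw [Nat.factorization_def _ Fact.out] at this
  omega

end Rset

theorem chromatic_bound_of_equal_valuation_general
    (a : ℕ) (b d : ℤ) (hb : b ≠ 0) (hd : d ≠ 0)
    (p : ℕ) (hp : p.Prime)
    (hval : max (padicValInt p b) (padicValInt p d) < padicValInt p (a : ℤ))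
    (heq : padicValInt p b = padicValInt p d) :
    (graphOf (Rset a a b d)).chromaticNumber
      ≤ ((p ^ padicValInt p (b - d) * (p - 1) : ℕ) : ℕ∞) := by
  have : Fact p.Prime := ⟨hp⟩
  let C : (graphOf (Rset a a b d)).Coloring (ZMod (p ^ (padicValInt p (b - d) + 1)))ˣ :=
    .mk (ordComplUnit p _) fun hadj => hadj.2.elim
      (ordComplUnit_ne_of_div_mem_Rset hb hd hval heq hadj.1)
      (fun h => (ordComplUnit_ne_of_div_mem_Rset hb hd hval heq hadj.1.symm h).symm)
  calc (graphOf (Rset a a b d)).chromaticNumber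
        ≤ Fintype.card (ZMod (p ^ (padicValInt p (b - d) + 1)))ˣ :=
        C.colorable.chromaticNumber_le
    _ = ((p ^ padicValInt p (b - d) * (p - 1) : ℕ) : ℕ∞) := by
        rw [ZMod.card_units_eq_totient, Nat.totient_prime_pow hp (Nat.succ_pos _), Nat.succ_sub_one]

theorem chromatic_bound_of_equal_valuation
    (a : ℕ) (ha : 0 < a) (b d : ℤ) (hb : b ≠ 0) (hd : d ≠ 0) (hbd : b ≠ d)
    (p : ℕ) (hp : p.Prime)
    (hval : max (padicValInt p b) (padicValInt p d) < padicValInt p (a : ℤ))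
    (heq : padicValInt p b = padicValInt p d) :
    (graphOf (Rset a a b d)).chromaticNumber
      ≤ ((p ^ padicValInt p (b - d) * (p - 1) : ℕ) : ℕ∞) :=
  chromatic_bound_of_equal_valuation_general a b d hb hd p hp hval heq
end

section
/- Let a be a positive integer and b, d be integers, both nonzero. Suppose p is a prime such that v_p(a) > max{v_p(b), v_p(d)} and v_p(b) ≠ v_p(d). Then the chromatic number of the graph G_{a,b,a,d} equals 2. -/
open MeasureTheory Filter

/-!
Since `v_p(a) > v_p(b)`, every numerator `an + b` has valuation `v_p(b)`, and likewise every
denominator has valuation `v_p(d)`; so every ratio in `R_{a,b,a,d}` has the same nonzero valuation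
`c = v_p(b) - v_p(d)`. Along an edge `v_p` therefore jumps by exactly `±c`, and the parity of
`⌊v_p(n) / c⌋` is a proper 2-colouring. An edge exists: `m = aN + b`, `n = aN + d` for large `N`.
-/

theorem SimpleGraph.colorable_two_of_adj_eq_add {V : Type*} {G : SimpleGraph V} (f : V → ℤ)
    {c : ℤ} (hc : c ≠ 0) (h : ∀ u v, G.Adj u v → f u = f v + c ∨ f v = f u + c) :
    G.Colorable 2 := by
  have step (x : ℤ) : (((x + c) / c : ℤ) : ZMod 2) ≠ ((x / c : ℤ) : ZMod 2) := by
    rw [Int.add_ediv_of_dvd_right (dvd_refl c), Int.ediv_self hc]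
    push_cast
    exact succ_ne_self _
  refine ⟨SimpleGraph.Coloring.mk (fun v => ((f v / c : ℤ) : ZMod 2)) fun {u v} huv => ?_⟩
  rcases h u v huv with h | h
  · rw [h]; exact step _
  · rw [h]; exact (step _).symm

section padic

variable {p : ℕ} [Fact p.Prime]

theorem padicValInt_add_of_lt {x y : ℤ} (hy : y ≠ 0) (h : padicValInt p y < padicValInt p x) :
    padicValInt p (x + y) = padicValInt p y := by
  have hx : x ≠ 0 := by rintro rfl; simp at h
  have hxy : y + x ≠ 0 := fun hxy => by
    obtain rfl : x = -y := by linarith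
    simp [padicValInt] at h
  have key := padicValRat.add_eq_of_lt (p := p) (q := (y : ℚ)) (r := (x : ℚ))
    (by exact_mod_cast hxy) (by exact_mod_cast hy) (by exact_mod_cast hx)
    (by simpa only [padicValRat.of_int] using (by exact_mod_cast h))
  rw [← Int.cast_add, padicValRat.of_int, padicValRat.of_int, add_comm] at key
  exact_mod_cast key

theorem padicValInt_mul_add_of_lt {a b : ℤ} (N : ℤ) (hb : b ≠ 0)
    (h : padicValInt p b < padicValInt p a) : padicValInt p (a * N + b) = padicValInt p b := by
  rcases eq_or_ne N 0 with rfl | hN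
  · simp
  have ha : a ≠ 0 := by rintro rfl; simp at h
  exact padicValInt_add_of_lt hb (h.trans_le (by rw [padicValInt.mul ha hN]; omega))

theorem padicValRat_of_mem_Rset {a : ℕ} {b d : ℤ} (hb : b ≠ 0) (hd : d ≠ 0)
    (hba : padicValInt p b < padicValInt p a) (hda : padicValInt p d < padicValInt p a)
    {q : ℚ} (hq : q ∈ Rset a a b d) :
    padicValRat p q = padicValInt p b - padicValInt p d := by
  obtain ⟨⟨N, -, rfl⟩, hpos, -⟩ := hq
  have hcast (e : ℤ) : (a : ℚ) * N + e = ((a * N + e : ℤ) : ℚ) := by push_cast; ring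
  rw [hcast, hcast] at hpos ⊢
  obtain ⟨hnum, hden⟩ := div_ne_zero_iff.1 hpos.ne'
  rw [padicValRat.div hnum hden, padicValRat.of_int, padicValRat.of_int,
    padicValInt_mul_add_of_lt _ hb hba, padicValInt_mul_add_of_lt _ hd hda]

theorem graphOf_colorable_two_of_padicValRat_eq {R : Set ℚ} {c : ℤ} (hc : c ≠ 0)
    (hR : ∀ q ∈ R, padicValRat p q = c) : (graphOf R).Colorable 2 := by
  have hdiv (m n : ℕ+) : padicValRat p ((m : ℚ) / n) = padicValRat p m - padicValRat p n :=
    padicValRat.div (by positivity) (by positivity)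
  refine SimpleGraph.colorable_two_of_adj_eq_add (fun n : ℕ+ => padicValRat p n) hc ?_
  rintro m n ⟨-, h | h⟩
  · have := hdiv m n; rw [hR _ h] at this; omega
  · have := hdiv n m; rw [hR _ h] at this; omega

end padic

theorem graphOf_adj_iff {R : Set ℚ} (hR : ∀ q ∈ R, q ≠ 1) {m n : ℕ+} :
    (graphOf R).Adj m n ↔ (m : ℚ) / n ∈ R ∨ (n : ℚ) / m ∈ R := by
  refine ⟨And.right, fun h => ⟨?_, h⟩⟩
  rintro rfl
  rcases h with h | h <;> exact hR _ h (div_self (by positivity))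

theorem graphOf_Rset_ne_bot {a : ℕ} {b d : ℤ} (ha : 0 < a) (hbd : b ≠ d) :
    graphOf (Rset a a b d) ≠ ⊥ := by
  have exists_pnat (z : ℤ) (hz : 0 < z) : ∃ m : ℕ+, (m : ℤ) = z :=
    ⟨⟨z.toNat, by omega⟩, by simp; omega⟩
  set N := b.natAbs + d.natAbs + 1
  have hN : (N : ℤ) ≤ a * N := le_mul_of_one_le_left (by positivity) (by exact_mod_cast ha)
  obtain ⟨m, hm⟩ := exists_pnat (a * N + b) (by omega)
  obtain ⟨n, hn⟩ := exists_pnat (a * N + d) (by omega)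
  have hmQ : (m : ℚ) = a * N + b := by exact_mod_cast hm
  have hnQ : (n : ℚ) = a * N + d := by exact_mod_cast hn
  refine SimpleGraph.ne_bot_iff_exists_adj.2 ⟨m, n, (graphOf_adj_iff fun q hq => hq.2.2).2
    (Or.inl ⟨⟨N, by omega, by rw [hmQ, hnQ]⟩, by positivity, ?_⟩)⟩
  rw [Ne, div_eq_one_iff_eq (by positivity)]
  exact_mod_cast fun hmn : (m : ℤ) = n => hbd (by omega)

theorem chromatic_eq_two_of_distinct_valuation
    (a : ℕ) (ha : 0 < a) (b d : ℤ) (hb : b ≠ 0) (hd : d ≠ 0)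
    (p : ℕ) (hp : p.Prime)
    (hval : max (padicValInt p b) (padicValInt p d) < padicValInt p (a : ℤ))
    (hne : padicValInt p b ≠ padicValInt p d) :
    (graphOf (Rset a a b d)).chromaticNumber = 2 := by
  have : Fact p.Prime := ⟨hp⟩
  have hvalR (q : ℚ) (hq : q ∈ Rset a a b d) :
      padicValRat p q = padicValInt p b - padicValInt p d :=
    padicValRat_of_mem_Rset hb hd ((le_max_left _ _).trans_lt hval)
      ((le_max_right _ _).trans_lt hval) hq
  refine SimpleGraph.chromaticNumber_eq_two_iff.2 ⟨?_, ?_⟩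
  · exact graphOf_colorable_two_of_padicValRat_eq (sub_ne_zero.2 (Nat.cast_injective.ne hne)) hvalR
  · exact graphOf_Rset_ne_bot ha fun hbd => hne (congrArg _ hbd)
end

section
/- Let α, β be real numbers with 1 < α < β and define S_{α,β} := { r ∈ ℚ_{>0} : r ∈ (β^{-1}, α^{-1}) ∪ (α, β) }. Then the chromatic number of the graph G(S_{α,β}) is at most ⌈log(αβ)/log(α)⌉. -/
/-
Colour `n` by `⌊log_α n⌋ mod k`, where `k = ⌈log_α (αβ)⌉`. Every edge of `G(S_{α,β})` joins
`m`, `n` with `m / n ∈ (α, β)` after possibly swapping them, so `log_α m - log_α n` lies in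
`(1, log_α β) ⊆ [1, k - 1]`. Two reals at such a distance have floors differing by an integer
in `[1, k - 1]`, hence by a non-multiple of `k`.
-/

open MeasureTheory Filter

open Set Real

theorem intCast_floor_ne_of_one_le_sub_le {K : Type*} [Field K] [LinearOrder K]
    [IsStrictOrderedRing K] [FloorRing K] (k : ℕ) {x y : K}
    (h₁ : 1 ≤ x - y) (h₂ : x - y ≤ k - 1) :
    ((⌊x⌋ : ℤ) : ZMod k) ≠ ((⌊y⌋ : ℤ) : ZMod k) := by
  have hpos : 0 < ⌊x⌋ - ⌊y⌋ := by
    rw [← Int.cast_pos (R := K), Int.cast_sub]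
    linarith [Int.sub_one_lt_floor x, Int.floor_le y]
  have hlt : ⌊x⌋ - ⌊y⌋ < k := by
    rw [← Int.cast_lt (R := K), Int.cast_sub, Int.cast_natCast]
    linarith [Int.floor_le x, Int.lt_floor_add_one y]
  rw [Ne, ZMod.intCast_eq_intCast_iff_dvd_sub, dvd_sub_comm]
  exact fun hdvd => (Int.le_of_dvd hpos hdvd).not_gt hlt

theorem inv_mem_Ioo_of_mem_Ioo_inv_s8 {K : Type*} [Field K] [LinearOrder K] [IsStrictOrderedRing K]
    {a b r : K} (ha : 0 < a) (hb : 0 < b) (hr : r ∈ Ioo b⁻¹ a⁻¹) : r⁻¹ ∈ Ioo a b := by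
  have hr₀ : 0 < r := (inv_pos.mpr hb).trans hr.1
  exact ⟨(lt_inv_comm₀ ha hr₀).mpr hr.2, (inv_lt_comm₀ hr₀ hb).mpr hr.1⟩

theorem intCast_floor_logb_ne {α β x y : ℝ} {k : ℕ} (hα : 1 < α) (hx : 0 < x) (hy : 0 < y)
    (hxy : x / y ∈ Ioo α β) (hk : logb α (α * β) ≤ k) :
    ((⌊logb α x⌋ : ℤ) : ZMod k) ≠ ((⌊logb α y⌋ : ℤ) : ZMod k) := by
  have hβ : 0 < β := by linarith [hxy.1, hxy.2]
  have hsub : logb α x - logb α y = logb α (x / y) := (logb_div hx.ne' hy.ne').symm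
  apply intCast_floor_ne_of_one_le_sub_le k <;> rw [hsub]
  · calc (1 : ℝ) = logb α α := (logb_self_eq_one hα).symm
      _ ≤ logb α (x / y) := (logb_lt_logb hα (by linarith) hxy.1).le
  · calc logb α (x / y) ≤ logb α β := (logb_lt_logb hα (div_pos hx hy) hxy.2).le
      _ = logb α (α * β) - 1 := by
        rw [logb_mul (by linarith) hβ.ne', logb_self_eq_one hα]; ring
      _ ≤ k - 1 := by linarith

section LogbFloorColoring

variable {α β : ℝ} {R : Set ℚ} {k : ℕ}

theorem intCast_floor_logb_ne_of_div_mem (hα : 1 < α)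
    (hR : ∀ r ∈ R, (r : ℝ) ∈ Ioo α β ∨ (r : ℝ)⁻¹ ∈ Ioo α β)
    (hk : logb α (α * β) ≤ k) {m n : ℕ+} (hmn : (m : ℚ) / n ∈ R) :
    ((⌊logb α m⌋ : ℤ) : ZMod k) ≠ ((⌊logb α n⌋ : ℤ) : ZMod k) := by
  have hm : (0 : ℝ) < m := by exact_mod_cast m.pos
  have hn : (0 : ℝ) < n := by exact_mod_cast n.pos
  rcases hR _ hmn with h | h
  · push_cast at h
    exact intCast_floor_logb_ne hα hm hn h hk
  · push_cast at h
    rw [inv_div] at h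
    exact (intCast_floor_logb_ne hα hn hm h hk).symm

noncomputable def logbFloorColoring (hα : 1 < α)
    (hR : ∀ r ∈ R, (r : ℝ) ∈ Ioo α β ∨ (r : ℝ)⁻¹ ∈ Ioo α β)
    (hk : logb α (α * β) ≤ k) : (graphOf R).Coloring (ZMod k) :=
  SimpleGraph.Coloring.mk (fun n => ((⌊logb α n⌋ : ℤ) : ZMod k)) fun
    | ⟨_, .inl h⟩ => intCast_floor_logb_ne_of_div_mem hα hR hk h
    | ⟨_, .inr h⟩ => (intCast_floor_logb_ne_of_div_mem hα hR hk h).symm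

theorem graphOf_colorable_ceil_logb (hα : 1 < α) (hαβ : α < β)
    (hR : ∀ r ∈ R, (r : ℝ) ∈ Ioo α β ∨ (r : ℝ)⁻¹ ∈ Ioo α β) :
    (graphOf R).Colorable ⌈logb α (α * β)⌉₊ := by
  have hk : 0 < ⌈logb α (α * β)⌉₊ := by
    refine Nat.ceil_pos.mpr (logb_pos hα ?_)
    nlinarith
  have : NeZero ⌈logb α (α * β)⌉₊ := ⟨hk.ne'⟩
  simpa only [ZMod.card] using (logbFloorColoring hα hR (Nat.le_ceil _)).colorable

end LogbFloorColoring

theorem chromatic_bound_archimedean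
    (α β : ℝ) (hα : 1 < α) (hαβ : α < β) :
    (graphOf {r : ℚ | 0 < r ∧
        ((r : ℝ) ∈ Set.Ioo β⁻¹ α⁻¹ ∨ (r : ℝ) ∈ Set.Ioo α β)}).chromaticNumber
      ≤ (⌈Real.log (α * β) / Real.log α⌉₊ : ℕ∞) := by
  have hα₀ : 0 < α := zero_lt_one.trans hα
  rw [log_div_log]
  refine (graphOf_colorable_ceil_logb hα hαβ ?_).chromaticNumber_le
  rintro r ⟨-, hinv | hdirect⟩
  · exact .inr (inv_mem_Ioo_of_mem_Ioo_inv_s8 hα₀ (hα₀.trans hαβ) hinv)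
  · exact .inl hdirect
end

section
/- Let p be a prime and k ≥ 1 an integer, and define T'_{p,k} := { r ∈ ℚ_{>0} : |v_p(r)| = k }. Then the chromatic number of the graph G(T'_{p,k}) equals 2. -/
open MeasureTheory Filter

/-!
Adjacent vertices of `G(T'_{p,k})` have `p`-adic valuations differing by exactly `k`, so the
parity of `⌊v_p(n) / k⌋` is a proper 2-colouring; the edge between `1` and `p^k` rules out
fewer colours.
-/

namespace SimpleGraph

variable {V : Type*} {G : SimpleGraph V}

theorem colorable_two_of_adj_add_eq (f : V → ℕ) {k : ℕ} (hk : 0 < k)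
    (h : ∀ u v, G.Adj u v → f u + k = f v ∨ f v + k = f u) : G.Colorable 2 := by
  have parity_flips : ∀ a, (a + k) / k % 2 ≠ a / k % 2 := fun a => by
    rw [Nat.add_div_right a hk]
    omega
  refine ⟨Coloring.mk (fun v => ⟨f v / k % 2, Nat.mod_lt _ two_pos⟩) fun {u v} huv hc => ?_⟩
  have hc : f u / k % 2 = f v / k % 2 := congrArg Fin.val hc
  rcases h u v huv with huv | huv
  · exact parity_flips (f u) (huv ▸ hc.symm)
  · exact parity_flips (f v) (huv ▸ hc)

end SimpleGraph

theorem padicValRat_pnat_div (p : ℕ) [Fact p.Prime] (m n : ℕ+) :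
    padicValRat p ((m : ℚ) / n) = padicValNat p m - padicValNat p n := by
  have hm : ((m : ℕ) : ℚ) ≠ 0 := by exact_mod_cast m.ne_zero
  have hn : ((n : ℕ) : ℚ) ≠ 0 := by exact_mod_cast n.ne_zero
  exact (padicValRat.div hm hn).trans (by rw [padicValRat.of_nat, padicValRat.of_nat])

section PadicValuationGraph

variable (p : ℕ) [Fact p.Prime] (k : ℕ)

theorem padicValNat_add_eq_of_graphOf_adj {m n : ℕ+}
    (h : (graphOf {r : ℚ | 0 < r ∧ |padicValRat p r| = (k : ℤ)}).Adj m n) :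
    padicValNat p m + k = padicValNat p n ∨ padicValNat p n + k = padicValNat p m := by
  rcases h.2 with ⟨-, hv⟩ | ⟨-, hv⟩ <;>
  · rw [padicValRat_pnat_div, abs_eq (Int.natCast_nonneg k)] at hv
    omega

theorem graphOf_adj_one_pow (hk : 1 ≤ k) :
    (graphOf {r : ℚ | 0 < r ∧ |padicValRat p r| = (k : ℤ)}).Adj 1
      ⟨p ^ k, pow_pos (Fact.out : p.Prime).pos k⟩ := by
  have hp : p.Prime := Fact.out
  refine ⟨fun h => ?_,
    Or.inr ⟨div_pos (Nat.cast_pos.2 (PNat.pos _)) (Nat.cast_pos.2 (PNat.pos _)), ?_⟩⟩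
  · have h1 : 1 = p ^ k := congrArg PNat.val h
    exact (Nat.one_lt_pow (by omega) hp.one_lt).ne h1
  · rw [padicValRat_pnat_div p ⟨p ^ k, _⟩ 1]
    simp

end PadicValuationGraph

theorem chromatic_eq_two_nonarchimedean
    (p : ℕ) (hp : p.Prime) (k : ℕ) (hk : 1 ≤ k) :
    (graphOf {r : ℚ | 0 < r ∧ |padicValRat p r| = (k : ℤ)}).chromaticNumber = 2 := by
  have := Fact.mk hp
  refine le_antisymm ?_ (SimpleGraph.two_le_chromaticNumber_of_adj (graphOf_adj_one_pow p k hk))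
  exact (SimpleGraph.colorable_two_of_adj_add_eq (fun n : ℕ+ => padicValNat p n) hk
    fun _ _ => padicValNat_add_eq_of_graphOf_adj p k).chromaticNumber_le
end

section
/- Let R ⊆ ℚ_{>0} \ {1} be nonempty. If for every positive integer k the graph G(R) contains a clique of size k, then R is a set of multiplicative recurrence. -/
open MeasureTheory Filter

/-!
Pigeonhole in measure: if `B` has positive measure and `T_{n_1}, …, T_{n_k}` are measure preserving
with `k μ(B) > 1`, then the sets `T_{n_i}⁻¹ B` cannot be pairwise almost disjoint, so some
`T_{n_i}⁻¹ B ∩ T_{n_j}⁻¹ B` with `i ≠ j` has positive measure. Taking `{n_1, …, n_k}` to be a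
clique of `G(R)` with `k > 1 / μ(B)`, the ratio `n_i / n_j` or its inverse lies in `R`.
-/

theorem exists_ne_pos_measure_inter_of_measure_univ_lt_sum {α ι : Type*} [MeasurableSpace α]
    (μ : Measure α) {s : Finset ι} {t : ι → Set α} (h : ∀ i ∈ s, NullMeasurableSet (t i) μ)
    (H : μ Set.univ < ∑ i ∈ s, μ (t i)) :
    ∃ i ∈ s, ∃ j ∈ s, i ≠ j ∧ 0 < μ (t i ∩ t j) := by
  contrapose! H
  exact sum_measure_le_measure_univ h fun i hi j hj hij => nonpos_iff_eq_zero.mp (H i hi j hj hij)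

theorem exists_ne_pos_measure_preimage_inter_of_measurePreserving {X ι : Type*} [MeasurableSpace X]
    {μ : Measure X} {T : ι → X → X} (hT : ∀ i, MeasurePreserving (T i) μ μ) {B : Set X}
    (hB : MeasurableSet B) {s : Finset ι} (hs : μ Set.univ < s.card * μ B) :
    ∃ i ∈ s, ∃ j ∈ s, i ≠ j ∧ 0 < μ (T i ⁻¹' B ∩ T j ⁻¹' B) := by
  refine exists_ne_pos_measure_inter_of_measure_univ_lt_sum μ
    (fun i _ => ((hT i).measurable hB).nullMeasurableSet) ?_
  simpa only [(hT _).measure_preimage hB.nullMeasurableSet, Finset.sum_const, nsmul_eq_mul]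
    using hs

theorem mult_recurrence_of_unbounded_cliques_general
    (R : Set ℚ)
    (hclique : ∀ k : ℕ, ∃ s : Finset ℕ+, (graphOf R).IsNClique k s) :
    IsMultRecurrent R := by
  intro X _ μ _ T hT _ B hB hBpos
  obtain ⟨k, hk⟩ := ENNReal.exists_nat_mul_gt hBpos.ne' ENNReal.one_ne_top
  obtain ⟨s, hs⟩ := hclique k
  have hTpos : ∀ n : ℕ+, MeasurePreserving (T n) μ μ := fun n => hT n n.pos
  obtain ⟨i, hi, j, hj, hij, hpos⟩ :=
    exists_ne_pos_measure_preimage_inter_of_measurePreserving hTpos hB (s := s)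
      (by rwa [hs.card_eq, measure_univ])
  rcases (hs.isClique hi hj hij).2 with h | h
  · exact ⟨i, j, i.pos, j.pos, h, hpos⟩
  · exact ⟨j, i, j.pos, i.pos, h, by rwa [Set.inter_comm]⟩

theorem mult_recurrence_of_unbounded_cliques
    (R : Set ℚ) (hR : R ⊆ {q : ℚ | 0 < q ∧ q ≠ 1}) (hne : R.Nonempty)
    (hclique : ∀ k : ℕ, ∃ s : Finset ℕ+, (graphOf R).IsNClique k s) :
    IsMultRecurrent R :=
  mult_recurrence_of_unbounded_cliques_general R hclique
end

section
/- Let a be a positive integer and b, d be integers with b > d, gcd(a, b − d) = 1, and a dividing b·d. Then there exist positive integers A, B with B ≥ 2 and A = B(B − 1) such that R_{A,B,A,B−1} ⊆ R_{a,b,a,d}, and moreover there exist positive integers C, D such that for every positive integer m, with n = C m + D one has (a n + b)/(a n + d) = (A m + B)/(A m + (B − 1)) as rational numbers. -/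
open MeasureTheory Filter

theorem reduction_to_special_case
    (a : ℕ) (ha : 0 < a) (b d : ℤ) (hbd : d < b)
    (hgcd : Int.gcd (a : ℤ) (b - d) = 1) (hdvd : (a : ℤ) ∣ b * d) :
    ∃ A B : ℕ, 0 < A ∧ 2 ≤ B ∧ A = B * (B - 1) ∧
      Rset A A (B : ℤ) ((B : ℤ) - 1) ⊆ Rset a a b d ∧
      ∃ C D : ℕ, 0 < C ∧ 0 < D ∧ ∀ m : ℕ, 0 < m →
        ((a : ℚ) * ((C : ℚ) * m + D) + b) / ((a : ℚ) * ((C : ℚ) * m + D) + d)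
          = ((A : ℚ) * m + B) / ((A : ℚ) * m + ((B : ℚ) - 1)) := by
  set e : ℤ := b - d with he
  have he1 : 1 ≤ e := by omega
  have ha1 : (1 : ℤ) ≤ a := by exact_mod_cast ha
  have hcop : IsCoprime (a : ℤ) e := Int.isCoprime_iff_gcd_eq_one.mpr hgcd
  obtain ⟨u, v, huv⟩ := hcop
  -- choose large Bz with e * Bz ≡ b (mod a)
  set N : ℤ := max 2 (b + a) with hN
  set t : ℤ := max 0 (N - v * b) with ht
  set Bz : ℤ := v * b + t * a with hBz
  have ht0 : 0 ≤ t := le_max_left _ _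
  have hta : t ≤ t * a := le_mul_of_one_le_right ht0 ha1
  have hBzN : N ≤ Bz := by
    have h1 : N - v * b ≤ t := le_max_right _ _
    omega
  have hBz2 : 2 ≤ Bz := le_trans (le_max_left _ _) hBzN
  have hBzba : b + a ≤ Bz := le_trans (le_max_right _ _) hBzN
  -- a ∣ e * Bz - b
  obtain ⟨Dz, hDz⟩ : (a : ℤ) ∣ e * Bz - b := by
    refine ⟨e * t - u * b, ?_⟩
    linear_combination b * huv
  have heBz : Bz ≤ e * Bz := le_mul_of_one_le_left (by omega) he1
  have hDz1 : 1 ≤ Dz := by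
    have h3 : (a : ℤ) * 1 ≤ a * Dz := by rw [mul_one]; linarith
    exact le_of_mul_le_mul_left h3 (by omega)
  -- a ∣ Bz * (Bz - 1)
  obtain ⟨k, hk⟩ := hdvd
  have hXd : (a : ℤ) ∣ Bz * (Bz - 1) := by
    have hc : IsCoprime (a : ℤ) e := ⟨u, v, huv⟩
    have hcop2 : IsCoprime (a : ℤ) (e * e) := hc.mul_right hc
    refine hcop2.dvd_of_dvd_mul_left ⟨k + Dz * (b + d) + a * Dz * Dz, ?_⟩
    linear_combination (e * Bz + d + a * Dz) * hDz + hk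
  obtain ⟨X, hX⟩ := hXd
  set Cz : ℤ := e * X with hCzdef
  have hCzkey : (a : ℤ) * Cz = e * (Bz * (Bz - 1)) := by rw [hCzdef, hX]; ring
  have hCz1 : 1 ≤ Cz := by
    have h1 : (0 : ℤ) < Bz * (Bz - 1) := mul_pos (by omega) (by omega)
    have h2 : (0 : ℤ) < e * (Bz * (Bz - 1)) := mul_pos (by omega) h1
    nlinarith [hCzkey]
  have hBn : ((Bz.toNat : ℤ)) = Bz := Int.toNat_of_nonneg (by omega)
  have hCn : ((Cz.toNat : ℤ)) = Cz := Int.toNat_of_nonneg (by omega)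
  have hDn : ((Dz.toNat : ℤ)) = Dz := Int.toNat_of_nonneg (by omega)
  have hBn2 : 2 ≤ Bz.toNat := by omega
  have hBq : ((Bz.toNat : ℚ)) = (Bz : ℚ) := by exact_mod_cast congrArg (Int.cast : ℤ → ℚ) hBn
  have hCq : ((Cz.toNat : ℚ)) = (Cz : ℚ) := by exact_mod_cast congrArg (Int.cast : ℤ → ℚ) hCn
  have hDq : ((Dz.toNat : ℚ)) = (Dz : ℚ) := by exact_mod_cast congrArg (Int.cast : ℤ → ℚ) hDn
  have hAq : ((Bz.toNat * (Bz.toNat - 1) : ℕ) : ℚ) = (Bz : ℚ) * ((Bz : ℚ) - 1) := by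
    push_cast [Nat.cast_sub (by omega : 1 ≤ Bz.toNat)]
    rw [hBq]
  have he0 : (e : ℚ) ≠ 0 := by exact_mod_cast (by omega : e ≠ 0)
  have heq2 : (e : ℚ) = (b : ℚ) - d := by
    have := congrArg (Int.cast : ℤ → ℚ) he
    push_cast at this; exact this
  have hCkq : (a : ℚ) * Cz = e * ((Bz : ℚ) * (Bz - 1)) := by
    have := congrArg (Int.cast : ℤ → ℚ) hCzkey
    push_cast at this; linarith
  have hDkq : (a : ℚ) * Dz = (e : ℚ) * Bz - b := by
    have := congrArg (Int.cast : ℤ → ℚ) hDz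
    push_cast at this; linarith
  have key : ∀ m : ℕ, 0 < m →
      ((a : ℚ) * ((Cz.toNat : ℚ) * m + Dz.toNat) + b) / ((a : ℚ) * ((Cz.toNat : ℚ) * m + Dz.toNat) + d)
        = (((Bz.toNat * (Bz.toNat - 1) : ℕ) : ℚ) * m + Bz.toNat) /
          (((Bz.toNat * (Bz.toNat - 1) : ℕ) : ℚ) * m + ((Bz.toNat : ℚ) - 1)) := by
    intro m hm
    rw [hAq, hBq, hCq, hDq]
    have hnum : (a : ℚ) * ((Cz : ℚ) * m + Dz) + b = e * ((Bz : ℚ) * ((Bz : ℚ) - 1) * m + Bz) := by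
      linear_combination (m : ℚ) * hCkq + hDkq
    have hden : (a : ℚ) * ((Cz : ℚ) * m + Dz) + d
        = e * ((Bz : ℚ) * ((Bz : ℚ) - 1) * m + ((Bz : ℚ) - 1)) := by
      linear_combination (m : ℚ) * hCkq + hDkq + heq2
    rw [hnum, hden, mul_div_mul_left _ _ he0]
  refine ⟨Bz.toNat * (Bz.toNat - 1), Bz.toNat, ?_, hBn2, rfl, ?_, Cz.toNat, Dz.toNat, by omega,
    by omega, key⟩
  · exact Nat.mul_pos (by omega) (by omega)
  · intro q hq
    obtain ⟨⟨n', hn', hq⟩, hq0, hq1⟩ := hq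
    refine ⟨⟨Cz.toNat * n' + Dz.toNat, Nat.add_pos_right _ (by omega), ?_⟩, hq0, hq1⟩
    have hk2 := key n' hn'
    rw [hq]
    push_cast at hk2 ⊢
    rw [← hk2]
end

section
/- Let a, c be positive integers with a ≠ c and b, d be integers. Then there exist a completely multiplicative unimodular function f, a real ε > 0, and a positive integer N such that for every n ≥ N one has a n + b ≥ 1, c n + d ≥ 1, and |f(a n + b) − f(c n + d)| ≥ ε; in particular liminf_{n→∞} |f(a n + b) − f(c n + d)| > 0. -/
/-!
Take `f n = n ^ (i t)` with `t = π / log (a / c)`. Then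
`f (a n + b) / f (c n + d) = ((a n + b) / (c n + d)) ^ (i t) → (a / c) ^ (i t) = e ^ (i π) = -1`,
so `‖f (a n + b) - f (c n + d)‖ → 2`.
-/

open MeasureTheory Filter

open Complex Topology

lemma compMultUnimodular_natCast_cpow_ofReal_mul_I (t : ℝ) :
    CompMultUnimodular fun n : ℕ => (n : ℂ) ^ ((t : ℂ) * I) := by
  refine ⟨fun n hn => ?_, fun m n _ _ => by push_cast; exact natCast_mul_natCast_cpow m n _⟩
  simp [norm_natCast_cpow_of_pos hn]

lemma natCast_cpow_ofReal_mul_I {n : ℕ} (hn : n ≠ 0) (t : ℝ) :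
    (n : ℂ) ^ ((t : ℂ) * I) = exp ((t * Real.log n : ℝ) * I) := by
  rw [cpow_def_of_ne_zero (by exact_mod_cast hn), ← natCast_log]
  push_cast
  ring_nf

lemma norm_exp_mul_I_sub_exp_mul_I (θ φ : ℝ) :
    ‖exp (θ * I) - exp (φ * I)‖ = |2 * Real.sin ((θ - φ) / 2)| := by
  have h : exp (θ * I) - exp (φ * I) = exp (φ * I) * (exp (I * ↑(θ - φ)) - 1) := by
    rw [mul_sub, ← exp_add]
    push_cast
    ring_nf
  rw [h, norm_mul, norm_exp_ofReal_mul_I, one_mul, norm_exp_I_mul_ofReal_sub_one,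
    Real.norm_eq_abs]

lemma norm_natCast_cpow_sub_natCast_cpow {m n : ℕ} (hm : m ≠ 0) (hn : n ≠ 0) (t : ℝ) :
    ‖(m : ℂ) ^ ((t : ℂ) * I) - (n : ℂ) ^ ((t : ℂ) * I)‖ =
      |2 * Real.sin (t * (Real.log m - Real.log n) / 2)| := by
  rw [natCast_cpow_ofReal_mul_I hm, natCast_cpow_ofReal_mul_I hn, norm_exp_mul_I_sub_exp_mul_I,
    mul_sub]

lemma Real.tendsto_log_mul_add_sub_log {a : ℝ} (ha : 0 < a) (b : ℝ) :
    Tendsto (fun x => log (a * x + b) - log x) atTop (𝓝 (log a)) := by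
  have h := (tendsto_log_comp_add_sub_log (b / a)).const_add (log a)
  rw [add_zero] at h
  refine h.congr' ?_
  filter_upwards [eventually_gt_atTop (-(b / a))] with x hx
  rw [show a * x + b = a * (x + b / a) by field_simp, log_mul ha.ne' (by linarith)]
  ring

lemma Real.tendsto_log_mul_add_sub_log_mul_add {a c : ℝ} (ha : 0 < a) (hc : 0 < c) (b d : ℝ) :
    Tendsto (fun x => log (a * x + b) - log (c * x + d)) atTop (𝓝 (log a - log c)) :=
  ((tendsto_log_mul_add_sub_log ha b).sub (tendsto_log_mul_add_sub_log hc d)).congr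
    fun x => by ring

lemma eventually_one_le_natCast_mul_add {a : ℕ} (ha : 0 < a) (b : ℤ) :
    ∀ᶠ n : ℕ in atTop, 1 ≤ (a : ℤ) * n + b := by
  filter_upwards [eventually_ge_atTop (1 - b).toNat] with n hn
  have hbn : 1 - b ≤ n := (Int.self_le_toNat _).trans (by exact_mod_cast hn)
  have ha' : (1 : ℤ) ≤ a := by exact_mod_cast ha
  nlinarith

theorem separation_of_ne
    (a c : ℕ) (ha : 0 < a) (hc : 0 < c) (hne : a ≠ c) (b d : ℤ) :
    ∃ f : ℕ → ℂ, CompMultUnimodular f ∧ ∃ ε : ℝ, 0 < ε ∧ ∃ N : ℕ, 0 < N ∧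
      ∀ n : ℕ, N ≤ n → 1 ≤ (a : ℤ) * n + b ∧ 1 ≤ (c : ℤ) * n + d ∧
        ε ≤ ‖f (((a : ℤ) * n + b).toNat) - f (((c : ℤ) * n + d).toNat)‖ := by
  have hlog : Real.log a - Real.log c ≠ 0 := sub_ne_zero.mpr fun h =>
    hne (by exact_mod_cast Real.log_injOn_pos (by simpa using ha) (by simpa using hc) h)
  set t := Real.pi / (Real.log a - Real.log c)
  refine ⟨_, compMultUnimodular_natCast_cpow_ofReal_mul_I t, 1, one_pos, ?_⟩
  have hphase : Tendsto (fun n : ℕ => |2 * Real.sin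
      (t * (Real.log (a * n + b) - Real.log (c * n + d)) / 2)|) atTop (𝓝 2) := by
    have h := ((Real.tendsto_log_mul_add_sub_log_mul_add (a := a) (c := c) (by simpa using ha)
      (by simpa using hc) b d).comp tendsto_natCast_atTop_atTop).const_mul t
    rw [div_mul_cancel₀ _ hlog] at h
    have hcont : Continuous fun θ : ℝ => |2 * Real.sin (θ / 2)| := by fun_prop
    have hlim := (hcont.tendsto Real.pi).comp h
    rwa [Real.sin_pi_div_two, mul_one, abs_two] at hlim
  have key := (eventually_one_le_natCast_mul_add ha b).and
    ((eventually_one_le_natCast_mul_add hc d).and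
      (hphase.eventually (eventually_ge_nhds one_lt_two)))
  obtain ⟨N, hN⟩ := eventually_atTop.mp (key.and (eventually_gt_atTop 0))
  refine ⟨N, (hN N le_rfl).2, fun n hn => ?_⟩
  obtain ⟨⟨hA, hC, hsep⟩, -⟩ := hN n hn
  refine ⟨hA, hC, ?_⟩
  have hcast {z : ℤ} (hz : 1 ≤ z) : ((z.toNat : ℕ) : ℝ) = z := by
    rw [← Int.cast_natCast, Int.toNat_of_nonneg (by omega)]
  rw [norm_natCast_cpow_sub_natCast_cpow (by omega) (by omega), hcast hA, hcast hC]
  push_cast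
  exact hsep
end

section
/- Let a be a positive integer and b, d be nonzero integers with b ≠ d. Suppose p is a prime such that v_p(a) > max{v_p(b), v_p(d)} and v_p(b) = v_p(d). Then there exist a completely multiplicative unimodular function f, a real ε > 0, and a positive integer N such that for every n ≥ N one has a n + b ≥ 1, a n + d ≥ 1, and |f(a n + b) − f(a n + d)| ≥ ε; in particular liminf_{n→∞} |f(a n + b) − f(a n + d)| > 0. -/
open MeasureTheory Filter

/-!
Write `b = p^k b'`, `d = p^k d'` and `a = p^(k+1) c` with `p ∤ b' d'`, so that
`a n + b = p^k (p c n + b')` and likewise for `d`. Take `f(n) = χ(n')`, where `n'` is the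
prime-to-`p` part of `n` and `χ` is a Dirichlet character modulo `q = p^(v_p(b' - d') + 1)`.
Since `(p c n + b') d' - (p c n + d') b' = p c n (d' - b')` is divisible by `q`, the ratio of the
two arguments is the constant `b' / d'` modulo `q`, so `|f(a n + b) - f(a n + d)| = |χ(b') - χ(d')|`
for all large `n`. As `b' ≢ d' (mod q)`, some `χ` separates them, and this constant is positive.
-/

lemma Int.exists_eq_pow_padicValInt_mul_and_not_dvd {p : ℕ} [Fact p.Prime] {z : ℤ} (hz : z ≠ 0) :
    ∃ z', z = (p : ℤ) ^ padicValInt p z * z' ∧ ¬ (p : ℤ) ∣ z' := by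
  obtain ⟨z', hz'⟩ := padicValInt_dvd (p := p) z
  refine ⟨z', hz', fun ⟨w, hw⟩ ↦ ?_⟩
  have : (p : ℤ) ^ (padicValInt p z + 1) ∣ z := ⟨w, by rw [pow_succ, mul_assoc, ← hw]; exact hz'⟩
  rcases (padicValInt_dvd_iff _ z).mp this with h | h <;> omega

lemma isUnit_intCast_zmod_prime_pow {p : ℕ} (hp : p.Prime) (s : ℕ) {z : ℤ}
    (hz : ¬ (p : ℤ) ∣ z) : IsUnit (z : ZMod (p ^ s)) := by
  have hcop : IsCoprime z ((p ^ s : ℕ) : ℤ) := by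
    rw [Nat.cast_pow]
    exact ((Nat.prime_iff_prime_int.mp hp).coprime_iff_not_dvd.mpr hz).symm.pow_right
  exact IsUnit.of_mul_eq_one _ (ZMod.coe_int_mul_inv_eq_one hcop)

lemma ordCompl_toNat_pow_mul_of_not_dvd {p : ℕ} (hp : p.Prime) (k : ℕ) {z : ℤ} (hz₀ : 0 ≤ z)
    (hz : ¬ (p : ℤ) ∣ z) : ((ordCompl[p] ((p : ℤ) ^ k * z).toNat : ℕ) : ℤ) = z := by
  lift z to ℕ using hz₀
  rw [← Nat.cast_pow, ← Nat.cast_mul, Int.toNat_natCast,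
    Nat.ordCompl_pow_mul_of_not_dvd k hp (by exact_mod_cast hz)]

lemma compMultUnimodular_ordCompl {p : ℕ} (hp : p.Prime) {s : ℕ}
    (χ : DirichletCharacter ℂ (p ^ s)) : CompMultUnimodular (fun n ↦ χ (ordCompl[p] n)) := by
  refine ⟨fun n hn ↦ ?_, fun m n _ _ ↦ by simp only [Nat.ordCompl_mul, Nat.cast_mul, map_mul]⟩
  have hu : IsUnit ((ordCompl[p] n : ℕ) : ZMod (p ^ s)) :=
    (ZMod.isUnit_iff_coprime _ _).mpr ((Nat.coprime_ordCompl hp (by omega)).symm.pow_right s)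
  simpa using χ.unit_norm_eq_one hu.unit

lemma DirichletCharacter.norm_sub_eq_of_mul_eq {F : Type*} [NormedField F] {n : ℕ}
    (χ : DirichletCharacter F n) {x y u v : ZMod n} (hy : IsUnit y) (hv : IsUnit v)
    (h : x * v = y * u) : ‖χ x - χ y‖ = ‖χ u - χ v‖ := by
  have hnorm {w : ZMod n} (hw : IsUnit w) : ‖χ w‖ = 1 := by simpa using χ.unit_norm_eq_one hw.unit
  have hχ : χ x * χ v = χ y * χ u := by rw [← map_mul, h, map_mul]
  calc ‖χ x - χ y‖ = ‖(χ x - χ y) * χ v‖ := by rw [norm_mul, hnorm hv, mul_one]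
    _ = ‖χ y * (χ u - χ v)‖ := by congr 1; linear_combination hχ
    _ = ‖χ u - χ v‖ := by rw [norm_mul, hnorm hy, one_mul]

lemma DirichletCharacter.exists_apply_ne_apply {n : ℕ} [NeZero n] {u v : ZMod n}
    (hv : IsUnit v) (huv : u ≠ v) : ∃ χ : DirichletCharacter ℂ n, χ u ≠ χ v := by
  obtain ⟨w, rfl⟩ := hv
  obtain ⟨χ, hχ⟩ := exists_apply_ne_one_of_hasEnoughRootsOfUnity ℂ
    (mt Units.mul_inv_eq_one.mp huv)
  refine ⟨χ, fun h ↦ hχ ?_⟩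
  rw [map_mul, h, ← map_mul, Units.mul_inv, map_one]

lemma exists_dirichletCharacter_apply_ne_of_not_dvd {p : ℕ} (hp : p.Prime) {b d : ℤ}
    (hbd : b ≠ d) (hd : ¬ (p : ℤ) ∣ d) :
    ∃ χ : DirichletCharacter ℂ (p ^ (padicValInt p (d - b) + 1)), χ b ≠ χ d := by
  have := Fact.mk hp
  have hdvd : ¬ ((p ^ (padicValInt p (d - b) + 1) : ℕ) : ℤ) ∣ d - b := by
    rw [Nat.cast_pow, padicValInt_dvd_iff]
    have : d - b ≠ 0 := sub_ne_zero.mpr hbd.symm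
    omega
  exact DirichletCharacter.exists_apply_ne_apply (isUnit_intCast_zmod_prime_pow hp _ hd)
    (mt (ZMod.intCast_eq_intCast_iff_dvd_sub _ _ _).mp hdvd)

lemma intCast_mul_add_mul_eq_of_pow_dvd_sub {p v : ℕ} {b d : ℤ} (h : (p : ℤ) ^ v ∣ d - b) (t : ℤ) :
    ((p * t + b : ℤ) : ZMod (p ^ (v + 1))) * d = ((p * t + d : ℤ) : ZMod (p ^ (v + 1))) * b := by
  obtain ⟨e, he⟩ := h
  rw [← Int.cast_mul, ← Int.cast_mul, ZMod.intCast_eq_intCast_iff_dvd_sub]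
  exact ⟨-(t * e), by push_cast; linear_combination -(p * t) * he⟩

lemma norm_sub_apply_ordCompl_eq {p : ℕ} (hp : p.Prime) {b d : ℤ} (hb : ¬ (p : ℤ) ∣ b)
    (hd : ¬ (p : ℤ) ∣ d) (χ : DirichletCharacter ℂ (p ^ (padicValInt p (d - b) + 1))) (k : ℕ)
    (t : ℤ) (hb₀ : 0 < (p : ℤ) ^ k * (p * t + b)) (hd₀ : 0 < (p : ℤ) ^ k * (p * t + d)) :
    ‖χ (ordCompl[p] ((p : ℤ) ^ k * (p * t + b)).toNat) -
      χ (ordCompl[p] ((p : ℤ) ^ k * (p * t + d)).toNat)‖ = ‖χ b - χ d‖ := by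
  have hnd {z : ℤ} (hz : ¬ (p : ℤ) ∣ z) : ¬ (p : ℤ) ∣ p * t + z :=
    (dvd_add_right (dvd_mul_right _ t)).not.mpr hz
  have happly {z : ℤ} (hz : ¬ (p : ℤ) ∣ z) (hz₀ : 0 < (p : ℤ) ^ k * (p * t + z)) :
      χ (ordCompl[p] ((p : ℤ) ^ k * (p * t + z)).toNat) = χ (p * t + z : ℤ) := by
    have h₀ := (pos_of_mul_pos_right hz₀ (by positivity)).le
    rw [← Int.cast_natCast, ordCompl_toNat_pow_mul_of_not_dvd hp k h₀ (hnd hz)]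
  rw [happly hb hb₀, happly hd hd₀]
  exact χ.norm_sub_eq_of_mul_eq (isUnit_intCast_zmod_prime_pow hp _ (hnd hd))
    (isUnit_intCast_zmod_prime_pow hp _ hd)
    (intCast_mul_add_mul_eq_of_pow_dvd_sub (padicValInt_dvd _) t)

lemma one_le_mul_add_of_natAbs_lt {a : ℕ} (ha : 0 < a) {b : ℤ} {n : ℕ} (hn : b.natAbs < n) :
    1 ≤ (a : ℤ) * n + b := by
  have han : (n : ℤ) ≤ a * n := le_mul_of_one_le_left (by positivity) (by exact_mod_cast ha)
  omega

theorem separation_of_equal_valuation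
    (a : ℕ) (ha : 0 < a) (b d : ℤ) (hb : b ≠ 0) (hd : d ≠ 0) (hbd : b ≠ d)
    (p : ℕ) (hp : p.Prime)
    (hval : max (padicValInt p b) (padicValInt p d) < padicValInt p (a : ℤ))
    (heq : padicValInt p b = padicValInt p d) :
    ∃ f : ℕ → ℂ, CompMultUnimodular f ∧ ∃ ε : ℝ, 0 < ε ∧ ∃ N : ℕ, 0 < N ∧
      ∀ n : ℕ, N ≤ n → 1 ≤ (a : ℤ) * n + b ∧ 1 ≤ (a : ℤ) * n + d ∧
        ε ≤ ‖f (((a : ℤ) * n + b).toNat) - f (((a : ℤ) * n + d).toNat)‖ := by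
  have := Fact.mk hp
  obtain ⟨b', hb', hpb'⟩ := Int.exists_eq_pow_padicValInt_mul_and_not_dvd (p := p) hb
  obtain ⟨d', hd', hpd'⟩ := Int.exists_eq_pow_padicValInt_mul_and_not_dvd (p := p) hd
  set k := padicValInt p b
  rw [← heq] at hd' hval
  obtain ⟨c, hc⟩ : (p : ℤ) ^ (k + 1) ∣ a :=
    (padicValInt_dvd_iff _ _).mpr (Or.inr (by rwa [max_self] at hval))
  obtain ⟨χ, hχ⟩ := exists_dirichletCharacter_apply_ne_of_not_dvd hp
    (fun h : b' = d' ↦ hbd (by rw [hb', hd', h])) hpd'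
  refine ⟨_, compMultUnimodular_ordCompl hp χ, _, norm_pos_iff.mpr (sub_ne_zero.mpr hχ),
    b.natAbs + d.natAbs + 1, by omega, fun n hn ↦ ?_⟩
  have hx : (a : ℤ) * n + b = p ^ k * (p * (c * n) + b') := by rw [hc, hb']; ring
  have hy : (a : ℤ) * n + d = p ^ k * (p * (c * n) + d') := by rw [hc, hd']; ring
  have hb₁ := one_le_mul_add_of_natAbs_lt ha (b := b) (n := n) (by omega)
  have hd₁ := one_le_mul_add_of_natAbs_lt ha (b := d) (n := n) (by omega)
  refine ⟨hb₁, hd₁, le_of_eq ?_⟩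
  rw [hx, hy, norm_sub_apply_ordCompl_eq hp hpb' hpd' χ k _ (by omega) (by omega)]
end

section
/- Let a be a positive integer and b, d be integers with a dividing lcm(b, d). Then for every probability space (X, μ), every family (T_n)_{n ≥ 1} of measurable, measure-preserving maps X → X satisfying T_{m n} = T_m ∘ T_n for all m, n ≥ 1, and every measurable set B ⊆ X with μ(B) > 0, the set of positive integers n such that a n + b ≥ 1, a n + d ≥ 1, and μ(T_{a n + b}^{-1} B ∩ T_{a n + d}^{-1} B) > 0 has positive lower asymptotic density. -/
open MeasureTheory Filter

/-- Lower asymptotic density of a set of positive integers. -/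
noncomputable def lowerDensity (A : Set ℕ) : ℝ :=
  Filter.atTop.liminf fun N : ℕ => (Nat.card ↥(A ∩ Set.Icc 1 N) : ℝ) / (N : ℝ)

open Finset

/-- Weak divisibility sequences. -/
lemma exists_weakdiv (R : ℕ) :
    ∃ e : ℕ → ℕ, (∀ i, i < R → 0 < e i) ∧
      (∀ i j, i < j → j < R → e i < e j) ∧
      (∀ i j, i < j → j < R → (e j - e i) ∣ e i) := by
  induction R with
  | zero => exact ⟨fun _ => 1, by omega, by omega, by omega⟩
  | succ R ih =>
    obtain ⟨e, hpos, hmono, hdvd⟩ := ih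
    set M : ℕ := (∏ i ∈ Finset.range R, e i) *
        ∏ p ∈ (Finset.range R ×ˢ Finset.range R).filter (fun p : ℕ × ℕ => p.1 < p.2),
          (e p.2 - e p.1) with hM
    have hMpos : 0 < M := by
      apply Nat.mul_pos
      · exact Finset.prod_pos (fun i hi => hpos i (Finset.mem_range.1 hi))
      · refine Finset.prod_pos (fun (p : ℕ × ℕ) hp => ?_)
        simp only [Finset.mem_filter, Finset.mem_product, Finset.mem_range] at hp
        have := hmono p.1 p.2 hp.2 hp.1.2
        omega
    have hdvdM1 : ∀ i, i < R → e i ∣ M := fun i hi =>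
      Dvd.dvd.mul_right (Finset.dvd_prod_of_mem e (Finset.mem_range.2 hi)) _
    have hdvdM2 : ∀ i j, i < j → j < R → (e j - e i) ∣ M := by
      intro i j hij hj
      apply Dvd.dvd.mul_left
      have hmem : ((i, j) : ℕ × ℕ) ∈
          (Finset.range R ×ˢ Finset.range R).filter (fun p : ℕ × ℕ => p.1 < p.2) := by
        simp only [Finset.mem_filter, Finset.mem_product, Finset.mem_range]
        exact ⟨⟨by omega, hj⟩, hij⟩
      exact Finset.dvd_prod_of_mem (fun p : ℕ × ℕ => e p.2 - e p.1) hmem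
    refine ⟨fun i => if i = 0 then M else M + e (i - 1), ?_, ?_, ?_⟩
    · intro i _
      dsimp only
      by_cases h : i = 0
      · rw [if_pos h]; exact hMpos
      · rw [if_neg h]; omega
    · intro i j hij hj
      dsimp only
      have hj0 : j ≠ 0 := by omega
      rw [if_neg hj0]
      by_cases hi : i = 0
      · rw [if_pos hi]
        have : 0 < e (j-1) := hpos _ (by omega)
        omega
      · rw [if_neg hi]
        have : e (i-1) < e (j-1) := hmono _ _ (by omega) (by omega)
        omega
    · intro i j hij hj
      dsimp only
      have hj0 : j ≠ 0 := by omega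
      rw [if_neg hj0]
      by_cases hi : i = 0
      · rw [if_pos hi]
        have h1 : M + e (j-1) - M = e (j-1) := by omega
        rw [h1]
        exact hdvdM1 _ (by omega)
      · rw [if_neg hi]
        have hlt : e (i-1) < e (j-1) := hmono _ _ (by omega) (by omega)
        have h1 : M + e (j-1) - (M + e (i-1)) = e (j-1) - e (i-1) := by omega
        rw [h1]
        exact Nat.dvd_add (hdvdM2 _ _ (by omega) (by omega)) (hdvd _ _ (by omega) (by omega))

lemma prime_pow_dvd_lcm {p k m n : ℕ} (hp : p.Prime) (h : p ^ k ∣ Nat.lcm m n) :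
    p ^ k ∣ m ∨ p ^ k ∣ n := by
  rcases Nat.eq_zero_or_pos m with hm | hm
  · left; simp [hm]
  rcases Nat.eq_zero_or_pos n with hn | hn
  · right; simp [hn]
  have hl : Nat.lcm m n ≠ 0 := Nat.lcm_ne_zero hm.ne' hn.ne'
  have hk := (hp.pow_dvd_iff_le_factorization hl).1 h
  rw [Nat.factorization_lcm hm.ne' hn.ne'] at hk
  have hk' : k ≤ max (m.factorization p) (n.factorization p) := by
    simpa [Finsupp.sup_apply] using hk
  rcases le_max_iff.1 hk' with h' | h'
  · left; exact (hp.pow_dvd_iff_le_factorization hm.ne').2 h'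
  · right; exact (hp.pow_dvd_iff_le_factorization hn.ne').2 h'

/-- A divisor of a lcm splits as a product of coprime divisors of the two arguments. -/
lemma dvd_lcm_split : ∀ (a m n : ℕ), a ∣ Nat.lcm m n →
    ∃ u v, a = u * v ∧ Nat.Coprime u v ∧ u ∣ m ∧ v ∣ n := by
  intro a
  induction a using Nat.strong_induction_on with
  | _ a ih =>
    intro m n ha
    rcases Nat.eq_zero_or_pos a with rfl | hapos
    · have h0 : Nat.lcm m n = 0 := Nat.eq_zero_of_zero_dvd ha
      have hmn : m * n = 0 := by
        have := Nat.gcd_mul_lcm m n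
        rw [h0] at this
        omega
      rcases Nat.mul_eq_zero.1 hmn with rfl | rfl
      · exact ⟨0, 1, by ring, Nat.coprime_one_right 0, dvd_refl 0, one_dvd n⟩
      · exact ⟨1, 0, by ring, Nat.coprime_one_left 0, one_dvd m, dvd_refl 0⟩
    rcases eq_or_lt_of_le (Nat.succ_le_of_lt hapos) with h1 | h1
    · exact ⟨1, 1, by omega, Nat.coprime_one_left 1, one_dvd m, one_dvd n⟩
    set p := a.minFac with hp_def
    have hp : p.Prime := Nat.minFac_prime (by omega)
    set k := a.factorization p with hk_def
    have hkpos : 0 < k := hp.factorization_pos_of_dvd (by omega) (Nat.minFac_dvd a)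
    set q := p ^ k with hq_def
    have hqa : q ∣ a := Nat.ordProj_dvd a p
    set a' := a / q with ha'_def
    have haa' : q * a' = a := Nat.ordProj_mul_ordCompl_eq_self a p
    have hpa' : ¬ p ∣ a' := Nat.not_dvd_ordCompl hp (by omega)
    have hq1 : 1 < q := by
      have h2 : p ≤ p ^ k := Nat.le_self_pow hkpos.ne' p
      have := hp.one_lt
      omega
    have ha'lt : a' < a := Nat.div_lt_self (by omega) hq1
    have ha'a : a' ∣ a := ⟨q, by rw [← haa']; ring⟩
    obtain ⟨u, v, huv, hco, hum, hvn⟩ := ih a' ha'lt m n (ha'a.trans ha)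
    have hua' : u ∣ a' := huv ▸ Dvd.intro v rfl
    have hva' : v ∣ a' := huv ▸ Dvd.intro_left u rfl
    have hqcop : ∀ w, w ∣ a' → Nat.Coprime q w := by
      intro w hw
      exact Nat.Coprime.pow_left _ ((hp.coprime_iff_not_dvd).2 (fun hpw => hpa' (hpw.trans hw)))
    rcases prime_pow_dvd_lcm hp (hqa.trans ha) with hqm | hqn
    · refine ⟨q * u, v, ?_, ?_, ?_, hvn⟩
      · rw [← haa', huv]; ring
      · exact Nat.coprime_mul_iff_left.2 ⟨hqcop v hva', hco⟩
      · exact (hqcop u hua').mul_dvd_of_dvd_of_dvd hqm hum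
    · refine ⟨u, q * v, ?_, ?_, hum, ?_⟩
      · rw [← haa', huv]; ring
      · exact Nat.coprime_mul_iff_right.2 ⟨(hqcop u hua').symm, hco⟩
      · exact (hqcop v hva').mul_dvd_of_dvd_of_dvd hqn hvn

lemma natCoprime_int {x y : ℕ} (h : Nat.Coprime x y) : IsCoprime (x : ℤ) (y : ℤ) := by
  rw [Int.isCoprime_iff_gcd_eq_one, Int.gcd_natCast_natCast]; exact h

lemma coprime_succ_nat (n : ℕ) : Nat.Coprime n (n+1) := by
  have : Nat.gcd n (n+1) = Nat.gcd n 1 := by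
    conv_lhs => rw [Nat.gcd_comm, Nat.gcd_rec]
    simp [Nat.add_mod_left]
  simpa [Nat.Coprime, this]

/-- The key clique construction. -/
lemma clique_exists (ab ad R : ℕ) (hab : 0 < ab) (had : 0 < ad) (hco : Nat.Coprime ab ad) :
    ∃ δ : ℕ → ℕ, (∀ i, i < R → 0 < δ i) ∧ (∀ i j, i < j → j < R → δ i < δ j) ∧
      ∀ i j, i < j → j < R →
        ((ab : ℤ) * ((δ j : ℤ) - (δ i : ℤ))) ∣ (δ i : ℤ) ∧
        ((ad : ℤ) * ((δ j : ℤ) - (δ i : ℤ))) ∣ (δ j : ℤ) := by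
  obtain ⟨e, hepos, hemono, hedvd⟩ := exists_weakdiv R
  set Eb : ℕ := (Finset.range R).sup e + 1 with hEb
  have hEb_gt : ∀ i, i < R → e i < Eb := fun i hi =>
    Nat.lt_succ_of_le (Finset.le_sup (Finset.mem_range.2 hi))
  set A : ℕ := ab with hA
  set Bb : ℕ := ad * (ab + 1) with hBb
  have hApos : 0 < A := hab
  have hBpos : 0 < Bb := by positivity
  have hBgt : A < Bb := by
    have := Nat.le_mul_of_pos_left (ab + 1) had
    omega
  have hcoAB : Nat.Coprime A Bb := by
    rw [hBb, Nat.coprime_mul_iff_right]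
    exact ⟨hco, coprime_succ_nat ab⟩
  have hCpos : ∀ m : ℕ, 1 ≤ m → A ^ m < Bb ^ m := fun m hm =>
    Nat.pow_lt_pow_left hBgt (by omega)
  have hcopA : ∀ m : ℕ, 1 ≤ m → Nat.Coprime A (Bb ^ m - A ^ m) := by
    intro m hm
    have h2 : Nat.gcd A (Bb ^ m - A ^ m) ∣ A ^ m :=
      (Nat.gcd_dvd_left _ _).trans (dvd_pow_self A (by omega))
    have h3 := Nat.gcd_dvd_right A (Bb ^ m - A ^ m)
    have h1 : Nat.gcd A (Bb ^ m - A ^ m) ∣ Bb ^ m := by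
      have h4 : Bb ^ m - A ^ m + A ^ m = Bb ^ m := Nat.sub_add_cancel (le_of_lt (hCpos m hm))
      have h6 := Nat.dvd_add h3 h2
      rwa [h4] at h6
    have h5 : Nat.gcd A (Bb ^ m - A ^ m) ∣ Nat.gcd A (Bb ^ m) :=
      Nat.dvd_gcd (Nat.gcd_dvd_left _ _) h1
    exact Nat.eq_one_of_dvd_one ((Nat.Coprime.pow_right m hcoAB) ▸ h5)
  have hcopB : ∀ m : ℕ, 1 ≤ m → Nat.Coprime Bb (Bb ^ m - A ^ m) := by
    intro m hm
    have h2 : Nat.gcd Bb (Bb ^ m - A ^ m) ∣ Bb ^ m :=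
      (Nat.gcd_dvd_left _ _).trans (dvd_pow_self Bb (by omega))
    have h3 := Nat.gcd_dvd_right Bb (Bb ^ m - A ^ m)
    have h1 : Nat.gcd Bb (Bb ^ m - A ^ m) ∣ A ^ m := by
      have h4 : Bb ^ m - (Bb ^ m - A ^ m) = A ^ m := by
        have := hCpos m hm; omega
      have h6 := Nat.dvd_sub h2 h3
      rwa [h4] at h6
    have h5 : Nat.gcd Bb (Bb ^ m - A ^ m) ∣ Nat.gcd Bb (A ^ m) :=
      Nat.dvd_gcd (Nat.gcd_dvd_left _ _) h1
    exact Nat.eq_one_of_dvd_one ((Nat.Coprime.pow_right m hcoAB.symm) ▸ h5)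
  set M1 : ℕ := ∏ m ∈ Finset.Icc 1 Eb, (Bb ^ m - A ^ m) with hM1
  set M2 : ℕ := (A * Bb) ^ Eb with hM2
  have hM1pos : 0 < M1 := Finset.prod_pos (fun m hm => by
    have := hCpos m (Finset.mem_Icc.1 hm).1; omega)
  have hM2pos : 0 < M2 := pow_pos (Nat.mul_pos hApos hBpos) _
  have hcoM : Nat.Coprime M2 M1 := by
    apply Nat.Coprime.pow_left
    apply Nat.Coprime.prod_right
    intro m hm
    have hm1 := (Finset.mem_Icc.1 hm).1
    exact Nat.coprime_mul_iff_left.2 ⟨hcopA m hm1, hcopB m hm1⟩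
  have hgcd1 : Int.gcd (M2 : ℤ) (M1 : ℤ) = 1 := by
    rw [Int.gcd_natCast_natCast]; exact hcoM
  set u : ℤ := Int.gcdA (M2 : ℤ) (M1 : ℤ) with hu
  set v : ℤ := Int.gcdB (M2 : ℤ) (M1 : ℤ) with hv
  have hbez : (M2 : ℤ) * u + (M1 : ℤ) * v = 1 := by
    have h := Int.gcd_eq_gcd_ab (M2 : ℤ) (M1 : ℤ)
    rw [hgcd1] at h
    exact_mod_cast h.symm
  set W0 : ℤ := -((A : ℤ) ^ Eb) * ((M2 : ℤ) * u) with hW0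
  set t : ℕ := W0.natAbs + 1 with ht
  set W : ℤ := W0 + (t : ℤ) * ((M2 : ℤ) * (M1 : ℤ)) with hW
  have hWM2 : (M2 : ℤ) ∣ W := ⟨-((A : ℤ) ^ Eb) * u + (t : ℤ) * (M1 : ℤ), by rw [hW, hW0]; ring⟩
  have hWM1 : (M1 : ℤ) ∣ W + (A : ℤ) ^ Eb :=
    ⟨(A : ℤ) ^ Eb * v + (t : ℤ) * (M2 : ℤ), by
      rw [hW, hW0]; linear_combination (-(A : ℤ) ^ Eb) * hbez⟩
  have hWpos : 1 ≤ W := by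
    have h1 : (1 : ℤ) ≤ (M2 : ℤ) * (M1 : ℤ) := by
      have h0 : (1 : ℕ) ≤ M2 * M1 := Nat.mul_pos hM2pos hM1pos
      exact_mod_cast h0
    have h2 : -W0 ≤ (W0.natAbs : ℤ) := by
      rw [← Int.natAbs_neg]
      exact Int.le_natAbs
    have h3 : ((W0.natAbs : ℤ) + 1) * 1 ≤ ((W0.natAbs : ℤ) + 1) * ((M2 : ℤ) * (M1 : ℤ)) := by
      apply mul_le_mul_of_nonneg_left h1
      positivity
    rw [hW, ht]
    rw [Nat.cast_add, Nat.cast_one]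
    linarith
  set st : ℕ → ℕ := fun i => A ^ (Eb - e i) * Bb ^ (e i) with hst
  have hstpos : ∀ i, 0 < st i := fun i => Nat.mul_pos (pow_pos hApos _) (pow_pos hBpos _)
  set δ : ℕ → ℕ := fun i => (W + (st i : ℤ)).toNat with hδdef
  have hδval : ∀ i, (δ i : ℤ) = W + (st i : ℤ) := by
    intro i
    simp only [hδdef]
    apply Int.toNat_of_nonneg
    have h0 : (0:ℤ) < st i := by exact_mod_cast hstpos i
    omega
  have hstcast : ∀ i, (st i : ℤ) = (A : ℤ) ^ (Eb - e i) * (Bb : ℤ) ^ (e i) := by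
    intro i; simp only [hst]; push_cast; ring
  have F1 : ∀ i j, i < j → j < R →
      (st j : ℤ) - (st i : ℤ) =
        (A : ℤ) ^ (Eb - e j) * (Bb : ℤ) ^ (e i) *
          ((Bb : ℤ) ^ (e j - e i) - (A : ℤ) ^ (e j - e i)) := by
    intro i j hij hj
    have hij' := hemono i j hij hj
    have hjE := hEb_gt j hj
    have h1 : Eb - e i = (Eb - e j) + (e j - e i) := by omega
    have h2 : e j = e i + (e j - e i) := by omega
    rw [hstcast i, hstcast j]
    calc (A : ℤ) ^ (Eb - e j) * (Bb : ℤ) ^ (e j) - (A : ℤ) ^ (Eb - e i) * (Bb : ℤ) ^ (e i)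
        = (A : ℤ) ^ (Eb - e j) * (Bb : ℤ) ^ (e i + (e j - e i)) -
            (A : ℤ) ^ ((Eb - e j) + (e j - e i)) * (Bb : ℤ) ^ (e i) := by
          rw [← h1, ← h2]
      _ = _ := by rw [pow_add, pow_add]; ring
  have hstmono : ∀ i j, i < j → j < R → (st i : ℤ) < (st j : ℤ) := by
    intro i j hij hj
    have hCz : (0:ℤ) < (Bb : ℤ) ^ (e j - e i) - (A : ℤ) ^ (e j - e i) := by
      have h1 : A ^ (e j - e i) < Bb ^ (e j - e i) := hCpos _ (by
        have := hemono i j hij hj; omega)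
      have h2 : ((A ^ (e j - e i) : ℕ) : ℤ) < ((Bb ^ (e j - e i) : ℕ) : ℤ) := by exact_mod_cast h1
      push_cast at h2
      omega
    have hF := F1 i j hij hj
    have hP := pow_pos (show (0:ℤ) < A by exact_mod_cast hApos) (Eb - e j)
    have hQ := pow_pos (show (0:ℤ) < Bb by exact_mod_cast hBpos) (e i)
    have hprod := mul_pos (mul_pos hP hQ) hCz
    linarith
  refine ⟨δ, ?_, ?_, ?_⟩
  · intro i _
    have h := hδval i
    have h0 : (0:ℤ) < (δ i : ℤ) := by
      rw [h]
      have h1 : (0:ℤ) < st i := by exact_mod_cast hstpos i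
      omega
    exact_mod_cast h0
  · intro i j hij hj
    have h0 : (δ i : ℤ) < (δ j : ℤ) := by
      rw [hδval i, hδval j]
      have := hstmono i j hij hj
      omega
    exact_mod_cast h0
  · intro i j hij hj
    set m : ℕ := e j - e i with hm
    have hij' := hemono i j hij hj
    have hjE := hEb_gt j hj
    have hiE : e i < Eb := hEb_gt i (by omega)
    have hm1 : 1 ≤ m := by omega
    have hmEb : m ≤ Eb := by omega
    have hmei : m ∣ e i := hedvd i j hij hj
    have hmej : m ∣ e j := by
      have h2 : e j = e i + m := by omega
      exact h2 ▸ Nat.dvd_add hmei dvd_rfl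
    have hCcast : ((Bb ^ m - A ^ m : ℕ) : ℤ) = (Bb : ℤ) ^ m - (A : ℤ) ^ m := by
      have h0 := hCpos m hm1
      rw [Nat.cast_sub (le_of_lt h0)]
      push_cast
      ring
    set CmZ : ℤ := (Bb : ℤ) ^ m - (A : ℤ) ^ m with hCmZ
    have hD : (δ j : ℤ) - (δ i : ℤ) = (A : ℤ) ^ (Eb - e j) * (Bb : ℤ) ^ (e i) * CmZ := by
      rw [hδval i, hδval j]
      have hF := F1 i j hij hj
      rw [hCmZ, hm]
      linarith
    have hAW : ∀ k, k ≤ Eb → (A : ℤ) ^ k ∣ W := by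
      intro k hk
      refine dvd_trans ?_ hWM2
      refine (pow_dvd_pow _ hk).trans ?_
      have h0 : ((M2 : ℕ) : ℤ) = (A : ℤ) ^ Eb * (Bb : ℤ) ^ Eb := by
        rw [hM2]; push_cast; rw [mul_pow]
      rw [h0]
      exact dvd_mul_right _ _
    have hBW : ∀ k, k ≤ Eb → (Bb : ℤ) ^ k ∣ W := by
      intro k hk
      refine dvd_trans ?_ hWM2
      refine (pow_dvd_pow _ hk).trans ?_
      have h0 : ((M2 : ℕ) : ℤ) = (A : ℤ) ^ Eb * (Bb : ℤ) ^ Eb := by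
        rw [hM2]; push_cast; rw [mul_pow]
      rw [h0]
      exact dvd_mul_left _ _
    have hCmM1 : CmZ ∣ (M1 : ℤ) := by
      rw [← hCcast]
      exact Int.natCast_dvd_natCast.2
        (Finset.dvd_prod_of_mem (fun m => Bb ^ m - A ^ m) (Finset.mem_Icc.2 ⟨hm1, hmEb⟩))
    have hCmW : CmZ ∣ W + (A : ℤ) ^ Eb := hCmM1.trans hWM1
    have hCmWst : ∀ x, x < R → m ∣ e x → CmZ ∣ W + (st x : ℤ) := by
      intro x hx hmex
      obtain ⟨c, hc⟩ := hmex
      have hxE : e x < Eb := hEb_gt x hx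
      have h1 : W + (st x : ℤ) = (W + (A : ℤ) ^ Eb) + ((st x : ℤ) - (A : ℤ) ^ Eb) := by ring
      rw [h1]
      refine dvd_add hCmW ?_
      have h2 : (st x : ℤ) - (A : ℤ) ^ Eb =
          (A : ℤ) ^ (Eb - e x) * ((Bb : ℤ) ^ (e x) - (A : ℤ) ^ (e x)) := by
        rw [hstcast x]
        have h3 : Eb = (Eb - e x) + e x := by omega
        calc (A : ℤ) ^ (Eb - e x) * (Bb : ℤ) ^ (e x) - (A : ℤ) ^ Eb
            = (A : ℤ) ^ (Eb - e x) * (Bb : ℤ) ^ (e x) - (A : ℤ) ^ ((Eb - e x) + e x) := by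
              rw [← h3]
          _ = _ := by rw [pow_add]; ring
      rw [h2]
      apply Dvd.dvd.mul_left
      rw [hc, pow_mul, pow_mul]
      exact sub_dvd_pow_sub_pow _ _ c
    have hcopApow : ∀ k l : ℕ, Nat.Coprime (A ^ k) (Bb ^ l) :=
      fun k l => Nat.Coprime.pow_left _ (Nat.Coprime.pow_right _ hcoAB)
    constructor
    · -- ab side
      have d1 : (A : ℤ) ^ (Eb - e j + 1) ∣ W + (st i : ℤ) := by
        have hle : Eb - e j + 1 ≤ Eb - e i := by omega
        refine dvd_add ((pow_dvd_pow _ (by omega : Eb - e j + 1 ≤ Eb)).trans (hAW Eb le_rfl)) ?_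
        refine (pow_dvd_pow _ hle).trans ?_
        rw [hstcast i]
        exact dvd_mul_right _ _
      have d2 : (Bb : ℤ) ^ (e i) ∣ W + (st i : ℤ) := by
        refine dvd_add (hBW (e i) (by omega)) ?_
        rw [hstcast i]
        exact dvd_mul_left _ _
      have d3 : CmZ ∣ W + (st i : ℤ) := hCmWst i (by omega) hmei
      have ic1 : IsCoprime ((A : ℤ) ^ (Eb - e j + 1)) ((Bb : ℤ) ^ (e i)) := by
        have h0 := natCoprime_int (hcopApow (Eb - e j + 1) (e i))
        push_cast at h0
        exact h0
      have ic2 : IsCoprime ((A : ℤ) ^ (Eb - e j + 1) * (Bb : ℤ) ^ (e i)) CmZ := by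
        have hn : Nat.Coprime (A ^ (Eb - e j + 1) * Bb ^ (e i)) (Bb ^ m - A ^ m) :=
          Nat.coprime_mul_iff_left.2
            ⟨Nat.Coprime.pow_left _ (hcopA m hm1), Nat.Coprime.pow_left _ (hcopB m hm1)⟩
        have h0 := natCoprime_int hn
        rw [hCcast] at h0
        push_cast at h0
        exact h0
      have dall : (A : ℤ) ^ (Eb - e j + 1) * (Bb : ℤ) ^ (e i) * CmZ ∣ W + (st i : ℤ) :=
        ic2.mul_dvd (ic1.mul_dvd d1 d2) d3
      have heq : (ab : ℤ) * ((δ j : ℤ) - (δ i : ℤ)) =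
          (A : ℤ) ^ (Eb - e j + 1) * (Bb : ℤ) ^ (e i) * CmZ := by
        rw [hD, pow_succ, hA]
        ring
      rw [heq, hδval i]
      exact dall
    · -- ad side
      have d1 : (A : ℤ) ^ (Eb - e j) ∣ W + (st j : ℤ) := by
        refine dvd_add (hAW _ (by omega)) ?_
        rw [hstcast j]
        exact dvd_mul_right _ _
      have d2 : (ad : ℤ) * (Bb : ℤ) ^ (e i) ∣ W + (st j : ℤ) := by
        have h1 : (ad : ℤ) * (Bb : ℤ) ^ (e i) ∣ (Bb : ℤ) ^ (e i + 1) := by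
          refine ⟨((ab : ℤ) + 1), ?_⟩
          rw [pow_succ, hBb]
          push_cast
          ring
        refine h1.trans ?_
        refine (pow_dvd_pow _ (by omega : e i + 1 ≤ e j)).trans ?_
        refine dvd_add ((pow_dvd_pow _ (le_of_lt hjE)).trans (hBW Eb le_rfl)) ?_
        rw [hstcast j]
        exact dvd_mul_left _ _
      have d3 : CmZ ∣ W + (st j : ℤ) := hCmWst j hj hmej
      have ic1 : IsCoprime ((A : ℤ) ^ (Eb - e j)) ((ad : ℤ) * (Bb : ℤ) ^ (e i)) := by
        have hn : Nat.Coprime (A ^ (Eb - e j)) (ad * Bb ^ (e i)) :=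
          Nat.coprime_mul_iff_right.2
            ⟨Nat.Coprime.pow_left _ hco, hcopApow _ _⟩
        have h0 := natCoprime_int hn
        push_cast at h0
        exact h0
      have ic2 : IsCoprime ((A : ℤ) ^ (Eb - e j) * ((ad : ℤ) * (Bb : ℤ) ^ (e i))) CmZ := by
        have hadB : ad ∣ Bb := Dvd.intro _ rfl
        have hn : Nat.Coprime (A ^ (Eb - e j) * (ad * Bb ^ (e i))) (Bb ^ m - A ^ m) := by
          rw [Nat.coprime_mul_iff_left, Nat.coprime_mul_iff_left]
          exact ⟨Nat.Coprime.pow_left _ (hcopA m hm1),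
            Nat.Coprime.coprime_dvd_left hadB (hcopB m hm1),
            Nat.Coprime.pow_left _ (hcopB m hm1)⟩
        have h0 := natCoprime_int hn
        rw [hCcast] at h0
        push_cast at h0
        exact h0
      have dall : (A : ℤ) ^ (Eb - e j) * ((ad : ℤ) * (Bb : ℤ) ^ (e i)) * CmZ ∣ W + (st j : ℤ) :=
        ic2.mul_dvd (ic1.mul_dvd d1 d2) d3
      have heq : (ad : ℤ) * ((δ j : ℤ) - (δ i : ℤ)) =
          (A : ℤ) ^ (Eb - e j) * ((ad : ℤ) * (Bb : ℤ) ^ (e i)) * CmZ := by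
        rw [hD]
        ring
      rw [heq, hδval j]
      exact dall

section Meas

open MeasureTheory
open scoped ENNReal

variable {X : Type} [MeasurableSpace X] {μ : Measure X} [IsProbabilityMeasure μ]
  {T : ℕ → X → X} {B : Set X}

lemma scale_eq
    (hT : ∀ n, 1 ≤ n → MeasurePreserving (T n) μ μ)
    (hmul : ∀ m n, 1 ≤ m → 1 ≤ n → T (m * n) = T m ∘ T n)
    (hB : MeasurableSet B)
    {u v t : ℕ} (hu : 1 ≤ u) (hv : 1 ≤ v) (ht : 1 ≤ t) :
    μ (T (u * t) ⁻¹' B ∩ T (v * t) ⁻¹' B) = μ (T u ⁻¹' B ∩ T v ⁻¹' B) := by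
  rw [hmul u t hu ht, hmul v t hv ht]
  have h1 : (T u ∘ T t) ⁻¹' B ∩ (T v ∘ T t) ⁻¹' B = T t ⁻¹' (T u ⁻¹' B ∩ T v ⁻¹' B) := by
    rw [Set.preimage_comp, Set.preimage_comp, Set.preimage_inter]
  rw [h1]
  exact (hT t ht).measure_preimage
    (((hT u hu).measurable hB).inter ((hT v hv).measurable hB)).nullMeasurableSet

lemma cross_ratio_eq
    (hT : ∀ n, 1 ≤ n → MeasurePreserving (T n) μ μ)
    (hmul : ∀ m n, 1 ≤ m → 1 ≤ n → T (m * n) = T m ∘ T n)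
    (hB : MeasurableSet B)
    {p q p' q' : ℕ} (hp : 1 ≤ p) (hq : 1 ≤ q) (hp' : 1 ≤ p') (hq' : 1 ≤ q')
    (h : p * q' = q * p') :
    μ (T p ⁻¹' B ∩ T q ⁻¹' B) = μ (T p' ⁻¹' B ∩ T q' ⁻¹' B) := by
  calc μ (T p ⁻¹' B ∩ T q ⁻¹' B)
      = μ (T (p * q') ⁻¹' B ∩ T (q * q') ⁻¹' B) :=
        (scale_eq hT hmul hB hp hq hq').symm
    _ = μ (T (p' * q) ⁻¹' B ∩ T (q' * q) ⁻¹' B) := by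
        rw [h, mul_comm q q', mul_comm q p']
    _ = μ (T p' ⁻¹' B ∩ T q' ⁻¹' B) := scale_eq hT hmul hB hp' hq' hq

lemma exists_good_pair
    (hT : ∀ n, 1 ≤ n → MeasurePreserving (T n) μ μ)
    (hB : MeasurableSet B)
    (R : ℕ) (hμ : 1 < (R : ℝ≥0∞) * μ B)
    (w : ℕ → ℕ) (hw : ∀ i, i < R → 1 ≤ w i) :
    ∃ i j, i < j ∧ j < R ∧ 0 < μ (T (w i) ⁻¹' B ∩ T (w j) ⁻¹' B) := by
  by_contra hcon
  push_neg at hcon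
  have hnull : ∀ i j, i < j → j < R → μ (T (w i) ⁻¹' B ∩ T (w j) ⁻¹' B) = 0 := by
    intro i j hij hj
    have h := hcon i j hij hj
    exact le_antisymm h (zero_le)
  have hpair : (↑(Finset.range R) : Set ℕ).Pairwise
      (Function.onFun (MeasureTheory.AEDisjoint μ) (fun i => T (w i) ⁻¹' B)) := by
    intro i hi j hj hne
    simp only [Finset.coe_range, Set.mem_Iio] at hi hj
    rcases lt_or_gt_of_ne hne with hlt | hgt
    · exact hnull i j hlt hj
    · have h0 := hnull j i hgt hi
      unfold Function.onFun MeasureTheory.AEDisjoint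
      rwa [Set.inter_comm]
  have hsum : μ (⋃ i ∈ Finset.range R, T (w i) ⁻¹' B) =
      ∑ i ∈ Finset.range R, μ (T (w i) ⁻¹' B) :=
    measure_biUnion_finset₀ hpair
      (fun i hi => ((hT (w i) (hw i (Finset.mem_range.1 hi))).measurable hB).nullMeasurableSet)
  have hval : ∀ i ∈ Finset.range R, μ (T (w i) ⁻¹' B) = μ B := fun i hi =>
    (hT (w i) (hw i (Finset.mem_range.1 hi))).measure_preimage hB.nullMeasurableSet
  rw [Finset.sum_congr rfl hval, Finset.sum_const, Finset.card_range, nsmul_eq_mul] at hsum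
  have hle : μ (⋃ i ∈ Finset.range R, T (w i) ⁻¹' B) ≤ 1 := by
    calc μ (⋃ i ∈ Finset.range R, T (w i) ⁻¹' B) ≤ μ Set.univ :=
          measure_mono (Set.subset_univ _)
      _ = 1 := measure_univ
  rw [hsum] at hle
  exact absurd hle (not_le.2 hμ)

lemma exists_R (hμB : 0 < μ B) : ∃ R : ℕ, 2 ≤ R ∧ 1 < (R : ℝ≥0∞) * μ B := by
  have hne : μ B ≠ 0 := hμB.ne'
  have htop : μ B ≠ ⊤ := by
    have h1 : μ B ≤ 1 := prob_le_one
    intro h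
    rw [h] at h1
    exact absurd h1 (by simp)
  have hinv : (μ B)⁻¹ ≠ ⊤ := ENNReal.inv_ne_top.2 hne
  obtain ⟨n, hn⟩ := ENNReal.exists_nat_gt hinv
  refine ⟨n + 2, by omega, ?_⟩
  have h1 : (μ B)⁻¹ * μ B = 1 := ENNReal.inv_mul_cancel hne htop
  have h2 : (μ B)⁻¹ * μ B < ((n + 2 : ℕ) : ℝ≥0∞) * μ B := by
    rw [mul_comm _ (μ B), mul_comm _ (μ B)]
    apply ENNReal.mul_lt_mul_right hne htop
    calc (μ B)⁻¹ < (n : ℝ≥0∞) := hn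
      _ ≤ ((n + 2 : ℕ) : ℝ≥0∞) := by
        norm_cast
        omega
  rwa [h1] at h2

end Meas

lemma lowerDensity_pos_of_counting (S : Set ℕ) (c1 c2 k0 m : ℕ) (hm : 0 < m) (hc1 : 0 < c1)
    (G : ℕ → ℕ)
    (hmem : ∀ k, k0 ≤ k → G k ∈ S)
    (hpos : ∀ k, k0 ≤ k → 1 ≤ G k)
    (hup : ∀ k, k0 ≤ k → G k ≤ c1 * k + c2)
    (hfib : ∀ s : Finset ℕ, (∀ k ∈ s, k0 ≤ k) → (∀ k ∈ s, ∀ k' ∈ s, G k = G k') → s.card ≤ m) :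
    0 < lowerDensity S := by
  classical
  set N0 : ℕ := 2*(c1*k0) + 2*c2 + 4*c1 with hN0
  have key : ∀ N : ℕ, N0 ≤ N → N ≤ 2*c1*m*(Nat.card ↥(S ∩ Set.Icc 1 N)) := by
    intro N hN
    have hc2N : c2 ≤ N := by omega
    obtain ⟨K, r, hrlt, hKr⟩ : ∃ K r, r < c1 ∧ c1 * K + r = N - c2 :=
      ⟨(N - c2)/c1, (N - c2) % c1, Nat.mod_lt _ hc1, Nat.div_add_mod _ _⟩
    have e5 : c1*K + r + c2 = N := by omega
    have hk0K : k0 ≤ K := by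
      by_contra hcon
      push_neg at hcon
      have h1 : c1 * K ≤ c1 * k0 := Nat.mul_le_mul_left _ (by omega)
      omega
    set F := Finset.Icc k0 K with hF
    set cnt := (F.image G).card with hcnt
    have hcard1 : F.card ≤ m * cnt := by
      apply Finset.card_le_mul_card_image
      intro b hb
      apply hfib
      · intro k hk
        have := Finset.mem_Icc.1 (Finset.mem_of_mem_filter k hk)
        omega
      · intro k hk k' hk'
        have h1 := (Finset.mem_filter.1 hk).2
        have h2 := (Finset.mem_filter.1 hk').2
        rw [h1, h2]
    have hFcard : F.card = K + 1 - k0 := Nat.card_Icc _ _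
    have hsub : ↑(F.image G) ⊆ S ∩ Set.Icc 1 N := by
      intro x hx
      simp only [Finset.coe_image, Set.mem_image, Finset.mem_coe] at hx
      obtain ⟨k, hk, rfl⟩ := hx
      have hkIcc := Finset.mem_Icc.1 hk
      refine ⟨hmem k hkIcc.1, hpos k hkIcc.1, ?_⟩
      have h1 : G k ≤ c1 * k + c2 := hup k hkIcc.1
      have h2 : c1 * k ≤ c1 * K := Nat.mul_le_mul_left _ hkIcc.2
      omega
    have hcard2 : cnt ≤ Nat.card ↥(S ∩ Set.Icc 1 N) := by
      rw [Nat.card_coe_set_eq]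
      calc cnt = (↑(F.image G) : Set ℕ).ncard := (Set.ncard_coe_finset _).symm
        _ ≤ (S ∩ Set.Icc 1 N).ncard :=
            Set.ncard_le_ncard hsub ((Set.finite_Icc 1 N).subset Set.inter_subset_right)
    have e1 : K + 1 - k0 ≤ m * cnt := hFcard ▸ hcard1
    have e2 : c1*(K + 1 - k0) ≤ c1*(m*cnt) := Nat.mul_le_mul_left _ e1
    have h5 : (K + 1 - k0) + k0 = K + 1 := by omega
    have h6 : c1*(K+1-k0) + c1*k0 = c1*K + c1 := by
      rw [← Nat.mul_add, h5]; ring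
    have e6 : c1*(m*cnt) ≤ c1*(m*(Nat.card ↥(S ∩ Set.Icc 1 N))) :=
      Nat.mul_le_mul_left _ (Nat.mul_le_mul_left _ hcard2)
    have e7 : 2*(c1*(m*(Nat.card ↥(S ∩ Set.Icc 1 N)))) =
        2*c1*m*(Nat.card ↥(S ∩ Set.Icc 1 N)) := by ring
    have e8 : c1*K + c1 ≤ c1*(m*cnt) + c1*k0 := by
      calc c1*K + c1 = c1*(K+1-k0) + c1*k0 := by omega
        _ ≤ c1*(m*cnt) + c1*k0 := Nat.add_le_add_right e2 _
    have e9 : 2*(c1*K) + 2*c1 ≤ 2*(c1*(m*cnt)) + 2*(c1*k0) := by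
      have := Nat.mul_le_mul_left 2 e8
      linarith only [this]
    omega
  have h2c1m : (0:ℝ) < 2*(c1:ℝ)*m := by positivity
  set c : ℝ := 1/(2*(c1:ℝ)*m) with hc_def
  have hc : 0 < c := by positivity
  have hev : ∀ᶠ N : ℕ in atTop,
      c ≤ (Nat.card ↥(S ∩ Set.Icc 1 N) : ℝ) / (N : ℝ) := by
    filter_upwards [eventually_ge_atTop (max 1 N0)] with N hN
    have hN1 : 1 ≤ N := le_trans (le_max_left _ _) hN
    have hN0' : N0 ≤ N := le_trans (le_max_right _ _) hN
    have hkey := key N hN0'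
    have hNpos : (0:ℝ) < (N:ℝ) := by exact_mod_cast hN1
    rw [hc_def, div_le_div_iff₀ h2c1m hNpos]
    have : (N:ℝ) ≤ 2*(c1:ℝ)*m*(Nat.card ↥(S ∩ Set.Icc 1 N) : ℝ) := by exact_mod_cast hkey
    nlinarith
  have hbd : IsBoundedUnder (· ≤ ·) atTop
      (fun N : ℕ => (Nat.card ↥(S ∩ Set.Icc 1 N) : ℝ) / (N : ℝ)) := by
    refine isBoundedUnder_of ⟨1, fun N => ?_⟩
    rcases Nat.eq_zero_or_pos N with rfl | hNpos
    · simp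
    have hcount : Nat.card ↥(S ∩ Set.Icc 1 N) ≤ N := by
      rw [Nat.card_coe_set_eq]
      calc (S ∩ Set.Icc 1 N).ncard ≤ (Set.Icc 1 N).ncard :=
            Set.ncard_le_ncard Set.inter_subset_right (Set.finite_Icc 1 N)
        _ = N := by
            rw [← Finset.coe_Icc, Set.ncard_coe_finset, Nat.card_Icc]
            omega
    rw [div_le_one (by exact_mod_cast hNpos)]
    exact_mod_cast hcount
  have hle := le_liminf_of_le (hbd.isCoboundedUnder_ge) hev
  exact lt_of_lt_of_le hc hle

set_option maxHeartbeats 1000000 in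
open MeasureTheory Filter in
lemma main_aux
    (a : ℕ) (ha : 0 < a) (b d : ℤ) (hbd : b < d) (hdvd : (a : ℤ) ∣ lcm b d)
    (X : Type) [MeasurableSpace X] (μ : Measure X) [IsProbabilityMeasure μ]
    (T : ℕ → X → X)
    (hT : ∀ n, 1 ≤ n → MeasurePreserving (T n) μ μ)
    (hmul : ∀ m n, 1 ≤ m → 1 ≤ n → T (m * n) = T m ∘ T n)
    (B : Set X) (hB : MeasurableSet B) (hμB : 0 < μ B) :
    0 < lowerDensity {n : ℕ | 1 ≤ n ∧ 1 ≤ (a : ℤ) * n + b ∧ 1 ≤ (a : ℤ) * n + d ∧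
      0 < μ (T (((a : ℤ) * n + b).toNat) ⁻¹' B ∩ T (((a : ℤ) * n + d).toNat) ⁻¹' B)} := by
  classical
  set S : Set ℕ := {n : ℕ | 1 ≤ n ∧ 1 ≤ (a : ℤ) * n + b ∧ 1 ≤ (a : ℤ) * n + d ∧
      0 < μ (T (((a : ℤ) * n + b).toNat) ⁻¹' B ∩ T (((a : ℤ) * n + d).toNat) ⁻¹' B)} with hS
  -- the gap
  set hh : ℕ := (d - b).toNat with hhdef
  have hhZ : (d - b) = (hh : ℤ) := (Int.toNat_of_nonneg (by omega)).symm
  have hh1 : 1 ≤ hh := by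
    have h0 : (1:ℤ) ≤ (hh:ℤ) := by rw [← hhZ]; omega
    exact_mod_cast h0
  -- splitting a
  have hlcmN : a ∣ Nat.lcm b.natAbs d.natAbs := by
    have h1 : (a:ℤ) ∣ ((Int.lcm b d : ℕ) : ℤ) := by rw [Int.coe_lcm]; exact hdvd
    have h2 : a ∣ Int.lcm b d := Int.ofNat_dvd.1 h1
    rwa [Int.lcm_def] at h2
  obtain ⟨ab, ad, hsplit, hcop, habb, hadd⟩ := dvd_lcm_split a _ _ hlcmN
  have hab0 : 0 < ab := by
    rcases Nat.eq_zero_or_pos ab with h | h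
    · rw [h] at hsplit; omega
    · exact h
  have had0 : 0 < ad := by
    rcases Nat.eq_zero_or_pos ad with h | h
    · rw [h] at hsplit; omega
    · exact h
  have habZ : (ab:ℤ) ∣ b := Int.dvd_natAbs.1 (Int.natCast_dvd_natCast.2 habb)
  have hadZ : (ad:ℤ) ∣ d := Int.dvd_natAbs.1 (Int.natCast_dvd_natCast.2 hadd)
  have haZ : (a:ℤ) = (ab:ℤ) * (ad:ℤ) := by exact_mod_cast congrArg (Nat.cast : ℕ → ℤ) hsplit
  -- R and the clique
  obtain ⟨R, hR2, hRμ⟩ := exists_R hμB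
  obtain ⟨δ, hδpos, hδmono, hδdvd⟩ := clique_exists ab ad R hab0 had0 hcop
  -- product of differences
  set P : ℕ := ∏ p ∈ (Finset.range R ×ˢ Finset.range R).filter (fun p : ℕ × ℕ => p.1 < p.2),
      (δ p.2 - δ p.1) with hP
  have hPpos : 0 < P := by
    refine Finset.prod_pos (fun (p : ℕ × ℕ) hp => ?_)
    simp only [Finset.mem_filter, Finset.mem_product, Finset.mem_range] at hp
    have := hδmono p.1 p.2 hp.2 hp.1.2
    omega
  have hDP : ∀ i j, i < j → j < R → (δ j - δ i) ∣ P := by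
    intro i j hij hj
    have hmem : ((i, j) : ℕ × ℕ) ∈
        (Finset.range R ×ˢ Finset.range R).filter (fun p : ℕ × ℕ => p.1 < p.2) := by
      simp only [Finset.mem_filter, Finset.mem_product, Finset.mem_range]
      exact ⟨⟨by omega, hj⟩, hij⟩
    exact Finset.dvd_prod_of_mem (fun p : ℕ × ℕ => δ p.2 - δ p.1) hmem
  set Λ : ℕ := a * P with hΛ
  have hΛpos : 0 < Λ := Nat.mul_pos ha hPpos
  set ΔM : ℕ := (Finset.range R).sup δ with hΔM
  have hδle : ∀ i, i < R → δ i ≤ ΔM := fun i hi =>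
    Finset.le_sup (Finset.mem_range.2 hi)
  -- constants for the counting lemma
  set c1 : ℕ := hh * Λ + 1 with hc1
  set c2 : ℕ := hh * ΔM + b.natAbs + 1 with hc2
  set k0 : ℕ := b.natAbs + 1 with hk0
  set m : ℕ := R * R with hm
  -- the main per-scale claim
  have hgood : ∀ k : ℕ, k0 ≤ k → ∃ n : ℕ, n ∈ S ∧ 1 ≤ n ∧ n ≤ c1 * k + c2 ∧
      ∃ i j : ℕ, i < j ∧ j < R ∧
        ((a:ℤ) * n + b) * ((δ j : ℤ) - (δ i : ℤ)) = (d - b) * ((Λ:ℤ) * k + (δ i : ℤ)) := by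
    intro k hk
    have hkpos : 1 ≤ k := by
      have : 0 ≤ b.natAbs := Nat.zero_le _
      omega
    set w : ℕ → ℕ := fun i => Λ * k + δ i with hw
    have hw1 : ∀ i, i < R → 1 ≤ w i := by
      intro i hi
      have := hδpos i hi
      simp only [hw]
      omega
    obtain ⟨i, j, hij, hjR, hmeas⟩ := exists_good_pair hT hB R hRμ w hw1
    have hiR : i < R := by omega
    have hδij := hδmono i j hij hjR
    set D : ℕ := δ j - δ i with hD
    have hD1 : 1 ≤ D := by omega
    have hDz : ((δ j : ℤ) - (δ i : ℤ)) = (D : ℤ) := by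
      rw [hD]
      push_cast [Nat.cast_sub (le_of_lt hδij)]
      ring
    obtain ⟨habD, hadD⟩ := hδdvd i j hij hjR
    rw [hDz] at habD hadD
    -- Λ = D * (a * PD)
    obtain ⟨PD, hPD⟩ := hDP i j hij hjR
    have hΛeq : (Λ:ℤ) = (D:ℤ) * ((a:ℤ) * (PD:ℤ)) := by
      rw [hΛ, hPD]
      push_cast
      ring
    have hPD1 : 1 ≤ PD := by
      rcases Nat.eq_zero_or_pos PD with h | h
      · rw [h, Nat.mul_zero] at hPD
        omega
      · exact h
    obtain ⟨ci, hci⟩ := habD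
    obtain ⟨cj, hcj⟩ := hadD
    have hci1 : 1 ≤ ci := by
      by_contra hcon
      push_neg at hcon
      have h1 : ci ≤ 0 := by omega
      have h2 : (0:ℤ) < (δ i : ℤ) := by exact_mod_cast hδpos i hiR
      have h3 : (0:ℤ) < (ab:ℤ) * (D:ℤ) :=
        mul_pos (by exact_mod_cast hab0) (by exact_mod_cast hD1)
      have h4 : (ab:ℤ) * (D:ℤ) * ci ≤ (ab:ℤ) * (D:ℤ) * 0 :=
        mul_le_mul_of_nonneg_left h1 h3.le
      rw [mul_zero] at h4
      rw [hci] at h2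
      linarith only [h2, h4]
    have hcj1 : 1 ≤ cj := by
      by_contra hcon
      push_neg at hcon
      have h1 : cj ≤ 0 := by omega
      have h2 : (0:ℤ) < (δ j : ℤ) := by exact_mod_cast hδpos j hjR
      have h3 : (0:ℤ) < (ad:ℤ) * (D:ℤ) :=
        mul_pos (by exact_mod_cast had0) (by exact_mod_cast hD1)
      have h4 : (ad:ℤ) * (D:ℤ) * cj ≤ (ad:ℤ) * (D:ℤ) * 0 :=
        mul_le_mul_of_nonneg_left h1 h3.le
      rw [mul_zero] at h4
      rw [hcj] at h2
      linarith only [h2, h4]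
    set Az : ℤ := (d - b) * ((a:ℤ) * (PD:ℤ) * k + (ab:ℤ) * ci) with hAz
    have I1 : Az * (D:ℤ) = (d - b) * ((Λ:ℤ) * k + (δ i : ℤ)) := by
      rw [hAz, hci, hΛeq]
      ring
    have hδji : (δ j : ℤ) = (δ i : ℤ) + (D:ℤ) := by rw [← hDz]; ring
    have I2 : (Az + (d - b)) * (D:ℤ) = (d - b) * ((Λ:ℤ) * k + (δ j : ℤ)) := by
      rw [hδji]
      linear_combination I1
    have hDne : (D:ℤ) ≠ 0 := by
      have h0 : (0:ℤ) < (D:ℤ) := by exact_mod_cast hD1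
      omega
    have I3 : Az + (d - b) = (d - b) * ((a:ℤ) * (PD:ℤ) * k + (ad:ℤ) * cj) := by
      apply mul_right_cancel₀ hDne
      rw [I2, hcj, hΛeq]
      ring
    have habdvdA : (ab:ℤ) ∣ Az - b := by
      have hA : (ab:ℤ) ∣ (a:ℤ) := ⟨(ad:ℤ), haZ⟩
      have h1 : (ab:ℤ) ∣ Az := by
        rw [hAz]
        exact Dvd.dvd.mul_left
          (dvd_add ((hA.mul_right (PD:ℤ)).mul_right (k:ℤ)) (dvd_mul_right _ _)) _
      exact dvd_sub h1 habZ
    have haddvdA : (ad:ℤ) ∣ Az - b := by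
      have hA : (ad:ℤ) ∣ (a:ℤ) := ⟨(ab:ℤ), by rw [haZ]; ring⟩
      have h1 : (ad:ℤ) ∣ Az + (d - b) := by
        rw [I3]
        exact Dvd.dvd.mul_left
          (dvd_add ((hA.mul_right (PD:ℤ)).mul_right (k:ℤ)) (dvd_mul_right _ _)) _
      have h2 : Az - b = (Az + (d - b)) - d := by ring
      rw [h2]
      exact dvd_sub h1 hadZ
    have hadvdA : (a:ℤ) ∣ Az - b := by
      rw [haZ]
      exact (natCoprime_int hcop).mul_dvd habdvdA haddvdA
    obtain ⟨nz, hnz⟩ := hadvdA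
    -- size bounds for Az
    have ha1 : (1:ℤ) ≤ (a:ℤ) := by exact_mod_cast ha
    have hPD1' : (1:ℤ) ≤ (PD:ℤ) := by exact_mod_cast hPD1
    have hk0' : (0:ℤ) ≤ (k:ℤ) := by positivity
    have hab1 : (1:ℤ) ≤ (ab:ℤ) := by exact_mod_cast hab0
    have hAzk : (k:ℤ) + 1 ≤ Az := by
      have h1 : (1:ℤ) ≤ d - b := by omega
      have h2 : (k:ℤ) ≤ (a:ℤ) * (PD:ℤ) * k := by
        have h2a : (1:ℤ) ≤ (a:ℤ) * (PD:ℤ) := by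
          calc (1:ℤ) = 1 * 1 := by ring
            _ ≤ (a:ℤ) * (PD:ℤ) := mul_le_mul ha1 hPD1' (by norm_num) (by linarith only [ha1])
        calc (k:ℤ) = 1 * k := (one_mul _).symm
          _ ≤ (a:ℤ) * (PD:ℤ) * k := mul_le_mul_of_nonneg_right h2a hk0'
      have h3 : (1:ℤ) ≤ (ab:ℤ) * ci := by
        calc (1:ℤ) = 1 * 1 := by ring
          _ ≤ (ab:ℤ) * ci := mul_le_mul hab1 hci1 (by norm_num) (by linarith only [hab1])
      have hX : (k:ℤ) + 1 ≤ (a:ℤ) * (PD:ℤ) * k + (ab:ℤ) * ci := add_le_add h2 h3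
      have hXnn : (0:ℤ) ≤ (a:ℤ) * (PD:ℤ) * k + (ab:ℤ) * ci := by
        have : (0:ℤ) ≤ (k:ℤ) + 1 := by linarith only [hk0']
        linarith only [this, hX]
      calc (k:ℤ) + 1 ≤ (a:ℤ) * (PD:ℤ) * k + (ab:ℤ) * ci := hX
        _ = 1 * ((a:ℤ) * (PD:ℤ) * k + (ab:ℤ) * ci) := (one_mul _).symm
        _ ≤ (d - b) * ((a:ℤ) * (PD:ℤ) * k + (ab:ℤ) * ci) :=
            mul_le_mul_of_nonneg_right h1 hXnn
        _ = Az := hAz.symm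
    have hbabs : (b:ℤ) ≤ (b.natAbs : ℤ) ∧ -(b:ℤ) ≤ (b.natAbs : ℤ) := by
      constructor
      · exact Int.le_natAbs
      · rw [← Int.natAbs_neg]; exact Int.le_natAbs
    have hkZ : ((b.natAbs : ℤ) + 1) ≤ (k:ℤ) := by exact_mod_cast hk
    have hnz1 : 1 ≤ nz := by
      have h1 : (a:ℤ) * nz = Az - b := hnz.symm
      have h2 : (0:ℤ) < Az - b := by omega
      by_contra hcon
      push_neg at hcon
      have h3 : nz ≤ 0 := by omega
      have h4 : (a:ℤ) * nz ≤ (a:ℤ) * 0 := mul_le_mul_of_nonneg_left h3 (by linarith only [ha1])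
      rw [mul_zero] at h4
      omega
    set n : ℕ := nz.toNat with hn
    have hnZ : (n:ℤ) = nz := Int.toNat_of_nonneg (by omega)
    have hAnb : (a:ℤ) * n + b = Az := by rw [hnZ]; omega
    have hAnd : (a:ℤ) * n + d = Az + (d - b) := by omega
    have hAz1 : 1 ≤ Az := by omega
    -- the measure condition
    set p : ℕ := ((a:ℤ) * n + b).toNat with hp
    set q : ℕ := ((a:ℤ) * n + d).toNat with hq
    have hpZ : (p:ℤ) = Az := by
      rw [hp, hAnb]
      exact Int.toNat_of_nonneg (by omega)
    have hqZ : (q:ℤ) = Az + (d - b) := by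
      rw [hq, hAnd]
      exact Int.toNat_of_nonneg (by omega)
    have hp1 : 1 ≤ p := by
      have : (1:ℤ) ≤ (p:ℤ) := by rw [hpZ]; omega
      exact_mod_cast this
    have hq1 : 1 ≤ q := by
      have : (1:ℤ) ≤ (q:ℤ) := by rw [hqZ]; omega
      exact_mod_cast this
    have hwiZ : ((w i : ℕ) : ℤ) = (Λ:ℤ) * k + (δ i : ℤ) := by
      simp only [hw]; push_cast; ring
    have hwjZ : ((w j : ℕ) : ℤ) = (Λ:ℤ) * k + (δ j : ℤ) := by
      simp only [hw]; push_cast; ring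
    have hcross : p * w j = q * w i := by
      have hZ : (p:ℤ) * ((w j : ℕ) : ℤ) = (q:ℤ) * ((w i : ℕ) : ℤ) := by
        rw [hpZ, hqZ, hwiZ, hwjZ]
        have hhD : Az * (D:ℤ) = (d-b) * ((Λ:ℤ)*k + (δ i : ℤ)) := I1
        -- Az * (Λk + δj) = (Az + (d-b)) * (Λk + δi)
        rw [hδji]
        linear_combination I1
      exact_mod_cast hZ
    have hmeq : μ (T p ⁻¹' B ∩ T q ⁻¹' B) = μ (T (w i) ⁻¹' B ∩ T (w j) ⁻¹' B) :=
      cross_ratio_eq hT hmul hB hp1 hq1 (hw1 i hiR) (hw1 j hjR) hcross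
    have hmempos : 0 < μ (T p ⁻¹' B ∩ T q ⁻¹' B) := by rw [hmeq]; exact hmeas
    -- n is in S
    have hnS : n ∈ S := by
      rw [hS]
      refine ⟨?_, ?_, ?_, ?_⟩
      · have : (1:ℤ) ≤ (n:ℤ) := by rw [hnZ]; omega
        exact_mod_cast this
      · rw [hAnb]; omega
      · rw [hAnd]; omega
      · exact hmempos
    -- upper bound on n
    have hD1' : (1:ℤ) ≤ (D:ℤ) := by exact_mod_cast hD1
    have hnUB : n ≤ c1 * k + c2 := by
      have hδiM : (δ i : ℤ) ≤ (ΔM:ℤ) := by exact_mod_cast hδle i hiR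
      have hup1 : (a:ℤ) * (PD:ℤ) ≤ (Λ:ℤ) := by
        rw [hΛeq]
        exact le_mul_of_one_le_left (by positivity) hD1'
      have hup2 : (ab:ℤ) * ci ≤ (δ i : ℤ) := by
        rw [hci]
        calc (ab:ℤ) * ci = (ab:ℤ) * 1 * ci := by ring
          _ ≤ (ab:ℤ) * (D:ℤ) * ci := by
            apply mul_le_mul_of_nonneg_right _ (by linarith only [hci1])
            exact mul_le_mul_of_nonneg_left hD1' (by linarith only [hab1])
      have hup : (a:ℤ) * (PD:ℤ) * k + (ab:ℤ) * ci ≤ (Λ:ℤ) * k + (ΔM:ℤ) :=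
        add_le_add (mul_le_mul_of_nonneg_right hup1 hk0') (le_trans hup2 hδiM)
      have h1 : Az ≤ (hh:ℤ) * ((Λ:ℤ) * k + (ΔM:ℤ)) := by
        have h1' : Az ≤ (d - b) * ((Λ:ℤ) * k + (ΔM:ℤ)) := by
          rw [hAz]
          exact mul_le_mul_of_nonneg_left hup (by omega)
        rwa [hhZ] at h1'
      have h2 : (n:ℤ) ≤ Az + (b.natAbs:ℤ) := by
        have h3 : (a:ℤ) * nz = Az - b := hnz.symm
        have h5 : nz ≤ (a:ℤ) * nz := le_mul_of_one_le_left (by linarith only [hnz1]) ha1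
        rw [hnZ]
        linarith only [h3, h5, hbabs.1, hbabs.2]
      have h4 : (n:ℤ) ≤ ((c1:ℕ):ℤ) * k + ((c2:ℕ):ℤ) := by
        rw [hc1, hc2]
        push_cast
        have e1 : (hh:ℤ) * ((Λ:ℤ) * k + (ΔM:ℤ)) = ((hh:ℤ) * Λ) * k + (hh:ℤ) * ΔM := by ring
        have e2 : ((hh:ℤ) * Λ + 1) * k = ((hh:ℤ) * Λ) * k + k := by ring
        have e3 : ((b.natAbs : ℕ) : ℤ) = |b| := (Int.abs_eq_natAbs b).symm
        linarith only [h1, h2, e1, e2, e3, hk0']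
      exact_mod_cast h4
    have hn1 : 1 ≤ n := by
      have : (1:ℤ) ≤ (n:ℤ) := by rw [hnZ]; omega
      exact_mod_cast this
    refine ⟨n, hnS, hn1, hnUB, i, j, hij, hjR, ?_⟩
    rw [hAnb, hDz]
    exact I1
  -- choose G
  set G : ℕ → ℕ := fun k => if hk : k0 ≤ k then (hgood k hk).choose else 0 with hG
  have hGspec : ∀ k (hk : k0 ≤ k), (G k) ∈ S ∧ 1 ≤ G k ∧ G k ≤ c1 * k + c2 ∧
      ∃ i j : ℕ, i < j ∧ j < R ∧
        ((a:ℤ) * (G k) + b) * ((δ j : ℤ) - (δ i : ℤ)) = (d - b) * ((Λ:ℤ) * k + (δ i : ℤ)) := by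
    intro k hk
    simp only [hG, dif_pos hk]
    exact (hgood k hk).choose_spec
  have hmpos : 0 < m := by
    rw [hm]
    exact Nat.mul_pos (by omega) (by omega)
  have hc1pos : 0 < c1 := by omega
  apply lowerDensity_pos_of_counting S c1 c2 k0 m hmpos hc1pos G
  · exact fun k hk => (hGspec k hk).1
  · exact fun k hk => (hGspec k hk).2.1
  · exact fun k hk => (hGspec k hk).2.2.1
  · -- fiber bound
    intro s hs hval
    have hφ : ∀ k ∈ s, ∃ ij : ℕ × ℕ, ij.1 < ij.2 ∧ ij.2 < R ∧
        ((a:ℤ) * (G k) + b) * ((δ ij.2 : ℤ) - (δ ij.1 : ℤ)) =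
          (d - b) * ((Λ:ℤ) * k + (δ ij.1 : ℤ)) := by
      intro k hk
      obtain ⟨i, j, hij, hjR, heq⟩ := (hGspec k (hs k hk)).2.2.2
      exact ⟨(i, j), hij, hjR, heq⟩
    choose φ hφ1 hφ2 hφ3 using hφ
    have hmaps : ∀ k (hk : k ∈ s), φ k hk ∈ Finset.range R ×ˢ Finset.range R := by
      intro k hk
      simp only [Finset.mem_product, Finset.mem_range]
      exact ⟨by have := hφ1 k hk; have := hφ2 k hk; omega, hφ2 k hk⟩
    -- map with proofs: use attach
    have hcard : s.card ≤ (Finset.range R ×ˢ Finset.range R).card := by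
      rw [← Finset.card_attach]
      apply Finset.card_le_card_of_injOn (fun k => φ k.1 k.2) (fun k _ => hmaps k.1 k.2)
      intro x _ y _ hxy
      have hxy' : φ x.1 x.2 = φ y.1 y.2 := hxy
      have heqx := hφ3 x.1 x.2
      have heqy := hφ3 y.1 y.2
      have hvals : G x.1 = G y.1 := hval x.1 x.2 y.1 y.2
      rw [hxy'] at heqx
      rw [hvals] at heqx
      -- heqx and heqy have equal LHS
      have h1 : (d - b) * ((Λ:ℤ) * (x.1 : ℕ) + (δ (φ y.1 y.2).1 : ℤ)) =
          (d - b) * ((Λ:ℤ) * (y.1 : ℕ) + (δ (φ y.1 y.2).1 : ℤ)) := by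
        rw [← heqx, ← heqy]
      have h2 : (Λ:ℤ) * (x.1 : ℕ) = (Λ:ℤ) * (y.1 : ℕ) := by
        have hdb : (d - b) ≠ 0 := by omega
        have := mul_left_cancel₀ hdb h1
        omega
      have h3 : ((x.1 : ℕ) : ℤ) = ((y.1 : ℕ) : ℤ) := by
        have hΛne : (Λ:ℤ) ≠ 0 := by
          have : (0:ℤ) < (Λ:ℤ) := by exact_mod_cast hΛpos
          omega
        exact mul_left_cancel₀ hΛne h2
      have h4 : (x.1 : ℕ) = (y.1 : ℕ) := by exact_mod_cast h3
      exact Subtype.ext h4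
    calc s.card ≤ (Finset.range R ×ˢ Finset.range R).card := hcard
      _ = R * R := by rw [Finset.card_product, Finset.card_range]
      _ = m := hm.symm

open MeasureTheory Filter in
theorem recurrence_set_positive_lower_density
    (a : ℕ) (ha : 0 < a) (b d : ℤ) (hdvd : (a : ℤ) ∣ lcm b d)
    (X : Type) [MeasurableSpace X] (μ : Measure X) [IsProbabilityMeasure μ]
    (T : ℕ → X → X)
    (hT : ∀ n, 1 ≤ n → MeasurePreserving (T n) μ μ)
    (hmul : ∀ m n, 1 ≤ m → 1 ≤ n → T (m * n) = T m ∘ T n)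
    (B : Set X) (hB : MeasurableSet B) (hμB : 0 < μ B) :
    0 < lowerDensity {n : ℕ | 1 ≤ n ∧ 1 ≤ (a : ℤ) * n + b ∧ 1 ≤ (a : ℤ) * n + d ∧
      0 < μ (T (((a : ℤ) * n + b).toNat) ⁻¹' B ∩ T (((a : ℤ) * n + d).toNat) ⁻¹' B)} := by
  rcases lt_trichotomy b d with hlt | heq | hgt
  · exact main_aux a ha b d hlt hdvd X μ T hT hmul B hB hμB
  · subst heq
    apply lowerDensity_pos_of_counting _ 1 0 (b.natAbs + 1) 1 one_pos one_pos (fun k => k)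
    · intro k hk
      simp only [Set.mem_setOf_eq]
      have hb1 : (1:ℤ) ≤ (a:ℤ) * k + b := by
        have h1 : ((b.natAbs + 1 : ℕ):ℤ) ≤ (k:ℤ) := by exact_mod_cast hk
        have h2 : (k:ℤ) ≤ (a:ℤ)*k :=
          le_mul_of_one_le_left (by positivity) (by exact_mod_cast ha)
        have h4 : -(b:ℤ) ≤ |b| := neg_le_abs b
        push_cast at h1
        linarith
      refine ⟨by omega, hb1, hb1, ?_⟩
      rw [Set.inter_self]
      have hx1 : 1 ≤ ((a:ℤ)*k + b).toNat := by omega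
      rw [(hT _ hx1).measure_preimage hB.nullMeasurableSet]
      exact hμB
    · intro k _; omega
    · intro k _; omega
    · intro s _ hval
      exact Finset.card_le_one.2 (fun x hx y hy => hval x hx y hy)
  · have h1 := main_aux a ha d b hgt (by rwa [lcm_comm]) X μ T hT hmul B hB hμB
    have hset : {n : ℕ | 1 ≤ n ∧ 1 ≤ (a : ℤ) * n + d ∧ 1 ≤ (a : ℤ) * n + b ∧
        0 < μ (T (((a : ℤ) * n + d).toNat) ⁻¹' B ∩ T (((a : ℤ) * n + b).toNat) ⁻¹' B)} =
        {n : ℕ | 1 ≤ n ∧ 1 ≤ (a : ℤ) * n + b ∧ 1 ≤ (a : ℤ) * n + d ∧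
        0 < μ (T (((a : ℤ) * n + b).toNat) ⁻¹' B ∩ T (((a : ℤ) * n + d).toNat) ⁻¹' B)} := by
      ext n
      simp only [Set.mem_setOf_eq]
      rw [Set.inter_comm]
      tauto
    rwa [hset] at h1
end
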